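/- arXiv:1303.1801 — 8 statements merged into one kernel-verified Lean document; each statement's English description precedes it below -/
import Mathlib

section
/- Let E be a real Hilbert space (a complete real inner product space), K ⊆ E a nonempty compact set, and p ∈ E with K ≠ {p}. Set r = sup_{x ∈ K} dist(p, x), so r > 0. Suppose there exists m ∈ E with ‖m‖ = 1 such that ⟪m, x − p⟫ > 0 for every x ∈ K with dist(p, x) = r. Then p is not a circumcenter of K: there exists q ∈ E with sup_{x ∈ K} dist(q, x) < r. -/
open Real
open scoped RealInnerProductSpace

/-- If the directions from `p` to all farthest points of a compact set `K` lie in a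
common open hemisphere, then `p` is not a circumcenter of `K`. -/
theorem not_circumcenter_of_farthest_directions_in_hemisphere
    {E : Type*} [NormedAddCommGroup E] [InnerProductSpace ℝ E] [CompleteSpace E]
    (K : Set E) (hK : IsCompact K) (hKne : K.Nonempty)
    (p : E) (hKp : K ≠ {p})
    (r : ℝ) (hr : r = ⨆ x : K, dist p x)
    (m : E) (hm : ‖m‖ = 1)
    (hfar : ∀ x ∈ K, dist p x = r → 0 < ⟪m, x - p⟫) :
    ∃ q : E, (⨆ x : K, dist q x) < r := by
  haveI : Nonempty K := hKne.to_subtype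
  have hcont : Continuous fun x : E => dist p x := continuous_const.dist continuous_id
  obtain ⟨x₀, hx₀K, hx₀⟩ := hK.exists_isMaxOn hKne hcont.continuousOn
  have hbdd : BddAbove (Set.range fun x : K => dist p x) :=
    ⟨dist p x₀, by rintro _ ⟨x, rfl⟩; exact hx₀ x.2⟩
  have hrx : r = dist p x₀ := by
    rw [hr]
    refine le_antisymm (ciSup_le fun x => hx₀ x.2) ?_
    exact le_ciSup hbdd ⟨x₀, hx₀K⟩
  have hle : ∀ x ∈ K, dist p x ≤ r := fun x hx => hrx ▸ hx₀ hx
  -- r > 0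
  have hxne : ∃ x ∈ K, x ≠ p := by
    by_contra h
    push_neg at h
    apply hKp
    apply Set.eq_singleton_iff_nonempty_unique_mem.2 ⟨hKne, h⟩
  obtain ⟨z, hzK, hzp⟩ := hxne
  have hrpos : 0 < r := lt_of_lt_of_le (dist_pos.2 (Ne.symm hzp)) (hle z hzK)
  -- compact set of farthest points
  have hgcont : Continuous fun x : E => ⟪m, x - p⟫ :=
    continuous_const.inner (continuous_id.sub continuous_const)
  have hFcomp : IsCompact {x ∈ K | dist p x = r} :=
    hK.inter_right (isClosed_eq hcont continuous_const)
  have hx₀F : x₀ ∈ {x ∈ K | dist p x = r} := ⟨hx₀K, hrx.symm⟩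
  obtain ⟨y₀, hy₀F, hy₀⟩ := hFcomp.exists_isMinOn ⟨x₀, hx₀F⟩ hgcont.continuousOn
  set δ := ⟪m, y₀ - p⟫ with hδ
  have hδpos : 0 < δ := hfar y₀ hy₀F.1 hy₀F.2
  -- bound on the "near" set A
  have hA : ∃ r', 0 ≤ r' ∧ r' < r ∧ ∀ x ∈ K, ⟪m, x - p⟫ ≤ δ / 2 → dist p x ≤ r' := by
    set A := {x ∈ K | ⟪m, x - p⟫ ≤ δ / 2} with hAdef
    rcases A.eq_empty_or_nonempty with hAe | hAne
    · refine ⟨0, le_refl _, hrpos, fun x hx hgx => absurd ?_ (Set.notMem_empty x)⟩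
      rw [← hAe]; exact ⟨hx, hgx⟩
    · have hAcomp : IsCompact A := hK.inter_right (isClosed_le hgcont continuous_const)
      obtain ⟨z₀, hz₀A, hz₀⟩ := hAcomp.exists_isMaxOn hAne hcont.continuousOn
      refine ⟨dist p z₀, dist_nonneg, ?_, fun x hx hgx => hz₀ ⟨hx, hgx⟩⟩
      rcases lt_or_eq_of_le (hle z₀ hz₀A.1) with h | h
      · exact h
      · exfalso
        have h4 : δ ≤ ⟪m, z₀ - p⟫ := hy₀ ⟨hz₀A.1, h⟩
        have h5 : ⟪m, z₀ - p⟫ ≤ δ / 2 := hz₀A.2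
        linarith
  obtain ⟨r', hr'0, hr'r, hr'⟩ := hA
  set t := min (δ / 2) ((r - r') / 2) with ht
  have htpos : 0 < t := lt_min (by linarith) (by linarith)
  have htδ : t ≤ δ / 2 := min_le_left _ _
  have htr : t ≤ (r - r') / 2 := min_le_right _ _
  refine ⟨p + t • m, ?_⟩
  have key : ∀ x : E, dist (p + t • m) x ^ 2 = dist p x ^ 2 - 2 * t * ⟪m, x - p⟫ + t ^ 2 := by
    intro x
    rw [dist_eq_norm, dist_eq_norm]
    have h1 : p + t • m - x = (p - x) + t • m := by abel
    rw [h1, norm_add_sq_real, real_inner_smul_right, norm_smul]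
    have h2 : ⟪p - x, m⟫ = -⟪m, x - p⟫ := by
      rw [real_inner_comm, inner_sub_right, inner_sub_right]; ring
    rw [h2, hm, Real.norm_eq_abs, abs_of_pos htpos]
    ring
  set M := max (Real.sqrt (r ^ 2 - t ^ 2)) (r' + t) with hM
  have hMr : M < r := by
    apply max_lt
    · have h1 : Real.sqrt (r ^ 2 - t ^ 2) < Real.sqrt (r ^ 2) := by
        apply Real.sqrt_lt_sqrt (by nlinarith [sq_nonneg t, sq_nonneg (r - t)]) (by nlinarith)
      rwa [Real.sqrt_sq hrpos.le] at h1
    · linarith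
  have hbound : ∀ x ∈ K, dist (p + t • m) x ≤ M := by
    intro x hx
    by_cases hgx : ⟪m, x - p⟫ ≤ δ / 2
    · have h1 : dist p x ≤ r' := hr' x hx hgx
      have h2 : dist (p + t • m) x ≤ dist (p + t • m) p + dist p x := dist_triangle _ _ _
      have h3 : dist (p + t • m) p = t := by
        rw [dist_eq_norm]
        simp [norm_smul, abs_of_pos htpos, hm]
      refine le_trans h2 ?_
      rw [h3]
      calc t + dist p x ≤ r' + t := by linarith
        _ ≤ M := le_max_right _ _
    · push_neg at hgx
      have h1 : dist (p + t • m) x ^ 2 ≤ r ^ 2 - t ^ 2 := by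
        rw [key x]
        have hd : dist p x ≤ r := hle x hx
        have hd2 : dist p x ^ 2 ≤ r ^ 2 := by nlinarith [dist_nonneg (x := p) (y := x)]
        nlinarith
      have h2 : dist (p + t • m) x ≤ Real.sqrt (r ^ 2 - t ^ 2) := by
        rw [show dist (p + t • m) x = Real.sqrt (dist (p + t • m) x ^ 2) by
          rw [Real.sqrt_sq dist_nonneg]]
        exact Real.sqrt_le_sqrt h1
      exact le_trans h2 (le_max_left _ _)
  exact lt_of_le_of_lt (ciSup_le fun x => hbound x x.2) hMr
end

section
/- Let E be a real Hilbert space, n a natural number with n ≥ 3, and g : E ≃ᵢ E a surjective isometry with g^n = id. Let x ∈ E with g x ≠ x, and let c ∈ E be a circumcenter of the orbit {g^i x : 0 ≤ i < n}, i.e. sup_{0≤i<n} dist(c, g^i x) ≤ sup_{0≤i<n} dist(y, g^i x) for every y ∈ E. Then x ≠ c, g x ≠ c, and ∠(x, c, g x) ≥ 2π/n. -/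
open Real Finset
open scoped RealInnerProductSpace

private lemma sum_cos_dvd (n : ℕ) (hn : 0 < n) (t : ℤ) :
    ∑ k ∈ Finset.range n, Real.cos (2 * π * t * k / n) =
      if (n : ℤ) ∣ t then (n : ℝ) else 0 := by
  have hn' : (n : ℝ) ≠ 0 := by positivity
  split_ifs with h
  · obtain ⟨s, rfl⟩ := h
    have hterm : ∀ k ∈ Finset.range n, Real.cos (2 * π * (((n : ℤ) * s : ℤ) : ℝ) * k / n) = 1 := by
      intro k _
      have harg : (2 * π * (((n : ℤ) * s : ℤ) : ℝ) * k / n : ℝ) = ((s * k : ℤ) : ℝ) * (2 * π) := by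
        push_cast; field_simp
      rw [harg, Real.cos_int_mul_two_pi]
    rw [Finset.sum_congr rfl hterm]; simp
  · set z : ℂ := Complex.exp (2 * π * t / n * Complex.I) with hz
    have hzn : z ^ n = 1 := by
      rw [hz, ← Complex.exp_nat_mul]
      have harg : (n : ℂ) * (2 * π * t / n * Complex.I) = (t : ℤ) * (2 * π * Complex.I) := by
        have hn'' : (n : ℂ) ≠ 0 := by exact_mod_cast Nat.cast_ne_zero.mpr hn.ne'
        field_simp
      rw [harg, Complex.exp_int_mul_two_pi_mul_I]
    have hz1 : z ≠ 1 := by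
      intro hzeq
      rw [hz, Complex.exp_eq_one_iff] at hzeq
      obtain ⟨m, hm⟩ := hzeq
      apply h
      have hm' : ((2 * π * t / n : ℝ) : ℂ) = ((m * (2 * π) : ℝ) : ℂ) := by
        apply mul_right_cancel₀ Complex.I_ne_zero
        push_cast
        linear_combination hm
      have hre : (2 * π * t / n : ℝ) = (m : ℝ) * (2 * π) := by exact_mod_cast hm'
      have h4 : 2 * π * (t : ℝ) = 2 * π * (((n : ℤ) * m : ℤ) : ℝ) := by
        push_cast
        field_simp at hre
        linear_combination (2 * π) * hre
      have h5 : (t : ℝ) = (((n : ℤ) * m : ℤ) : ℝ) :=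
        mul_left_cancel₀ (by positivity : (0:ℝ) < 2 * π).ne' h4
      exact ⟨m, by exact_mod_cast h5⟩
    have hsum : ∑ k ∈ Finset.range n, z ^ k = 0 := by
      rw [geom_sum_eq hz1, hzn]; simp
    have hre : ∀ k : ℕ, (z ^ k).re = Real.cos (2 * π * t * k / n) := by
      intro k
      rw [hz, ← Complex.exp_nat_mul]
      have harg : (k : ℂ) * (2 * π * t / n * Complex.I)
          = ((2 * π * t * k / n : ℝ) : ℂ) * Complex.I := by
        push_cast; ring
      rw [harg, Complex.exp_ofReal_mul_I_re]
    calc ∑ k ∈ Finset.range n, Real.cos (2 * π * t * k / n)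
        = (∑ k ∈ Finset.range n, z ^ k).re := by
          rw [Complex.re_sum]; exact (Finset.sum_congr rfl fun k _ => (hre k).symm)
      _ = 0 := by rw [hsum]; simp

private lemma T_eval (n : ℕ) (hn : 3 ≤ n) (m : ℕ) (hm : m < n) :
    ∑ k ∈ Finset.range n,
      (Real.cos (2 * π / n) - Real.cos (2 * π * (1 : ℤ) * k / n)) * Real.cos (2 * π * (m : ℤ) * k / n)
    = (if m = 0 then (n : ℝ) * Real.cos (2 * π / n) else 0)
        - ((if m = n - 1 then (n : ℝ) else 0) + (if m = 1 then (n : ℝ) else 0)) / 2 := by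
  have hn0 : 0 < n := by omega
  have hterm : ∀ k ∈ Finset.range n,
      (Real.cos (2 * π / n) - Real.cos (2 * π * (1 : ℤ) * k / n)) * Real.cos (2 * π * (m : ℤ) * k / n)
      = Real.cos (2 * π / n) * Real.cos (2 * π * (m : ℤ) * k / n)
        - (Real.cos (2 * π * (((m : ℤ) + 1 : ℤ) : ℝ) * k / n)
            + Real.cos (2 * π * (((m : ℤ) - 1 : ℤ) : ℝ) * k / n)) / 2 := by
    intro k _
    have h1 : (2 * π * (((m : ℤ) + 1 : ℤ) : ℝ) * k / n : ℝ)
        = 2 * π * (m : ℤ) * k / n + 2 * π * (1 : ℤ) * k / n := by push_cast; ring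
    have h2 : (2 * π * (((m : ℤ) - 1 : ℤ) : ℝ) * k / n : ℝ)
        = 2 * π * (m : ℤ) * k / n - 2 * π * (1 : ℤ) * k / n := by push_cast; ring
    rw [h1, h2, Real.cos_add, Real.cos_sub]
    ring
  rw [Finset.sum_congr rfl hterm, Finset.sum_sub_distrib, ← Finset.mul_sum,
    ← Finset.sum_div, Finset.sum_add_distrib,
    sum_cos_dvd n hn0, sum_cos_dvd n hn0, sum_cos_dvd n hn0]
  have e1 : ((n : ℤ) ∣ (m : ℤ)) ↔ m = 0 := by
    constructor
    · intro hd
      have := Int.eq_zero_of_dvd_of_natAbs_lt_natAbs hd (by simpa using hm)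
      exact_mod_cast this
    · rintro rfl; simp
  have e2 : ((n : ℤ) ∣ ((m : ℤ) + 1)) ↔ m = n - 1 := by
    constructor
    · intro hd
      rcases hd with ⟨s, hs⟩
      have h0 : (m : ℤ) + 1 ≤ n := by exact_mod_cast Nat.succ_le_of_lt hm
      have hs1 : s = 1 := by
        rcases lt_trichotomy s 1 with h | h | h
        · exfalso; nlinarith [Int.lt_iff_add_one_le.mp h, (by exact_mod_cast hn0 : (0:ℤ) < n)]
        · exact h
        · exfalso; nlinarith [Int.lt_iff_add_one_le.mp h, (by exact_mod_cast hn0 : (0:ℤ) < n)]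
      subst hs1; omega
    · rintro rfl
      refine ⟨1, by omega⟩
  have e3 : ((n : ℤ) ∣ ((m : ℤ) - 1)) ↔ m = 1 := by
    constructor
    · intro hd
      have habs : ((m : ℤ) - 1).natAbs < n := by omega
      have := Int.eq_zero_of_dvd_of_natAbs_lt_natAbs hd (by simpa using habs)
      omega
    · rintro rfl; simp
  rw [if_congr e1 rfl rfl, if_congr e2 rfl rfl, if_congr e3 rfl rfl]
  have hne : ¬ (n - 1 = 1) := by omega
  split_ifs <;> ring

private lemma T_eval' (n : ℕ) (hn : 3 ≤ n) (m : ℕ) (hm : m < n) :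
    ∑ k ∈ Finset.range n,
      (Real.cos (2 * π / n) - Real.cos (2 * π * k / n)) * Real.cos (2 * π * k * m / n)
    = (if m = 0 then (n : ℝ) * Real.cos (2 * π / n) else 0)
        - ((if m = n - 1 then (n : ℝ) else 0) + (if m = 1 then (n : ℝ) else 0)) / 2 := by
  rw [← T_eval n hn m hm]
  refine Finset.sum_congr rfl fun k _ => ?_
  have e1 : (2 * π * ((1 : ℤ) : ℝ) * k / n : ℝ) = 2 * π * k / n := by push_cast; ring
  have e2 : (2 * π * ((m : ℤ) : ℝ) * k / n : ℝ) = 2 * π * k * m / n := by push_cast; ring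
  rw [e1, e2]

private lemma cos_le_cos_alpha (n k : ℕ) (hn : 3 ≤ n) (hk1 : 1 ≤ k) (hk : k < n) :
    Real.cos (2 * π * k / n) ≤ Real.cos (2 * π / n) := by
  have hn0 : (0:ℝ) < n := by positivity
  have hpi := Real.pi_pos
  have hk1' : (1:ℝ) ≤ k := by exact_mod_cast hk1
  have hk' : (k:ℝ) ≤ n - 1 := by
    have : (k:ℝ) + 1 ≤ n := by exact_mod_cast Nat.succ_le_of_lt hk
    linarith
  have hn3 : (3:ℝ) ≤ n := by exact_mod_cast hn
  have hα0 : 0 ≤ 2 * π / n := by positivity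
  have hαpi : 2 * π / n ≤ π := by
    rw [div_le_iff₀ hn0]; nlinarith
  have hy_ub : 2 * π * k / n ≤ 2 * π - 2 * π / n := by
    rw [div_le_iff₀ hn0]
    have hexp : (2 * π - 2 * π / n) * n = 2 * π * n - 2 * π := by field_simp
    rw [hexp]; nlinarith
  have hαle : 2 * π / n ≤ 2 * π * k / n := by
    apply div_le_div_of_nonneg_right ?_ hn0.le
    · nlinarith
  rcases le_or_gt (2 * π * k / n) π with hy | hy
  · exact Real.cos_le_cos_of_nonneg_of_le_pi hα0 hy hαle
  · have h1 : Real.cos (2 * π * k / n) = Real.cos (2 * π - 2 * π * k / n) := by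
      rw [Real.cos_two_pi_sub]
    rw [h1]
    apply Real.cos_le_cos_of_nonneg_of_le_pi hα0 (by linarith)
    linarith

set_option maxHeartbeats 1000000 in
/-- An elliptic isometry of finite order `n ≥ 3` of a real Hilbert space turns every
non-fixed point by an angle at least `2π/n` at the circumcenter of its orbit. -/
theorem angle_ge_two_pi_div_order
    {E : Type*} [NormedAddCommGroup E] [InnerProductSpace ℝ E] [CompleteSpace E]
    (n : ℕ) (hn : 3 ≤ n) (g : E ≃ᵢ E) (hg : g ^ n = 1)
    (x : E) (hx : g x ≠ x) (c : E)
    (hc : ∀ y : E,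
      (⨆ i : Fin n, dist c ((g ^ (i : ℕ)) x)) ≤ ⨆ i : Fin n, dist y ((g ^ (i : ℕ)) x)) :
    x ≠ c ∧ g x ≠ c ∧ 2 * π / n ≤ EuclideanGeometry.angle x c (g x) := by
  have hn0 : 0 < n := by omega
  haveI : NeZero n := ⟨hn0.ne'⟩
  have hnR : (0:ℝ) < n := by positivity
  have happ : ∀ (a : ℕ) (p : E), (g ^ (a + 1)) p = g ((g ^ a) p) := by
    intro a p
    rw [pow_succ']
    rfl
  have hmod : ∀ a : ℕ, (g ^ (a % n)) x = (g ^ a) x := by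
    intro a
    conv_rhs => rw [← Nat.div_add_mod a n]
    rw [pow_add, pow_mul, hg, one_pow]
    rfl
  have hbd : ∀ y : E, BddAbove (Set.range fun i : Fin n => dist y ((g ^ (i : ℕ)) x)) :=
    fun y => (Set.finite_range _).bddAbove
  set r0 : ℝ := ⨆ i : Fin n, dist c ((g ^ (i : ℕ)) x) with hr0
  have hler : ∀ i : Fin n, dist c ((g ^ (i : ℕ)) x) ≤ r0 := fun i => le_ciSup (hbd c) i
  have hr0nn : 0 ≤ r0 := le_trans dist_nonneg (hler ⟨0, hn0⟩)
  -- Step A : g c = c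
  have hgc : g c = c := by
    by_contra hne
    have hgcr : ∀ i : Fin n, dist (g c) ((g ^ (i : ℕ)) x) ≤ r0 := by
      intro i
      have hjlt : ((i : ℕ) + (n - 1)) % n < n := Nat.mod_lt _ hn0
      have h2 : (((i : ℕ) + (n - 1)) % n + 1) % n = (i : ℕ) := by
        rcases Nat.eq_zero_or_pos (i : ℕ) with h0 | h0
        · rw [h0, Nat.zero_add, Nat.mod_eq_of_lt (by omega : n - 1 < n)]
          have : n - 1 + 1 = n := by omega
          rw [this, Nat.mod_self]
        · have e : (i : ℕ) + (n - 1) = ((i : ℕ) - 1) + n := by omega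
          rw [e, Nat.add_mod_right, Nat.mod_eq_of_lt (by omega : (i : ℕ) - 1 < n)]
          have e2 : (i : ℕ) - 1 + 1 = (i : ℕ) := by omega
          rw [e2, Nat.mod_eq_of_lt i.isLt]
      have hji : (g ^ ((((i : ℕ) + (n - 1)) % n) + 1)) x = (g ^ (i : ℕ)) x := by
        rw [← hmod ((((i : ℕ) + (n - 1)) % n) + 1), h2]
      calc dist (g c) ((g ^ (i : ℕ)) x)
          = dist (g c) (g ((g ^ (((i : ℕ) + (n - 1)) % n)) x)) := by rw [← hji, happ]
        _ = dist c ((g ^ (((i : ℕ) + (n - 1)) % n)) x) := g.isometry.dist_eq _ _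
        _ ≤ r0 := hler ⟨_, hjlt⟩
    set m : E := (1/2 : ℝ) • (c + g c) with hm
    set d : ℝ := ‖g c - c‖ with hd
    have hd0 : 0 < d := by
      rw [hd, norm_pos_iff, sub_ne_zero]
      exact hne
    have hkey : ∀ p : E, ‖p - m‖^2 = (‖p - c‖^2 + ‖p - g c‖^2)/2 - (d/2)^2 := by
      intro p
      have e1 : p - m + (1/2 : ℝ) • (g c - c) = p - c := by rw [hm]; module
      have e2 : p - m - (1/2 : ℝ) • (g c - c) = p - g c := by rw [hm]; module
      have hpar := parallelogram_law_with_norm ℝ (p - m) ((1/2 : ℝ) • (g c - c))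
      rw [e1, e2] at hpar
      have hw : ‖(1/2 : ℝ) • (g c - c)‖ = d/2 := by
        rw [norm_smul]
        rw [hd]
        simp
        ring
      rw [hw] at hpar
      nlinarith [hpar]
    have hle2 : ∀ i : Fin n, ‖((g ^ (i : ℕ)) x) - m‖^2 ≤ r0^2 - (d/2)^2 := by
      intro i
      have hc1 : ‖((g ^ (i : ℕ)) x) - c‖ ≤ r0 := by
        rw [← dist_eq_norm, dist_comm]; exact hler i
      have hc2 : ‖((g ^ (i : ℕ)) x) - g c‖ ≤ r0 := by
        rw [← dist_eq_norm, dist_comm]; exact hgcr i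
      have := hkey ((g ^ (i : ℕ)) x)
      nlinarith [norm_nonneg (((g ^ (i : ℕ)) x) - c), norm_nonneg (((g ^ (i : ℕ)) x) - g c)]
    have hA0 : 0 ≤ r0^2 - (d/2)^2 := (sq_nonneg _).trans (hle2 ⟨0, hn0⟩)
    have hfin : r0 ≤ Real.sqrt (r0^2 - (d/2)^2) := by
      refine (hc m).trans (ciSup_le fun i => ?_)
      have : dist m ((g ^ (i : ℕ)) x) = ‖((g ^ (i : ℕ)) x) - m‖ := by
        rw [dist_comm, dist_eq_norm]
      rw [this, ← Real.sqrt_sq (norm_nonneg _)]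
      exact Real.sqrt_le_sqrt (hle2 i)
    rw [Real.le_sqrt hr0nn hA0] at hfin
    nlinarith [hd0]
  -- Step B : basic orbit facts
  set u : ℕ → E := fun k => (g ^ k) x - c with hu
  set r : ℝ := ‖x - c‖ with hr
  have hgpc : ∀ a : ℕ, (g ^ a) c = c := by
    intro a
    induction a with
    | zero => rfl
    | succ a ih => rw [happ, ih, hgc]
  have hxc : x ≠ c := by
    intro h
    apply hx
    rw [h, hgc]
  have hrpos : 0 < r := by
    rw [hr, norm_pos_iff, sub_ne_zero]
    exact hxc
  have hnorm : ∀ k : ℕ, ‖u k‖ = r := by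
    intro k
    induction k with
    | zero => simp [hu, hr]
    | succ k ih =>
      have : ‖u (k + 1)‖ = ‖u k‖ := by
        simp only [hu]
        rw [← dist_eq_norm, ← dist_eq_norm]
        calc dist ((g ^ (k+1)) x) c = dist (g ((g ^ k) x)) (g c) := by rw [hgc, ← happ]
          _ = dist ((g ^ k) x) c := g.isometry.dist_eq _ _
      rw [this, ih]
  have hgxc : g x ≠ c := by
    intro h
    apply hxc
    have : g x = g c := by rw [h, hgc]
    exact g.injective this
  have hdist_uv : ∀ a b : ℕ, ‖u a - u b‖ = ‖u (a+1) - u (b+1)‖ := by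
    intro a b
    have e1 : u a - u b = (g ^ a) x - (g ^ b) x := by simp only [hu]; abel
    have e2 : u (a+1) - u (b+1) = (g ^ (a+1)) x - (g ^ (b+1)) x := by simp only [hu]; abel
    rw [e1, e2, ← dist_eq_norm, ← dist_eq_norm, happ, happ, g.isometry.dist_eq]
  have hinner1 : ∀ a b : ℕ, ⟪u (a+1), u (b+1)⟫ = ⟪u a, u b⟫ := by
    intro a b
    have h1 := norm_sub_sq_real (u a) (u b)
    have h2 := norm_sub_sq_real (u (a+1)) (u (b+1))
    rw [hnorm, hnorm] at h1
    rw [hnorm, hnorm, ← hdist_uv a b] at h2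
    linarith
  have hshift : ∀ (t a b : ℕ), ⟪u (a + t), u (b + t)⟫ = ⟪u a, u b⟫ := by
    intro t
    induction t with
    | zero => intro a b; rfl
    | succ t ih =>
      intro a b
      have e1 : a + (t + 1) = (a + t) + 1 := rfl
      have e2 : b + (t + 1) = (b + t) + 1 := rfl
      rw [e1, e2, hinner1, ih]
  have humod : ∀ a : ℕ, u (a % n) = u a := by
    intro a
    simp only [hu, hmod]
  set γ : ℕ → ℝ := fun m => ⟪u 0, u m⟫ with hγ
  have hKEY : ∀ i m : Fin n, ⟪u (i : ℕ), u ((i + m : Fin n) : ℕ)⟫ = γ (m : ℕ) := by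
    intro i m
    have hval : ((i + m : Fin n) : ℕ) = ((i : ℕ) + (m : ℕ)) % n := by
      rw [Fin.val_add]
    rw [hval, humod]
    have := hshift (i : ℕ) 0 (m : ℕ)
    simpa [Nat.add_comm] using this
  -- Step C : the sum of the orbit vectors is zero
  set s : E := ∑ j : Fin n, u (j : ℕ) with hs
  have hus : ∀ i : Fin n, ⟪u (i : ℕ), s⟫ = ∑ m : Fin n, γ (m : ℕ) := by
    intro i
    rw [hs, inner_sum]
    rw [← Equiv.sum_comp (Equiv.addLeft i) (fun j : Fin n => (⟪u (i : ℕ), u (j : ℕ)⟫ : ℝ))]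
    exact Finset.sum_congr rfl fun m _ => hKEY i m
  have hsz : s = 0 := by
    by_contra hsne
    have hss : ⟪s, s⟫ = (n : ℝ) * ∑ m : Fin n, γ (m : ℕ) := by
      rw [hs]
      rw [sum_inner]
      rw [Finset.sum_congr rfl (fun i _ => hus i)]
      simp [Finset.card_univ]
    have hgamsum : ∑ m : Fin n, γ (m : ℕ) = ‖s‖^2 / n := by
      rw [← real_inner_self_eq_norm_sq, hss]
      field_simp
    have hspos : (0:ℝ) < ‖s‖^2 := by
      have := norm_pos_iff.mpr hsne
      positivity
    set y : E := c + (1/(n:ℝ)) • s with hy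
    have hdy : ∀ i : Fin n, dist y ((g ^ (i : ℕ)) x) ^ 2 = r^2 - ‖s‖^2/(n:ℝ)^2 := by
      intro i
      have e1 : (g ^ (i : ℕ)) x - y = u (i : ℕ) - (1/(n:ℝ)) • s := by
        simp only [hu, hy]; abel
      rw [dist_comm, dist_eq_norm, e1]
      have hexp := norm_sub_sq_real (u (i : ℕ)) ((1/(n:ℝ)) • s)
      rw [real_inner_smul_right, hus i, hgamsum, hnorm, norm_smul] at hexp
      rw [hexp, Real.norm_eq_abs, abs_of_pos (by positivity : (0:ℝ) < 1/(n:ℝ))]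
      field_simp
      ring
    have hlt : Real.sqrt (r^2 - ‖s‖^2/(n:ℝ)^2) < r := by
      have h1 : r^2 - ‖s‖^2/(n:ℝ)^2 < r^2 := by
        have : 0 < ‖s‖^2/(n:ℝ)^2 := by positivity
        linarith
      calc Real.sqrt (r^2 - ‖s‖^2/(n:ℝ)^2) < Real.sqrt (r^2) := by
            apply Real.sqrt_lt_sqrt ?_ h1
            rw [← hdy ⟨0, hn0⟩]
            positivity
        _ = r := Real.sqrt_sq hrpos.le
    have hr0r : r0 = r := by
      have hterm : ∀ i : Fin n, dist c ((g ^ (i : ℕ)) x) = r := by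
        intro i
        rw [dist_comm, dist_eq_norm]
        exact hnorm i
      rw [hr0]
      rw [iSup_congr hterm]
      exact ciSup_const
    have hub : (⨆ i : Fin n, dist y ((g ^ (i : ℕ)) x)) ≤ Real.sqrt (r^2 - ‖s‖^2/(n:ℝ)^2) := by
      apply ciSup_le
      intro i
      have := hdy i
      rw [← Real.sqrt_sq (dist_nonneg : (0:ℝ) ≤ dist y ((g ^ (i : ℕ)) x)), this]
    have := (hc y).trans hub
    rw [hr0r] at this
    exact absurd (this.trans_lt hlt) (lt_irrefl r)
  -- Step D : Fourier positivity
  set Cv : Fin n → E :=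
    fun k => ∑ j : Fin n, Real.cos (2*π*((k:ℕ):ℝ)*((j:ℕ):ℝ)/(n:ℝ)) • u (j:ℕ) with hCv
  set Sv : Fin n → E :=
    fun k => ∑ j : Fin n, Real.sin (2*π*((k:ℕ):ℝ)*((j:ℕ):ℝ)/(n:ℝ)) • u (j:ℕ) with hSv
  have expand : ∀ a : Fin n → ℝ,
      (⟪∑ j : Fin n, a j • u (j:ℕ), ∑ j : Fin n, a j • u (j:ℕ)⟫ : ℝ)
        = ∑ i : Fin n, ∑ j : Fin n, a i * (a j * ⟪u (i:ℕ), u (j:ℕ)⟫) := by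
    intro a
    rw [sum_inner]
    refine Finset.sum_congr rfl fun i _ => ?_
    rw [real_inner_smul_left, inner_sum, Finset.mul_sum]
    refine Finset.sum_congr rfl fun j _ => ?_
    rw [real_inner_smul_right]
  have hargval : ∀ i m : Fin n,
      (((i + m : Fin n) : ℕ) : ℝ)
        = ((i:ℕ):ℝ) + ((m:ℕ):ℝ) - (n:ℝ)*((((i:ℕ)+(m:ℕ))/n : ℕ):ℝ) := by
    intro i m
    have h1 : ((i + m : Fin n) : ℕ) + n * (((i:ℕ)+(m:ℕ))/n) = (i:ℕ)+(m:ℕ) := by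
      rw [Fin.val_add]; exact Nat.mod_add_div _ _
    have h2 := congrArg (Nat.cast : ℕ → ℝ) h1
    push_cast at h2
    linarith
  have hcos_shift : ∀ k i m : Fin n,
      Real.cos (2*π*((k:ℕ):ℝ)*(((i+m : Fin n):ℕ):ℝ)/(n:ℝ) - 2*π*((k:ℕ):ℝ)*((i:ℕ):ℝ)/(n:ℝ))
        = Real.cos (2*π*((k:ℕ):ℝ)*((m:ℕ):ℝ)/(n:ℝ)) := by
    intro k i m
    have hval := hargval i m
    set q : ℕ := ((i:ℕ)+(m:ℕ))/n with hqdef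
    have harg : 2*π*((k:ℕ):ℝ)*(((i+m : Fin n):ℕ):ℝ)/(n:ℝ) - 2*π*((k:ℕ):ℝ)*((i:ℕ):ℝ)/(n:ℝ)
        = 2*π*((k:ℕ):ℝ)*((m:ℕ):ℝ)/(n:ℝ)
          + ((-(((k:ℕ):ℤ)*(q:ℤ)) : ℤ):ℝ) * (2*π) := by
      rw [hval]; push_cast; field_simp; ring
    rw [harg, Real.cos_add_int_mul_two_pi]
  have hF : ∀ k : Fin n, ‖Cv k‖^2 + ‖Sv k‖^2
      = n * ∑ m : Fin n, Real.cos (2*π*((k:ℕ):ℝ)*((m:ℕ):ℝ)/(n:ℝ)) * γ (m:ℕ) := by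
    intro k
    have hrow : ∀ i : Fin n,
        (∑ j : Fin n,
          Real.cos (2*π*((k:ℕ):ℝ)*((j:ℕ):ℝ)/(n:ℝ) - 2*π*((k:ℕ):ℝ)*((i:ℕ):ℝ)/(n:ℝ))
            * ⟪u (i:ℕ), u (j:ℕ)⟫)
        = ∑ m : Fin n, Real.cos (2*π*((k:ℕ):ℝ)*((m:ℕ):ℝ)/(n:ℝ)) * γ (m:ℕ) := by
      intro i
      rw [← Equiv.sum_comp (Equiv.addLeft i)
        (fun j : Fin n =>
          Real.cos (2*π*((k:ℕ):ℝ)*((j:ℕ):ℝ)/(n:ℝ) - 2*π*((k:ℕ):ℝ)*((i:ℕ):ℝ)/(n:ℝ))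
            * (⟪u (i:ℕ), u (j:ℕ)⟫ : ℝ))]
      refine Finset.sum_congr rfl fun m _ => ?_
      simp only [Equiv.coe_addLeft]
      rw [hcos_shift k i m, hKEY i m]
    calc ‖Cv k‖^2 + ‖Sv k‖^2
        = ∑ i : Fin n, ∑ j : Fin n,
            (Real.cos (2*π*((k:ℕ):ℝ)*((i:ℕ):ℝ)/(n:ℝ))
              * (Real.cos (2*π*((k:ℕ):ℝ)*((j:ℕ):ℝ)/(n:ℝ)) * ⟪u (i:ℕ), u (j:ℕ)⟫)
            + Real.sin (2*π*((k:ℕ):ℝ)*((i:ℕ):ℝ)/(n:ℝ))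
              * (Real.sin (2*π*((k:ℕ):ℝ)*((j:ℕ):ℝ)/(n:ℝ)) * ⟪u (i:ℕ), u (j:ℕ)⟫)) := by
          rw [hCv, hSv]
          rw [← real_inner_self_eq_norm_sq, ← real_inner_self_eq_norm_sq, expand _, expand _,
            ← Finset.sum_add_distrib]
          refine Finset.sum_congr rfl fun i _ => ?_
          rw [← Finset.sum_add_distrib]
      _ = ∑ i : Fin n, ∑ j : Fin n,
            Real.cos (2*π*((k:ℕ):ℝ)*((j:ℕ):ℝ)/(n:ℝ) - 2*π*((k:ℕ):ℝ)*((i:ℕ):ℝ)/(n:ℝ))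
              * ⟪u (i:ℕ), u (j:ℕ)⟫ := by
          refine Finset.sum_congr rfl fun i _ => Finset.sum_congr rfl fun j _ => ?_
          rw [Real.cos_sub]
          ring
      _ = ∑ _i : Fin n, ∑ m : Fin n,
            Real.cos (2*π*((k:ℕ):ℝ)*((m:ℕ):ℝ)/(n:ℝ)) * γ (m:ℕ) := by
          exact Finset.sum_congr rfl fun i _ => hrow i
      _ = n * ∑ m : Fin n, Real.cos (2*π*((k:ℕ):ℝ)*((m:ℕ):ℝ)/(n:ℝ)) * γ (m:ℕ) := by
          rw [Finset.sum_const, Finset.card_univ, Fintype.card_fin, nsmul_eq_mul]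
  have hF0 : ‖Cv (0 : Fin n)‖^2 + ‖Sv (0 : Fin n)‖^2 = 0 := by
    have hc0 : Cv (0 : Fin n) = 0 := by
      rw [hCv]
      simp only [Fin.val_zero, Nat.cast_zero, mul_zero, zero_mul, zero_div, Real.cos_zero,
        one_smul]
      rw [← hs, hsz]
    have hs0 : Sv (0 : Fin n) = 0 := by
      rw [hSv]
      simp [Fin.val_zero]
    rw [hc0, hs0]
    simp
  have htot_nonneg : 0 ≤ ∑ k : Fin n,
      (Real.cos (2*π/(n:ℝ)) - Real.cos (2*π*((k:ℕ):ℝ)/(n:ℝ))) * (‖Cv k‖^2 + ‖Sv k‖^2) := by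
    apply Finset.sum_nonneg
    intro k _
    rcases eq_or_ne k 0 with rfl | hk
    · rw [hF0, mul_zero]
    · apply mul_nonneg
      · have hkv : (k : ℕ) ≠ 0 := by
          intro h; apply hk; exact Fin.ext (by rw [h]; simp)
        have hk1 : 1 ≤ (k : ℕ) := Nat.one_le_iff_ne_zero.mpr hkv
        exact sub_nonneg.mpr (cos_le_cos_alpha n (k : ℕ) hn hk1 k.isLt)
      · positivity
  have htot_eq : ∑ k : Fin n,
      (Real.cos (2*π/(n:ℝ)) - Real.cos (2*π*((k:ℕ):ℝ)/(n:ℝ))) * (‖Cv k‖^2 + ‖Sv k‖^2)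
      = n * ∑ m : Fin n, γ (m:ℕ) *
          (∑ k ∈ Finset.range n,
            (Real.cos (2*π/(n:ℝ)) - Real.cos (2*π*(k:ℝ)/(n:ℝ))) * Real.cos (2*π*(k:ℝ)*((m:ℕ):ℝ)/(n:ℝ))) := by
    calc ∑ k : Fin n,
        (Real.cos (2*π/(n:ℝ)) - Real.cos (2*π*((k:ℕ):ℝ)/(n:ℝ))) * (‖Cv k‖^2 + ‖Sv k‖^2)
        = ∑ k : Fin n, (n : ℝ) * ∑ m : Fin n,
            (Real.cos (2*π/(n:ℝ)) - Real.cos (2*π*((k:ℕ):ℝ)/(n:ℝ)))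
              * (Real.cos (2*π*((k:ℕ):ℝ)*((m:ℕ):ℝ)/(n:ℝ)) * γ (m:ℕ)) := by
          refine Finset.sum_congr rfl fun k _ => ?_
          rw [hF k]
          simp only [Finset.mul_sum]
          refine Finset.sum_congr rfl fun m _ => ?_
          ring
      _ = (n : ℝ) * ∑ m : Fin n, ∑ k : Fin n,
            (Real.cos (2*π/(n:ℝ)) - Real.cos (2*π*((k:ℕ):ℝ)/(n:ℝ)))
              * (Real.cos (2*π*((k:ℕ):ℝ)*((m:ℕ):ℝ)/(n:ℝ)) * γ (m:ℕ)) := by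
          rw [← Finset.mul_sum, Finset.sum_comm]
      _ = n * ∑ m : Fin n, γ (m:ℕ) *
            (∑ k ∈ Finset.range n,
              (Real.cos (2*π/(n:ℝ)) - Real.cos (2*π*(k:ℝ)/(n:ℝ))) * Real.cos (2*π*(k:ℝ)*((m:ℕ):ℝ)/(n:ℝ))) := by
          congr 1
          refine Finset.sum_congr rfl fun m _ => ?_
          rw [← Fin.sum_univ_eq_sum_range
            (fun k : ℕ => (Real.cos (2*π/(n:ℝ)) - Real.cos (2*π*(k:ℝ)/(n:ℝ)))
              * Real.cos (2*π*(k:ℝ)*((m:ℕ):ℝ)/(n:ℝ))) n]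
          rw [Finset.mul_sum]
          refine Finset.sum_congr rfl fun k _ => ?_
          ring
  have hgam_eq : γ (n-1) = γ 1 := by
    have h1 := hshift 1 0 (n-1)
    have h2 : (n - 1) + 1 = n := by omega
    rw [h2] at h1
    have h3 : u n = u 0 := by
      have := humod n
      rw [Nat.mod_self] at this
      exact this.symm
    rw [h3] at h1
    show (⟪u 0, u (n-1)⟫ : ℝ) = ⟪u 0, u 1⟫
    rw [← h1]
    exact real_inner_comm _ _
  have hg0 : γ 0 = r^2 := by
    rw [hγ]
    simp only
    rw [real_inner_self_eq_norm_sq, hnorm]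
  have hsum_eval : ∑ m : Fin n, γ (m:ℕ) *
      (∑ k ∈ Finset.range n,
        (Real.cos (2*π/(n:ℝ)) - Real.cos (2*π*(k:ℝ)/(n:ℝ))) * Real.cos (2*π*(k:ℝ)*((m:ℕ):ℝ)/(n:ℝ)))
      = (n:ℝ) * Real.cos (2*π/(n:ℝ)) * γ 0 - ((n:ℝ) * γ (n-1) + (n:ℝ) * γ 1)/2 := by
    rw [Fin.sum_univ_eq_sum_range (fun m : ℕ => γ m *
      (∑ k ∈ Finset.range n,
        (Real.cos (2*π/(n:ℝ)) - Real.cos (2*π*(k:ℝ)/(n:ℝ))) * Real.cos (2*π*(k:ℝ)*(m:ℝ)/(n:ℝ)))) n]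
    have hterm : ∀ m ∈ Finset.range n, γ m *
        (∑ k ∈ Finset.range n,
          (Real.cos (2*π/(n:ℝ)) - Real.cos (2*π*(k:ℝ)/(n:ℝ))) * Real.cos (2*π*(k:ℝ)*(m:ℝ)/(n:ℝ)))
        = (if m = 0 then γ m * ((n:ℝ) * Real.cos (2*π/(n:ℝ))) else 0)
            - ((if m = n-1 then γ m * (n:ℝ) else 0) + (if m = 1 then γ m * (n:ℝ) else 0))/2 := by
      intro m hm
      rw [T_eval' n hn m (Finset.mem_range.mp hm)]
      split_ifs <;> ring
    rw [Finset.sum_congr rfl hterm, Finset.sum_sub_distrib, ← Finset.sum_div,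
      Finset.sum_add_distrib, Finset.sum_ite_eq' (Finset.range n) 0,
      Finset.sum_ite_eq' (Finset.range n) (n-1), Finset.sum_ite_eq' (Finset.range n) 1,
      if_pos (Finset.mem_range.mpr hn0), if_pos (Finset.mem_range.mpr (by omega : n - 1 < n)),
      if_pos (Finset.mem_range.mpr (by omega : 1 < n))]
    ring
  have hfinal : γ 1 ≤ Real.cos (2*π/(n:ℝ)) * r^2 := by
    rw [htot_eq, hsum_eval, hgam_eq, hg0] at htot_nonneg
    have e : (n:ℝ) * ((n:ℝ) * Real.cos (2*π/(n:ℝ)) * r^2 - ((n:ℝ)*γ 1 + (n:ℝ)*γ 1)/2)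
        = ((n:ℝ)*(n:ℝ)) * (Real.cos (2*π/(n:ℝ))*r^2 - γ 1) := by ring
    rw [e] at htot_nonneg
    nlinarith [htot_nonneg, mul_pos hnR hnR]
  -- Step E : the angle bound
  have hu0 : u 0 = x - c := by simp [hu]
  have hu1 : u 1 = g x - c := by simp [hu]
  have hnorm0 : ‖x - c‖ = r := by rw [← hu0]; exact hnorm 0
  have hnorm1 : ‖g x - c‖ = r := by rw [← hu1]; exact hnorm 1
  have hang : EuclideanGeometry.angle x c (g x)
      = Real.arccos (γ 1 / (r * r)) := by
    have h1 : EuclideanGeometry.angle x c (g x)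
        = Real.arccos ((⟪x - c, g x - c⟫ : ℝ) / (‖x - c‖ * ‖g x - c‖)) := rfl
    have h2 : (⟪x - c, g x - c⟫ : ℝ) = γ 1 := by
      simp only [hγ, hu0, hu1]
    rw [h1, hnorm0, hnorm1, h2]
  refine ⟨hxc, hgxc, ?_⟩
  rw [hang]
  have hrr : (0:ℝ) < r * r := by positivity
  have htle : γ 1 / (r * r) ≤ Real.cos (2*π/(n:ℝ)) := by
    rw [div_le_iff₀ hrr]
    nlinarith [hfinal]
  have htge : -1 ≤ γ 1 / (r * r) := by
    rw [le_div_iff₀ hrr]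
    have habs := abs_real_inner_le_norm (u 0) (u 1)
    rw [hnorm 0, hnorm 1] at habs
    have := neg_abs_le (⟪u 0, u 1⟫ : ℝ)
    rw [hγ]
    nlinarith [habs, this]
  have ht1 : γ 1 / (r * r) ≤ 1 := htle.trans (Real.cos_le_one _)
  have halpi : 2*π/(n:ℝ) ≤ π := by
    rw [div_le_iff₀ hnR]
    have h3 : (3:ℝ) ≤ n := by exact_mod_cast hn
    nlinarith [Real.pi_pos]
  have halp0 : 0 ≤ 2*π/(n:ℝ) := by positivity
  by_contra hcon
  push_neg at hcon
  have h5 : Real.cos (2*π/(n:ℝ)) ≤ Real.cos (Real.arccos (γ 1 / (r * r))) :=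
    Real.cos_le_cos_of_nonneg_of_le_pi (Real.arccos_nonneg _) halpi hcon.le
  rw [Real.cos_arccos htge ht1] at h5
  have heq : γ 1 / (r * r) = Real.cos (2*π/(n:ℝ)) := le_antisymm htle h5
  rw [heq, Real.arccos_cos halp0 halpi] at hcon
  exact lt_irrefl _ hcon
end

section
/- Let k ≥ 1, let g be a linear isometry of EuclideanSpace ℝ (Fin k) (an orthogonal transformation) with g^n = id for some n ≥ 3, and let x be a point with g x ≠ x. Let c be the orthogonal projection of x onto the fixed subspace {v : g v = v}. Then x − c and g x − c are nonzero, and the angle between them, arccos(⟪x − c, g x − c⟫/(‖x − c‖·‖g x − c‖)), is at least 2π/n. -/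
open Real
open scoped RealInnerProductSpace

private lemma sum_step {M : Type*} [AddCommGroup M] {F : ℤ → M} {n : ℕ}
    (hF : ∀ d : ℤ, F (d + n) = F d) (s : ℤ) :
    ∑ j ∈ Finset.range n, F (j + (s + 1)) = ∑ j ∈ Finset.range n, F (j + s) := by
  have h1 := Finset.sum_range_succ' (fun j : ℕ => F (j + s)) n
  have h2 := Finset.sum_range_succ (fun j : ℕ => F (j + s)) n
  have hns : F ((n:ℤ) + s) = F s := by rw [add_comm]; exact hF s
  have h3 : ∑ j ∈ Finset.range n, F (j + (s + 1)) = ∑ j ∈ Finset.range n, F ((j + 1 : ℕ) + s) := by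
    refine Finset.sum_congr rfl fun j _ => ?_
    congr 1
    push_cast
    ring
  rw [h3]
  have key := h1.symm.trans h2
  rw [hns] at key
  have h4 : F ((0:ℕ) + s : ℤ) = F s := by norm_num
  rw [h4] at key
  exact add_right_cancel key

private lemma sum_shift {M : Type*} [AddCommGroup M] {F : ℤ → M} {n : ℕ}
    (hF : ∀ d : ℤ, F (d + n) = F d) (t : ℤ) :
    ∑ j ∈ Finset.range n, F (j + t) = ∑ j ∈ Finset.range n, F j := by
  induction t using Int.induction_on with
  | zero => simp
  | succ i ih => rw [sum_step hF i, ih]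
  | pred i ih =>
      have h := sum_step hF (-i - 1)
      simp only [sub_add_cancel] at h
      rw [← ih, ← h]

private lemma sum_sub_sum {F : ℤ → ℝ} {n : ℕ} (hF : ∀ d : ℤ, F (d + n) = F d) :
    ∑ i ∈ Finset.range n, ∑ j ∈ Finset.range n, F (j - i) = n * ∑ d ∈ Finset.range n, F d := by
  have h : ∀ i ∈ Finset.range n, ∑ j ∈ Finset.range n, F ((j:ℤ) - i) = ∑ d ∈ Finset.range n, F (d:ℤ) := by
    intro i _
    simpa [sub_eq_add_neg] using sum_shift hF (-(i:ℤ))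
  rw [Finset.sum_congr rfl h, Finset.sum_const, Finset.card_range, nsmul_eq_mul]

private lemma cos_sum (n : ℕ) (hn : 0 < n) (e : ℕ) :
    ∑ m ∈ Finset.range n, Real.cos (2 * π / n * (m * e)) = if n ∣ e then (n:ℝ) else 0 := by
  by_cases h : n ∣ e
  · obtain ⟨t, rfl⟩ := h
    rw [if_pos ⟨t, rfl⟩]
    push_cast
    have h1 : ∀ m ∈ Finset.range n, Real.cos (2 * π / n * (m * ((n:ℝ) * t))) = 1 := by
      intro m _
      have hne : (n:ℝ) ≠ 0 := Nat.cast_ne_zero.mpr hn.ne'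
      have h2 : (2 * π / n * (m * ((n:ℝ) * t)) : ℝ) = (m * t : ℕ) * (2 * π) := by
        push_cast; field_simp
      rw [h2, Real.cos_nat_mul_two_pi]
    rw [Finset.sum_congr rfl h1, Finset.sum_const, Finset.card_range]
    simp
  · rw [if_neg h]
    have hne : (n:ℝ) ≠ 0 := Nat.cast_ne_zero.mpr hn.ne'
    set θ : ℝ := 2 * π / n * e with hθ
    set z : ℂ := Complex.exp (θ * Complex.I) with hz
    have hzpow : ∀ m : ℕ, z ^ m = Complex.exp ((θ * m : ℝ) * Complex.I) := by
      intro m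
      rw [hz, ← Complex.exp_nat_mul]
      congr 1
      push_cast
      ring
    have hz1 : z ≠ 1 := by
      intro hz1
      rw [hz, Complex.exp_eq_one_iff] at hz1
      obtain ⟨t, ht⟩ := hz1
      have ht' : (θ : ℂ) = (t : ℂ) * (2 * π) := by
        have h5 : (θ : ℂ) * Complex.I = ((t : ℂ) * (2 * π)) * Complex.I := by rw [ht]; ring
        exact mul_right_cancel₀ Complex.I_ne_zero h5
      have htr : θ = (t : ℝ) * (2 * π) := by exact_mod_cast ht'
      have he : (e : ℝ) = (t : ℝ) * n := by
        rw [hθ] at htr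
        field_simp at htr
        nlinarith [Real.pi_pos]
      have h6 : (e : ℤ) = t * n := by exact_mod_cast he
      exact h (Int.natCast_dvd_natCast.mp ⟨t, by rw [h6]; ring⟩)
    have hzn : z ^ n = 1 := by
      rw [hzpow]
      have h7 : (θ * n : ℝ) = (e : ℕ) * (2 * π) := by rw [hθ]; field_simp
      rw [h7]
      have h8 := Complex.exp_nat_mul_two_pi_mul_I e
      rw [← h8]
      congr 1
      push_cast
      ring
    have hsum : ∑ m ∈ Finset.range n, z ^ m = 0 := by
      rw [geom_sum_eq hz1, hzn]
      simp
    have hre : ∑ m ∈ Finset.range n, Real.cos (2 * π / n * (m * e)) = (∑ m ∈ Finset.range n, z ^ m).re := by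
      rw [Complex.re_sum]
      refine Finset.sum_congr rfl fun m _ => ?_
      rw [hzpow, Complex.exp_ofReal_mul_I_re]
      congr 1
      rw [hθ]
      push_cast
      ring
    rw [hre, hsum, Complex.zero_re]

private lemma cos_le_cos_body (n m : ℕ) (hn : 3 ≤ n) (hm1 : 1 ≤ m) (hm2 : m < n) :
    Real.cos (2 * π / n * m) ≤ Real.cos (2 * π / n) := by
  have hnpos : (0:ℝ) < n := by positivity
  have hpi := Real.pi_pos
  have hβpos : (0:ℝ) < 2 * π / n := by positivity
  have hm1' : (1:ℝ) ≤ m := by exact_mod_cast hm1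
  have hm2' : (m:ℝ) < n := by exact_mod_cast hm2
  by_cases h : 2 * m ≤ n
  · have h' : (2 * m : ℝ) ≤ n := by exact_mod_cast h
    apply Real.cos_le_cos_of_nonneg_of_le_pi hβpos.le
    · rw [div_mul_eq_mul_div, div_le_iff₀ hnpos]
      nlinarith
    · exact le_mul_of_one_le_right hβpos.le hm1'
  · have h' : (n:ℝ) < 2 * m := by exact_mod_cast Nat.lt_of_not_le h
    have key : Real.cos (2 * π / n * m) = Real.cos (2 * π / n * (n - m)) := by
      rw [← Real.cos_two_pi_sub]
      congr 1
      field_simp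
    rw [key]
    apply Real.cos_le_cos_of_nonneg_of_le_pi hβpos.le
    · rw [div_mul_eq_mul_div, div_le_iff₀ hnpos]
      nlinarith
    · have hm3 : (m:ℝ) + 1 ≤ n := by exact_mod_cast hm2
      have h9 : (1:ℝ) ≤ (n:ℝ) - m := by nlinarith
      exact le_mul_of_one_le_right hβpos.le h9

private lemma gram_nonneg {E : Type*} [NormedAddCommGroup E] [InnerProductSpace ℝ E]
    (n : ℕ) (w : ℕ → E) (a : ℕ → ℝ) :
    0 ≤ ∑ i ∈ Finset.range n, ∑ j ∈ Finset.range n, a i * a j * ⟪w i, w j⟫ := by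
  have key : ∑ i ∈ Finset.range n, ∑ j ∈ Finset.range n, a i * a j * ⟪w i, w j⟫
      = ⟪∑ i ∈ Finset.range n, a i • w i, ∑ j ∈ Finset.range n, a j • w j⟫ := by
    rw [sum_inner]
    refine Finset.sum_congr rfl fun i _ => ?_
    rw [inner_sum]
    refine Finset.sum_congr rfl fun j _ => ?_
    rw [real_inner_smul_left, real_inner_smul_right]
    ring
  rw [key]
  exact real_inner_self_nonneg

set_option maxHeartbeats 1000000 in
/-- A finite-order orthogonal transformation of `ℝᵏ` turns every non-fixed point by an
angle at least `2π/n`, measured at its orthogonal projection onto the fixed subspace.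
Here `c` is characterized as the orthogonal projection of `x` onto the fixed subspace
`{v : g v = v}`: it is fixed by `g` and `x - c` is orthogonal to every fixed vector. -/
theorem orthogonal_angle_ge_two_pi_div_order
    (k : ℕ) (hk : 1 ≤ k) (n : ℕ) (hn : 3 ≤ n)
    (g : EuclideanSpace ℝ (Fin k) ≃ₗᵢ[ℝ] EuclideanSpace ℝ (Fin k)) (hg : g ^ n = 1)
    (x : EuclideanSpace ℝ (Fin k)) (hx : g x ≠ x)
    (c : EuclideanSpace ℝ (Fin k)) (hcfix : g c = c)
    (hcproj : ∀ v : EuclideanSpace ℝ (Fin k), g v = v → ⟪x - c, v⟫ = 0) :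
    x - c ≠ 0 ∧ g x - c ≠ 0 ∧
      2 * π / n ≤ Real.arccos (⟪x - c, g x - c⟫ / (‖x - c‖ * ‖g x - c‖)) := by
  have hn0 : 0 < n := by omega
  have hnR : (0:ℝ) < n := by exact_mod_cast hn0
  have hpi := Real.pi_pos
  set y := x - c with hy
  have hy0 : y ≠ 0 := by
    intro h
    apply hx
    have hxc : x = c := by rwa [sub_eq_zero] at h
    rw [hxc, hcfix]
  have hgyy : g x - c = g y := by rw [hy, map_sub, hcfix]
  have hgy0 : g x - c ≠ 0 := by
    rw [hgyy]
    intro h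
    apply hy0
    simpa using congrArg g.symm h
  refine ⟨hy0, hgy0, ?_⟩
  -- integer powers of g
  have happly : ∀ (d e : ℤ) (v : EuclideanSpace ℝ (Fin k)),
      (g ^ (d + e)) v = (g ^ d) ((g ^ e) v) := by
    intro d e v
    rw [zpow_add]
    rfl
  have hgnv : ∀ v : EuclideanSpace ℝ (Fin k), (g ^ (n:ℤ)) v = v := by
    intro v
    rw [zpow_natCast, hg]
    rfl
  set cc : ℤ → ℝ := fun d => ⟪y, (g ^ d) y⟫ with hccdef
  have hper : ∀ d : ℤ, cc (d + n) = cc d := by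
    intro d
    simp only [hccdef]
    rw [happly, hgnv]
  have hinner : ∀ i j : ℤ, ⟪(g ^ i) y, (g ^ j) y⟫ = cc (j - i) := by
    intro i j
    have h1 : (g ^ i) ((g ^ (j - i)) y) = (g ^ j) y := by
      rw [← happly]
      have h2 : i + (j - i) = j := by ring
      rw [h2]
    rw [← h1, LinearIsometryEquiv.inner_map_map]
  have hcc0 : cc 0 = ‖y‖ ^ 2 := by
    simp only [hccdef, zpow_zero]
    exact real_inner_self_eq_norm_sq y
  have hcc1 : cc 1 = ⟪y, g y⟫ := by
    simp only [hccdef, zpow_one]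
  have hccsym : cc ((n:ℤ) - 1) = cc 1 := by
    have h1 : ((n:ℤ) - 1) = -1 + n := by ring
    rw [h1, hper (-1)]
    have h2 := hinner 1 0
    simp only [zpow_one, zpow_zero, zero_sub] at h2
    have h3 : ((1 : EuclideanSpace ℝ (Fin k) ≃ₗᵢ[ℝ] EuclideanSpace ℝ (Fin k))) y = y := rfl
    rw [h3] at h2
    rw [← h2, hcc1, real_inner_comm]
  -- the averaged vector is fixed, hence orthogonal to y
  set s : EuclideanSpace ℝ (Fin k) := ∑ i ∈ Finset.range n, (g ^ (i:ℤ)) y with hsdef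
  have hGper : ∀ d : ℤ, (g ^ (d + n)) y = (g ^ d) y := by
    intro d
    rw [happly, hgnv]
  have hgs : g s = s := by
    rw [hsdef, map_sum]
    calc ∑ i ∈ Finset.range n, g ((g ^ (i:ℤ)) y)
        = ∑ i ∈ Finset.range n, (g ^ ((i:ℤ) + 1)) y := by
          refine Finset.sum_congr rfl fun i _ => ?_
          rw [add_comm, happly 1 i, zpow_one]
      _ = ∑ i ∈ Finset.range n, (g ^ (i:ℤ)) y := sum_shift (F := fun d => (g ^ d) y) hGper 1
  have hq0 : ∑ d ∈ Finset.range n, cc (d:ℤ) = 0 := by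
    have h1 : ⟪y, s⟫ = 0 := hcproj s hgs
    rw [hsdef, inner_sum] at h1
    exact h1
  -- Fourier coefficients
  set q : ℕ → ℝ := fun m => ∑ d ∈ Finset.range n, Real.cos (2 * π / n * (m * d)) * cc d with hqdef
  have hqnn : ∀ m : ℕ, 0 ≤ q m := by
    intro m
    set θ : ℝ := 2 * π / n * m with hθ
    set F : ℤ → ℝ := fun d => Real.cos (θ * d) * cc d with hFdef
    have hFper : ∀ d : ℤ, F (d + n) = F d := by
      intro d
      simp only [hFdef]
      rw [hper]
      congr 1
      have h1 : θ * (((d:ℝ)) + n) = θ * d + (m:ℤ) * (2 * π) := by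
        rw [hθ]; push_cast; field_simp
      push_cast
      rw [h1, Real.cos_add_int_mul_two_pi]
    have hqF : q m = ∑ d ∈ Finset.range n, F (d:ℤ) := by
      rw [hqdef]
      refine Finset.sum_congr rfl fun d _ => ?_
      simp only [hFdef]
      congr 2
      rw [hθ]
      push_cast
      ring
    have key : (n:ℝ) * q m = ∑ i ∈ Finset.range n, ∑ j ∈ Finset.range n, F ((j:ℤ) - i) := by
      rw [hqF, ← sum_sub_sum hFper]
    set a : ℕ → ℝ := fun i => Real.cos (θ * i) with hadef
    set b : ℕ → ℝ := fun i => Real.sin (θ * i) with hbdef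
    set w : ℕ → EuclideanSpace ℝ (Fin k) := fun i => (g ^ (i:ℤ)) y with hwdef
    have split : ∑ i ∈ Finset.range n, ∑ j ∈ Finset.range n, F ((j:ℤ) - i)
        = (∑ i ∈ Finset.range n, ∑ j ∈ Finset.range n, a i * a j * ⟪w i, w j⟫)
          + (∑ i ∈ Finset.range n, ∑ j ∈ Finset.range n, b i * b j * ⟪w i, w j⟫) := by
      rw [← Finset.sum_add_distrib]
      refine Finset.sum_congr rfl fun i _ => ?_
      rw [← Finset.sum_add_distrib]
      refine Finset.sum_congr rfl fun j _ => ?_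
      simp only [hwdef]
      rw [hinner]
      simp only [hFdef, hadef, hbdef]
      have hc : (((j:ℤ) - i : ℤ) : ℝ) = (j:ℝ) - i := by push_cast; ring
      rw [hc]
      have h2 : θ * ((j:ℝ) - i) = θ * j - θ * i := by ring
      rw [h2, Real.cos_sub]
      ring
    have h3 : 0 ≤ (n:ℝ) * q m := by
      rw [key, split]
      exact add_nonneg (gram_nonneg n w a) (gram_nonneg n w b)
    nlinarith
  have hq00 : q 0 = 0 := by
    simp only [hqdef, Nat.cast_zero, zero_mul, mul_zero, Real.cos_zero, one_mul]
    exact hq0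
  -- the key identity
  have inner_key : ∀ d ∈ Finset.range n,
      ∑ m ∈ Finset.range n,
        (Real.cos (2 * π / n) - Real.cos (2 * π / n * m)) * Real.cos (2 * π / n * (m * d))
      = (if d = 0 then (n:ℝ) * Real.cos (2 * π / n) else 0)
        - (if d = 1 then (n:ℝ) / 2 else 0) - (if d = n - 1 then (n:ℝ) / 2 else 0) := by
    intro d hd
    rw [Finset.mem_range] at hd
    rcases Nat.eq_zero_or_pos d with hd0 | hd1
    · subst hd0
      have hstep : ∀ m ∈ Finset.range n,
          (Real.cos (2 * π / n) - Real.cos (2 * π / n * m)) * Real.cos (2 * π / n * (m * 0))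
          = Real.cos (2 * π / n) - Real.cos (2 * π / n * (m * ((1:ℕ):ℝ))) := by
        intro m _
        norm_num
      simp only [Nat.cast_zero]
      rw [Finset.sum_congr rfl hstep, Finset.sum_sub_distrib, Finset.sum_const,
        Finset.card_range, cos_sum n hn0 1]
      have hnd1 : ¬ n ∣ 1 := fun h => by have := Nat.le_of_dvd one_pos h; omega
      have h01 : (0:ℕ) ≠ 1 := by omega
      have h0n : (0:ℕ) ≠ n - 1 := by omega
      rw [if_neg hnd1, if_neg h01, if_neg h0n, nsmul_eq_mul]
      norm_num
    · have hsplit : ∀ m ∈ Finset.range n,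
          (Real.cos (2 * π / n) - Real.cos (2 * π / n * m)) * Real.cos (2 * π / n * (m * d))
          = Real.cos (2 * π / n) * Real.cos (2 * π / n * (m * d))
            - (Real.cos (2 * π / n * (m * ((d + 1 : ℕ):ℝ)))
                + Real.cos (2 * π / n * (m * ((d - 1 : ℕ):ℝ)))) / 2 := by
        intro m _
        have hd1' : ((d - 1 : ℕ) : ℝ) = (d:ℝ) - 1 := by
          rw [Nat.cast_sub hd1]
          norm_num
        have e1 : (2 * π / n * (m * ((d + 1 : ℕ):ℝ)) : ℝ)
            = 2 * π / n * (m * d) + 2 * π / n * m := by push_cast; ring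
        have e2 : (2 * π / n * (m * ((d - 1 : ℕ):ℝ)) : ℝ)
            = 2 * π / n * (m * d) - 2 * π / n * m := by rw [hd1']; push_cast; ring
        rw [e1, e2, Real.cos_add, Real.cos_sub]
        ring
      rw [Finset.sum_congr rfl hsplit, Finset.sum_sub_distrib, ← Finset.mul_sum,
        ← Finset.sum_div, Finset.sum_add_distrib, cos_sum n hn0 d, cos_sum n hn0 (d + 1),
        cos_sum n hn0 (d - 1)]
      have hnd : ¬ n ∣ d := fun h => by have := Nat.le_of_dvd hd1 h; omega
      rw [if_neg hnd, if_neg (by omega : d ≠ 0)]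
      rcases eq_or_ne d 1 with h1 | h1
      · subst h1
        have hA : ¬ n ∣ 2 := fun h => by have := Nat.le_of_dvd (by norm_num) h; omega
        have hB : n ∣ 1 - 1 := by simp
        rw [if_neg hA, if_pos hB, if_pos rfl, if_neg (by omega : (1:ℕ) ≠ n - 1)]
        ring
      rcases eq_or_ne d (n - 1) with h2 | h2
      · have hA : n ∣ d + 1 := by
          have : d + 1 = n := by omega
          rw [this]
        have hB : ¬ n ∣ d - 1 := fun h => by
          have hpos : 0 < d - 1 := by omega
          have := Nat.le_of_dvd hpos h
          omega
        rw [if_pos hA, if_neg hB, if_neg h1, if_pos h2]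
        ring
      · have hA : ¬ n ∣ d + 1 := fun h => by
          have := Nat.le_of_dvd (by omega) h
          omega
        have hB : ¬ n ∣ d - 1 := fun h => by
          have hpos : 0 < d - 1 := by omega
          have := Nat.le_of_dvd hpos h
          omega
        rw [if_neg hA, if_neg hB, if_neg h1, if_neg h2]
        ring
  -- summing the identity against cc
  have big : ∑ m ∈ Finset.range n, (Real.cos (2 * π / n) - Real.cos (2 * π / n * m)) * q m
      = (n:ℝ) * (Real.cos (2 * π / n) * cc 0 - cc 1) := by
    have swap : ∑ m ∈ Finset.range n, (Real.cos (2 * π / n) - Real.cos (2 * π / n * m)) * q m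
        = ∑ d ∈ Finset.range n,
            (∑ m ∈ Finset.range n,
              (Real.cos (2 * π / n) - Real.cos (2 * π / n * m)) * Real.cos (2 * π / n * (m * d)))
            * cc d := by
      simp only [hqdef, Finset.mul_sum]
      rw [Finset.sum_comm]
      refine Finset.sum_congr rfl fun d _ => ?_
      rw [Finset.sum_mul]
      refine Finset.sum_congr rfl fun m _ => ?_
      ring
    rw [swap, Finset.sum_congr rfl (fun d hd => by rw [inner_key d hd])]
    simp only [sub_mul, ite_mul, zero_mul]
    rw [Finset.sum_sub_distrib, Finset.sum_sub_distrib, Finset.sum_ite_eq' (Finset.range n),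
      Finset.sum_ite_eq' (Finset.range n), Finset.sum_ite_eq' (Finset.range n)]
    rw [if_pos (Finset.mem_range.mpr hn0), if_pos (Finset.mem_range.mpr (by omega : 1 < n)),
      if_pos (Finset.mem_range.mpr (by omega : n - 1 < n))]
    have hcast : ((n - 1 : ℕ) : ℤ) = (n:ℤ) - 1 := by
      rw [Nat.cast_sub (by omega : 1 ≤ n)]
      norm_num
    rw [hcast, hccsym]
    push_cast
    ring
  have bignn : 0 ≤ ∑ m ∈ Finset.range n,
      (Real.cos (2 * π / n) - Real.cos (2 * π / n * m)) * q m := by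
    apply Finset.sum_nonneg
    intro m hm
    rcases Nat.eq_zero_or_pos m with h0 | h1
    · subst h0
      rw [hq00, mul_zero]
    · apply mul_nonneg
      · have := cos_le_cos_body n m hn h1 (Finset.mem_range.mp hm)
        linarith
      · exact hqnn m
  have main : cc 1 ≤ Real.cos (2 * π / n) * cc 0 := by
    rw [big] at bignn
    by_contra hcon
    push_neg at hcon
    have hneg : (n:ℝ) * (Real.cos (2 * π / n) * cc 0 - cc 1) < 0 :=
      mul_neg_of_pos_of_neg hnR (by linarith)
    linarith
  -- conclude
  have hyn : (0:ℝ) < ‖y‖ := norm_pos_iff.mpr hy0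
  rw [hgyy, g.norm_map, ← hcc1]
  have hy2 : (0:ℝ) < ‖y‖ * ‖y‖ := by positivity
  have hle : cc 1 / (‖y‖ * ‖y‖) ≤ Real.cos (2 * π / n) := by
    rw [div_le_iff₀ hy2]
    have hrw : Real.cos (2 * π / n) * cc 0 = Real.cos (2 * π / n) * (‖y‖ * ‖y‖) := by
      rw [hcc0]; ring
    linarith [main, hrw]
  have hβ1 : (0:ℝ) ≤ 2 * π / n := by positivity
  have hβ2 : 2 * π / (n:ℝ) ≤ π := by
    rw [div_le_iff₀ hnR]
    have h3 : (3:ℝ) ≤ n := by exact_mod_cast hn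
    nlinarith
  calc 2 * π / (n:ℝ) = Real.arccos (Real.cos (2 * π / n)) := (Real.arccos_cos hβ1 hβ2).symm
    _ ≤ Real.arccos (cc 1 / (‖y‖ * ‖y‖)) := by
        rw [Real.arccos_eq_pi_div_two_sub_arcsin, Real.arccos_eq_pi_div_two_sub_arcsin]
        exact sub_le_sub_left (Real.monotone_arcsin hle) _
end

section
/- Let k ≥ 1, n ≥ 3, and let g be a linear isometry of EuclideanSpace ℝ (Fin k) with g^n = id. Then the following are equivalent: (i) there exists x with g x ≠ x such that, writing c for the orthogonal projection of x onto the fixed subspace {v : g v = v}, the angle between x − c and g x − c equals exactly 2π/n; (ii) there exists a 2-dimensional linear subspace P of EuclideanSpace ℝ (Fin k) with g(P) = P on which g acts as a rotation of angle 2π/n, i.e. ⟪g v, v⟫ = cos(2π/n)·‖v‖² for every v ∈ P. -/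
open Real
open scoped RealInnerProductSpace

namespace AngleAuxNN

variable {E : Type*} [NormedAddCommGroup E] [InnerProductSpace ℝ E]

lemma cheb (θ r : ℝ) (c : ℕ → ℝ) (h0 : c 0 = r) (h1 : c 1 = Real.cos θ * r)
    (hrec : ∀ j, c (j + 2) = 2 * Real.cos θ * c (j + 1) - c j) :
    ∀ j, c j = Real.cos (j * θ) * r := by
  have key : ∀ j, c j = Real.cos (j * θ) * r ∧ c (j + 1) = Real.cos ((j + 1 : ℕ) * θ) * r := by
    intro j
    induction j with
    | zero => constructor <;> simp [h0, h1]
    | succ m ih =>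
      refine ⟨ih.2, ?_⟩
      have hc := hrec m
      have e1 : ((m + 2 : ℕ) : ℝ) * θ = ((m : ℝ) + 1) * θ + θ := by push_cast; ring
      have e2 : ((m : ℕ) : ℝ) * θ = ((m : ℝ) + 1) * θ - θ := by push_cast; ring
      have t1 := Real.cos_add (((m : ℝ) + 1) * θ) θ
      have t2 := Real.cos_sub (((m : ℝ) + 1) * θ) θ
      have hm1 : c (m + 1) = Real.cos (((m : ℝ) + 1) * θ) * r := by
        rw [ih.2]; push_cast; ring_nf
      have hm0 : c m = Real.cos (((m : ℝ) + 1) * θ - θ) * r := by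
        rw [ih.1, ← e2]
      rw [show m + 1 + 1 = m + 2 from rfl, hc, e1, t1, hm1, hm0, t2]
      ring
  exact fun j => (key j).1

lemma pow_succ_apply (g : E ≃ₗᵢ[ℝ] E) (j : ℕ) (v : E) :
    (g ^ (j + 1)) v = g ((g ^ j) v) := by
  rw [pow_succ']
  rfl

lemma eig_bound [FiniteDimensional ℝ E] {n : ℕ} (hn : 3 ≤ n)
    (g : E ≃ₗᵢ[ℝ] E) (hg : g ^ n = 1) {μ : ℝ} {v : E} (hv : v ≠ 0)
    (heq : g v + g.symm v = μ • v) :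
    g v = v ∨ μ ≤ 2 * Real.cos (2 * π / n) := by
  have hnorm : 0 < ‖v‖ := norm_pos_iff.mpr hv
  have hrpos : 0 < ‖v‖ ^ 2 := by positivity
  have hsym : ⟪v, g.symm v⟫ = ⟪v, g v⟫ := by
    have h := g.inner_map_map v (g.symm v)
    rw [g.apply_symm_apply] at h
    rw [← h, real_inner_comm]
  have h1 : 2 * ⟪v, g v⟫ = μ * ‖v‖ ^ 2 := by
    have := congrArg (fun w => ⟪v, w⟫) heq
    simp only [inner_add_right, real_inner_smul_right, hsym] at this
    rw [real_inner_self_eq_norm_sq] at this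
    linarith
  have habs : |⟪v, g v⟫| ≤ ‖v‖ ^ 2 := by
    have := abs_real_inner_le_norm v (g v)
    rw [g.norm_map] at this
    nlinarith [this]
  have hmu : |μ| ≤ 2 := by
    rw [abs_le] at habs ⊢
    constructor <;> nlinarith [habs.1, habs.2]
  rw [abs_le] at hmu
  set φ := Real.arccos (μ / 2) with hφ
  have hφcos : Real.cos φ = μ / 2 := Real.cos_arccos (by linarith) (by linarith)
  have hφ0 : 0 ≤ φ := Real.arccos_nonneg _
  have hφπ : φ ≤ π := Real.arccos_le_pi _
  -- base relation
  have base : g (g v) = μ • g v - v := by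
    have := congrArg g heq
    rw [map_add, map_smul, g.apply_symm_apply] at this
    rw [eq_sub_iff_add_eq, this]
  set u : ℕ → E := fun j => (g ^ j) v with hu
  have hu0 : u 0 = v := by simp [hu]
  have hu1 : u 1 = g v := by simp [hu]
  have hstep : ∀ m, u (m + 1) = g (u m) := fun m => pow_succ_apply g m v
  have hcomm : ∀ (j : ℕ) (w : E), g ((g ^ j) w) = (g ^ j) (g w) := by
    intro j w
    rw [← pow_succ_apply, pow_succ]
    rfl
  have base_all : ∀ j, g (g (u j)) = μ • g (u j) - u j := by
    intro j
    have h1' : g (u j) = (g ^ j) (g v) := hcomm j v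
    rw [h1', hcomm j (g v), base, map_sub, map_smul, ← h1']
  have hrecE : ∀ j, u (j + 2) = μ • u (j + 1) - u j := by
    intro j
    rw [show j + 2 = (j + 1) + 1 from rfl, hstep, hstep j, base_all]
  have hcj : ∀ j, ⟪v, u j⟫ = Real.cos (j * φ) * ‖v‖ ^ 2 := by
    refine cheb φ (‖v‖ ^ 2) (fun j => ⟪v, u j⟫) ?_ ?_ ?_
    · show ⟪v, u 0⟫ = ‖v‖ ^ 2
      rw [hu0, real_inner_self_eq_norm_sq]
    · show ⟪v, u 1⟫ = Real.cos φ * ‖v‖ ^ 2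
      rw [hu1, hφcos]; linarith
    · intro j
      show ⟪v, u (j + 2)⟫ = 2 * Real.cos φ * ⟪v, u (j + 1)⟫ - ⟪v, u j⟫
      rw [hrecE j, inner_sub_right, real_inner_smul_right, hφcos]
      ring
  have hun : u n = v := by
    simp only [hu, hg]
    rfl
  have hcosn : Real.cos (n * φ) = 1 := by
    have := hcj n
    rw [hun, real_inner_self_eq_norm_sq] at this
    have h2 := mul_right_cancel₀ (ne_of_gt hrpos) (by linarith [this] : Real.cos (n * φ) * ‖v‖ ^ 2 = 1 * ‖v‖ ^ 2)
    exact h2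
  obtain ⟨m, hm⟩ := (Real.cos_eq_one_iff _).mp hcosn
  rcases eq_or_lt_of_le hφ0 with h0 | hpos
  · -- φ = 0, so μ = 2, and g v = v
    left
    have hμ2 : μ = 2 := by
      have : Real.cos φ = 1 := by rw [← h0, Real.cos_zero]
      rw [hφcos] at this; linarith
    have hinner : ⟪v, g v⟫ = ‖v‖ * ‖g v‖ := by
      rw [g.norm_map]
      nlinarith [h1]
    have := inner_eq_norm_mul_iff_real.mp hinner
    rw [g.norm_map] at this
    have h3 : ‖v‖ • (g v) = ‖v‖ • v := by rw [← this]
    have := smul_right_injective E (ne_of_gt hnorm) h3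
    exact this
  · -- φ > 0, so 2π/n ≤ φ
    right
    have hπ := Real.pi_pos
    have hnR : (0:ℝ) < n := by positivity
    have hm1 : (1:ℝ) ≤ (m:ℝ) := by
      have hnφ : (0:ℝ) < (n:ℝ) * φ := mul_pos hnR hpos
      have hmpos : (0:ℝ) < (m:ℝ) := by nlinarith [hm, hπ]
      have : (0:ℤ) < m := by exact_mod_cast hmpos
      have : (1:ℤ) ≤ m := by omega
      exact_mod_cast this
    have hφge : 2 * π / n ≤ φ := by
      rw [div_le_iff₀ hnR]
      have h2 : 2 * π ≤ (m:ℝ) * (2 * π) := le_mul_of_one_le_left (by positivity) hm1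
      linarith [hm, h2]
    have := Real.cos_le_cos_of_nonneg_of_le_pi (by positivity) hφπ hφge
    rw [hφcos] at this
    linarith

lemma key [FiniteDimensional ℝ E] {n : ℕ} (hn : 3 ≤ n)
    (g : E ≃ₗᵢ[ℝ] E) (hg : g ^ n = 1) (y : E)
    (hperp : ∀ v, g v = v → ⟪y, v⟫ = 0)
    (hang : ⟪y, g y⟫ = Real.cos (2 * π / n) * ‖y‖ ^ 2) :
    g (g y) = (2 * Real.cos (2 * π / n)) • g y - y := by
  set c : ℝ := Real.cos (2 * π / n) with hc
  set T : E →ₗ[ℝ] E :=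
    (g.toLinearEquiv : E →ₗ[ℝ] E) + (g.symm.toLinearEquiv : E →ₗ[ℝ] E) with hTdef
  have hTapp : ∀ w, T w = g w + g.symm w := by
    intro w
    simp [hTdef]
  have hT : T.IsSymmetric := by
    intro w z
    rw [hTapp, hTapp]
    have e1 : ⟪g w, z⟫ = ⟪w, g.symm z⟫ := by
      have h := g.inner_map_map w (g.symm z)
      rw [g.apply_symm_apply] at h
      exact h
    have e2 : ⟪g.symm w, z⟫ = ⟪w, g z⟫ := by
      have h := g.inner_map_map (g.symm w) z
      rw [g.apply_symm_apply] at h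
      exact h.symm
    rw [inner_add_left, inner_add_right, e1, e2]
    ring
  set b := hT.eigenvectorBasis rfl with hb
  set μ := hT.eigenvalues (rfl : Module.finrank ℝ E = Module.finrank ℝ E) with hμ
  have heig : ∀ i, T (b i) = μ i • b i := fun i => hT.apply_eigenvectorBasis rfl i
  have hbnz : ∀ i, b i ≠ 0 := fun i => b.orthonormal.ne_zero i
  have hdisj : ∀ i, g (b i) = b i ∨ μ i ≤ 2 * c := by
    intro i
    refine eig_bound hn g hg (hbnz i) ?_
    rw [← hTapp, heig i]
  have hTy : ∀ i, ⟪b i, T y⟫ = μ i * ⟪b i, y⟫ := by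
    intro i
    rw [← hT (b i) y, heig i, real_inner_smul_left]
  have hyTy : ⟪y, T y⟫ = ∑ i, μ i * ⟪b i, y⟫ ^ 2 := by
    rw [← b.sum_inner_mul_inner y (T y)]
    refine Finset.sum_congr rfl fun i _ => ?_
    rw [hTy i, real_inner_comm y (b i)]
    ring
  have hyTy2 : ⟪y, T y⟫ = 2 * c * ‖y‖ ^ 2 := by
    rw [hTapp]
    have hsym : ⟪y, g.symm y⟫ = ⟪y, g y⟫ := by
      have h := g.inner_map_map y (g.symm y)
      rw [g.apply_symm_apply] at h
      rw [← h, real_inner_comm]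
    rw [inner_add_right, hsym, hang]
    ring
  have hnorm : ‖y‖ ^ 2 = ∑ i, ⟪b i, y⟫ ^ 2 := by
    rw [← real_inner_self_eq_norm_sq, ← b.sum_inner_mul_inner y y]
    refine Finset.sum_congr rfl fun i _ => ?_
    rw [real_inner_comm y (b i)]
    ring
  have hterm : ∀ i ∈ Finset.univ, (0:ℝ) ≤ 2 * c * ⟪b i, y⟫ ^ 2 - μ i * ⟪b i, y⟫ ^ 2 := by
    intro i _
    rcases hdisj i with hfix | hle
    · have h0 : ⟪b i, y⟫ = 0 := by
        rw [real_inner_comm]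
        exact hperp (b i) hfix
      rw [h0]
      ring_nf
      exact le_refl 0
    · nlinarith [sq_nonneg (⟪b i, y⟫ : ℝ)]
  have hsumzero : ∑ i, (2 * c * ⟪b i, y⟫ ^ 2 - μ i * ⟪b i, y⟫ ^ 2) = 0 := by
    rw [Finset.sum_sub_distrib, ← Finset.mul_sum, ← hnorm, ← hyTy, hyTy2]
    ring
  have heach : ∀ i, μ i * ⟪b i, y⟫ = 2 * c * ⟪b i, y⟫ := by
    intro i
    have h0 := (Finset.sum_eq_zero_iff_of_nonneg hterm).mp hsumzero i (Finset.mem_univ i)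
    have h1 : (2 * c - μ i) * (⟪b i, y⟫ * ⟪b i, y⟫) = 0 := by nlinarith [h0]
    rcases mul_eq_zero.mp h1 with h2 | h2
    · nlinarith
    · rw [mul_self_eq_zero.mp h2]
      ring
  have hTyy : T y = (2 * c) • y := by
    apply b.repr.injective
    ext i
    rw [b.repr_apply_apply, hTy i, map_smul]
    have : ((2 * c) • b.repr y) i = 2 * c * b.repr y i := rfl
    rw [this, b.repr_apply_apply, heach i]
  have hfin : g y + g.symm y = (2 * c) • y := by rw [← hTapp, hTyy]
  have hlast := congrArg g hfin
  rw [map_add, map_smul, g.apply_symm_apply] at hlast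
  rw [eq_sub_iff_add_eq, hlast]

end AngleAuxNN

set_option maxHeartbeats 1000000 in
open AngleAuxNN in
/-- For a finite-order orthogonal transformation of `ℝᵏ` with order `n ≥ 3`, the lower
bound `2π/n` on the turning angle is achieved at some non-fixed point (measured at its
orthogonal projection onto the fixed subspace) if and only if there is a `2`-dimensional
invariant subspace on which `g` acts as a rotation of angle `2π/n`. -/
theorem angle_eq_two_pi_div_order_iff_invariant_plane
    (k : ℕ) (hk : 1 ≤ k) (n : ℕ) (hn : 3 ≤ n)
    (g : EuclideanSpace ℝ (Fin k) ≃ₗᵢ[ℝ] EuclideanSpace ℝ (Fin k)) (hg : g ^ n = 1) :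
    (∃ x : EuclideanSpace ℝ (Fin k), g x ≠ x ∧
      ∃ c : EuclideanSpace ℝ (Fin k), g c = c ∧
        (∀ v : EuclideanSpace ℝ (Fin k), g v = v → ⟪x - c, v⟫ = 0) ∧
        Real.arccos (⟪x - c, g x - c⟫ / (‖x - c‖ * ‖g x - c‖)) = 2 * π / n) ↔
    (∃ P : Submodule ℝ (EuclideanSpace ℝ (Fin k)), Module.finrank ℝ P = 2 ∧
      P.map (g.toLinearEquiv : EuclideanSpace ℝ (Fin k) →ₗ[ℝ] EuclideanSpace ℝ (Fin k)) = P ∧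
      ∀ v ∈ P, ⟪g v, v⟫ = Real.cos (2 * π / n) * ‖v‖ ^ 2) := by
  have hπ := Real.pi_pos
  have hn3 : (3:ℝ) ≤ (n:ℝ) := by exact_mod_cast hn
  have hnR : (0:ℝ) < (n:ℝ) := by linarith
  set θ : ℝ := 2 * π / n with hθ
  have hθpos : 0 < θ := by rw [hθ]; positivity
  have hθlt : θ < π := by
    rw [hθ, div_lt_iff₀ hnR]
    nlinarith
  have hclt : Real.cos θ < 1 := by
    have h := Real.cos_lt_cos_of_nonneg_of_le_pi (le_refl (0:ℝ)) hθlt.le hθpos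
    rwa [Real.cos_zero] at h
  have hcgt : -1 < Real.cos θ := by
    have h := Real.cos_lt_cos_of_nonneg_of_le_pi hθpos.le (le_refl π) hθlt
    rwa [Real.cos_pi] at h
  constructor
  · rintro ⟨x, hgx, c0, hgc0, hperp, hang⟩
    set y := x - c0 with hy
    have hgy : g y = g x - c0 := by rw [hy, map_sub, hgc0]
    have hyne : y ≠ 0 := by
      intro h
      apply hgx
      have hxc : x = c0 := by rwa [hy, sub_eq_zero] at h
      rw [hxc, hgc0]
    have hny : (0:ℝ) < ‖y‖ := norm_pos_iff.mpr hyne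
    have hrpos : (0:ℝ) < ‖y‖ ^ 2 := by positivity
    have hnormgy : ‖g y‖ = ‖y‖ := g.norm_map y
    have hInner : ⟪y, g y⟫ = Real.cos θ * ‖y‖ ^ 2 := by
      rw [← hgy] at hang
      have hden2 : (0:ℝ) < ‖y‖ * ‖g y‖ := by rw [hnormgy]; positivity
      have habs := abs_real_inner_le_norm y (g y)
      have ht1 : ⟪y, g y⟫ / (‖y‖ * ‖g y‖) ≤ 1 := by
        rw [div_le_one hden2]
        exact le_trans (le_abs_self _) habs
      have ht2 : -1 ≤ ⟪y, g y⟫ / (‖y‖ * ‖g y‖) := by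
        rw [le_div_iff₀ hden2]
        have := neg_abs_le (⟪y, g y⟫ : ℝ)
        linarith
      have hcosval := congrArg Real.cos hang
      rw [Real.cos_arccos ht2 ht1] at hcosval
      rw [div_eq_iff (ne_of_gt hden2)] at hcosval
      rw [hcosval, hnormgy]
      ring
    have hrel := key hn g hg y hperp hInner
    have f1 : ⟪y, y⟫ = ‖y‖ ^ 2 := real_inner_self_eq_norm_sq y
    have f2 : ⟪g y, g y⟫ = ‖y‖ ^ 2 := by rw [g.inner_map_map]; exact f1
    have f3 : ⟪y, g y⟫ = Real.cos θ * ‖y‖ ^ 2 := hInner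
    have f4 : ⟪g y, y⟫ = Real.cos θ * ‖y‖ ^ 2 := by rw [real_inner_comm]; exact f3
    have hLI : LinearIndependent ℝ ![y, g y] := by
      rw [LinearIndependent.pair_iff]
      intro s t hst
      have h1 := congrArg (fun w => (⟪y, w⟫ : ℝ)) hst
      have h2 := congrArg (fun w => (⟪g y, w⟫ : ℝ)) hst
      simp only [inner_add_right, real_inner_smul_right, inner_zero_right] at h1 h2
      rw [f1, f3] at h1
      rw [f4, f2] at h2
      have hc2 : (0:ℝ) < 1 - Real.cos θ ^ 2 := by nlinarith
      constructor <;> nlinarith [mul_pos hrpos hc2]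
    have hrange : Set.range ![y, g y] = {y, g y} := by
      ext z
      simp [Fin.exists_fin_two, or_comm]
    refine ⟨Submodule.span ℝ ({y, g y} : Set (EuclideanSpace ℝ (Fin k))), ?_, ?_, ?_⟩
    · rw [← hrange, finrank_span_eq_card hLI]
      simp
    · rw [Submodule.map_span]
      have himg : (g.toLinearEquiv : EuclideanSpace ℝ (Fin k) →ₗ[ℝ] EuclideanSpace ℝ (Fin k)) ''
          {y, g y} = {g y, g (g y)} := by
        rw [Set.image_insert_eq, Set.image_singleton]
        simp
      rw [himg]
      apply le_antisymm
      · rw [Submodule.span_le, Set.insert_subset_iff, Set.singleton_subset_iff]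
        refine ⟨Submodule.subset_span (by simp), ?_⟩
        rw [hrel]
        exact Submodule.sub_mem _
          (Submodule.smul_mem _ _ (Submodule.subset_span (by simp)))
          (Submodule.subset_span (by simp))
      · rw [Submodule.span_le, Set.insert_subset_iff, Set.singleton_subset_iff]
        constructor
        · refine Submodule.mem_span_pair.mpr ⟨2 * Real.cos θ, -1, ?_⟩
          rw [hrel]
          simp only [neg_smul, one_smul]
          abel
        · exact Submodule.subset_span (by simp)
    · intro v hv
      obtain ⟨s, t, hst⟩ := Submodule.mem_span_pair.mp hv
      rw [← hst, ← real_inner_self_eq_norm_sq]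
      simp only [map_add, map_smul, hrel, inner_add_left, inner_add_right, inner_sub_left,
        inner_sub_right, real_inner_smul_left, real_inner_smul_right, smul_sub, smul_smul]
      rw [f1, f2, f3, f4]
      ring
  · rintro ⟨P, hfin, hmap, hrot⟩
    have hPne : P ≠ ⊥ := by
      intro h
      rw [h] at hfin
      simp at hfin
    obtain ⟨x, hxP, hxne⟩ := Submodule.exists_mem_ne_zero_of_ne_bot hPne
    have hstep : ∀ w ∈ P, g w ∈ P := by
      intro w hw
      have h1 : (g.toLinearEquiv : EuclideanSpace ℝ (Fin k) →ₗ[ℝ] EuclideanSpace ℝ (Fin k)) w ∈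
          P.map (g.toLinearEquiv : EuclideanSpace ℝ (Fin k) →ₗ[ℝ] EuclideanSpace ℝ (Fin k)) :=
        Submodule.mem_map_of_mem hw
      rw [hmap] at h1
      exact h1
    have hxnorm : (0:ℝ) < ‖x‖ := norm_pos_iff.mpr hxne
    have hrpos : (0:ℝ) < ‖x‖ ^ 2 := by positivity
    have hgxP : g x ∈ P := hstep x hxP
    have f1 : ⟪g x, x⟫ = Real.cos θ * ‖x‖ ^ 2 := hrot x hxP
    have f2 : ⟪x, g x⟫ = Real.cos θ * ‖x‖ ^ 2 := by rw [real_inner_comm]; exact f1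
    have f3 : ⟪g x, g x⟫ = ‖x‖ ^ 2 := by
      rw [g.inner_map_map]
      exact real_inner_self_eq_norm_sq x
    have f0 : ⟪x, x⟫ = ‖x‖ ^ 2 := real_inner_self_eq_norm_sq x
    have f6 : ⟪g (g x), g x⟫ = Real.cos θ * ‖x‖ ^ 2 := by
      rw [g.inner_map_map]
      exact f1
    have f9 : ⟪g (g x), g (g x)⟫ = ‖x‖ ^ 2 := by
      rw [g.inner_map_map]
      exact f3
    have f10 : ⟪g x, g (g x)⟫ = Real.cos θ * ‖x‖ ^ 2 := by
      rw [g.inner_map_map]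
      exact f2
    have hsumP : x + g x ∈ P := Submodule.add_mem _ hxP hgxP
    have hpol := hrot (x + g x) hsumP
    rw [map_add, ← real_inner_self_eq_norm_sq] at hpol
    simp only [inner_add_left, inner_add_right] at hpol
    rw [f0, f1, f2, f3, f6] at hpol
    have f7 : ⟪g (g x), x⟫ = (2 * Real.cos θ ^ 2 - 1) * ‖x‖ ^ 2 := by nlinarith [hpol]
    have f8 : ⟪x, g (g x)⟫ = (2 * Real.cos θ ^ 2 - 1) * ‖x‖ ^ 2 := by
      rw [real_inner_comm]; exact f7
    have hw : (⟪g (g x) - ((2 * Real.cos θ) • g x - x),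
        g (g x) - ((2 * Real.cos θ) • g x - x)⟫ : ℝ) = 0 := by
      simp only [inner_sub_left, inner_sub_right, real_inner_smul_left, real_inner_smul_right]
      rw [f0, f1, f2, f3, f6, f7, f8, f9, f10]
      ring
    have hrel : g (g x) = (2 * Real.cos θ) • g x - x := by
      have := inner_self_eq_zero.mp hw
      exact sub_eq_zero.mp this
    have hjP : ∀ j : ℕ, (g ^ j) x ∈ P := by
      intro j
      induction j with
      | zero => simpa using hxP
      | succ m ih =>
        rw [AngleAuxNN.pow_succ_apply]
        exact hstep _ ih
    set S : EuclideanSpace ℝ (Fin k) := ∑ j ∈ Finset.range n, (g ^ j) x with hS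
    have hgS : g S = S := by
      rw [hS, map_sum]
      have h1 : ∀ j ∈ Finset.range n, g ((g ^ j) x) = (g ^ (j + 1)) x :=
        fun j _ => (AngleAuxNN.pow_succ_apply g j x).symm
      rw [Finset.sum_congr rfl h1]
      have h2 := Finset.sum_range_succ' (fun j => (g ^ j) x) n
      have h3 := Finset.sum_range_succ (fun j => (g ^ j) x) n
      have hun : (g ^ n) x = (g ^ 0) x := by
        rw [hg, pow_zero]
      rw [hun] at h3
      have h4 : ∑ j ∈ Finset.range n, (g ^ (j + 1)) x + (g ^ 0) x
          = ∑ j ∈ Finset.range n, (g ^ j) x + (g ^ 0) x := by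
        rw [← h2, h3]
      exact add_right_cancel h4
    have hSP : S ∈ P := Submodule.sum_mem _ fun j _ => hjP j
    have hS0 : S = 0 := by
      have h := hrot S hSP
      rw [hgS, real_inner_self_eq_norm_sq] at h
      have h2 : ‖S‖ ^ 2 = 0 := by nlinarith [sq_nonneg ‖S‖]
      rw [pow_eq_zero_iff (two_ne_zero), norm_eq_zero] at h2
      exact h2
    have hfixinner : ∀ v, g v = v → (⟪x, v⟫ : ℝ) = 0 := by
      intro v hv
      have hpow : ∀ j : ℕ, (g ^ j) v = v := by
        intro j
        induction j with
        | zero => simp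
        | succ m ih => rw [AngleAuxNN.pow_succ_apply, ih, hv]
      have hSv : (⟪S, v⟫ : ℝ) = n * ⟪x, v⟫ := by
        rw [hS, sum_inner]
        have h1 : ∀ j ∈ Finset.range n, (⟪(g ^ j) x, v⟫ : ℝ) = ⟪x, v⟫ := by
          intro j _
          have h2 : (⟪(g ^ j) x, v⟫ : ℝ) = ⟪(g ^ j) x, (g ^ j) v⟫ := by rw [hpow j]
          rw [h2, (g ^ j).inner_map_map]
        rw [Finset.sum_congr rfl h1, Finset.sum_const, Finset.card_range, nsmul_eq_mul]
      rw [hS0, inner_zero_left] at hSv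
      have hnne : (n:ℝ) ≠ 0 := ne_of_gt hnR
      exact (mul_eq_zero.mp hSv.symm).resolve_left hnne
    have hgxne : g x ≠ x := by
      intro h
      rw [h, f0] at f1
      nlinarith
    refine ⟨x, hgxne, 0, map_zero g, ?_, ?_⟩
    · intro v hv
      rw [sub_zero]
      exact hfixinner v hv
    · rw [sub_zero, sub_zero]
      have hq : (⟪x, g x⟫ : ℝ) / (‖x‖ * ‖g x‖) = Real.cos θ := by
        rw [f2, g.norm_map, ← pow_two, mul_div_assoc, div_self (ne_of_gt hrpos), mul_one]
      rw [hq, Real.arccos_cos hθpos.le hθlt.le]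
end

section
/- Let E be a real Hilbert space, n ≥ 3, g : E ≃ᵢ E a surjective isometry with g^n = id, x ∈ E with g x ≠ x, and c a circumcenter of the orbit {g^i x : 0 ≤ i < n}. Suppose ∠(x, c, g x) = 2π/n. Then there exists a 2-dimensional linear subspace P ⊆ E such that for every i: g^i x ∈ c + P, ‖g^i x − c‖ = ‖x − c‖, and ⟪g^{i+1} x − c, g^i x − c⟫ = cos(2π/n)·‖x − c‖². Moreover the map v ↦ g(c + v) − c is a linear isometry of E that maps P onto P and satisfies ⟪g(c + v) − c, v⟫ = cos(2π/n)·‖v‖² for all v ∈ P; that is, the orbit consists of the vertices of a planar regular n-gon centered at c, and g rotates the 2-flat c + P by angle 2π/n. -/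
open Real
open scoped RealInnerProductSpace

lemma sum_cos_two_pi_div (n : ℕ) (hn : 2 ≤ n) :
    ∑ k ∈ Finset.range n, Real.cos (k * (2 * π / n)) = 0 := by
  have hn0 : (n:ℝ) ≠ 0 := by positivity
  set z : ℂ := Complex.exp ((2 * π / n : ℝ) * Complex.I) with hz
  have hz1 : z ≠ 1 := by
    rw [hz, Ne, Complex.exp_eq_one_iff]
    rintro ⟨m, hm⟩
    have him := congrArg Complex.im hm
    simp [Complex.ofReal_mul, Complex.ofReal_div] at him
    have hπ := Real.pi_pos
    have hnr : (2:ℝ) ≤ n := by exact_mod_cast hn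
    rcases le_or_gt 1 (m:ℝ) with h | h
    · have : (2 * π / n) < 2 * π := by
        rw [div_lt_iff₀ (by positivity)]
        nlinarith
      nlinarith
    · have hm0 : (m:ℝ) ≤ 0 := by
        have : m < 1 := by exact_mod_cast h
        have : m ≤ 0 := by omega
        exact_mod_cast this
      have : 0 < 2 * π / n := by positivity
      nlinarith
  have hzn : z ^ n = 1 := by
    rw [hz, ← Complex.exp_nat_mul]
    have hnc : (n:ℂ) ≠ 0 := by
      simp only [Ne, Nat.cast_eq_zero]; omega
    rw [show (n:ℂ) * ((2 * π / n : ℝ) * Complex.I) = 2 * π * Complex.I by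
      push_cast; field_simp]
    exact Complex.exp_two_pi_mul_I
  have hsum : ∑ k ∈ Finset.range n, z ^ k = 0 := by
    rw [geom_sum_eq hz1, hzn]
    simp
  have hre : ∀ k : ℕ, (z ^ k).re = Real.cos (k * (2 * π / n)) := by
    intro k
    rw [hz, ← Complex.exp_nat_mul, show (k:ℂ) * ((2 * π / n : ℝ) * Complex.I)
      = ((k * (2 * π / n) : ℝ) : ℂ) * Complex.I by push_cast; ring]
    exact Complex.exp_ofReal_mul_I_re _
  calc ∑ k ∈ Finset.range n, Real.cos (k * (2 * π / n))
      = (∑ k ∈ Finset.range n, z ^ k).re := by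
        rw [Complex.re_sum]
        exact (Finset.sum_congr rfl fun k _ => (hre k).symm)
    _ = 0 := by rw [hsum]; rfl

lemma inner_ge_cs {E : Type*} [NormedAddCommGroup E] [InnerProductSpace ℝ E]
    (u v w : E) (hu : ‖u‖ = 1) (hv : ‖v‖ = 1) (hw : ‖w‖ = 1) :
    ⟪u,v⟫ * ⟪v,w⟫ - √(1 - ⟪u,v⟫^2) * √(1 - ⟪v,w⟫^2) ≤ ⟪u,w⟫ := by
  have h1 : ‖u - ⟪u,v⟫ • v‖^2 = 1 - ⟪u,v⟫^2 := by
    rw [norm_sub_sq_real, real_inner_smul_right, norm_smul]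
    simp [hu, hv]
    ring
  have h2 : ‖w - ⟪v,w⟫ • v‖^2 = 1 - ⟪v,w⟫^2 := by
    rw [norm_sub_sq_real, real_inner_smul_right, norm_smul]
    simp [hw, hv, real_inner_comm w v]
    ring
  have key : ⟪u - ⟪u,v⟫ • v, w - ⟪v,w⟫ • v⟫ = ⟪u,w⟫ - ⟪u,v⟫*⟪v,w⟫ := by
    simp only [inner_sub_left, inner_sub_right, real_inner_smul_left, real_inner_smul_right]
    have hvv : ⟪v,v⟫ = 1 := by rw [real_inner_self_eq_norm_sq, hv]; norm_num
    rw [hvv, real_inner_comm v u, real_inner_comm w v]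
    ring
  have cs : -(‖u - ⟪u,v⟫ • v‖ * ‖w - ⟪v,w⟫ • v‖) ≤ ⟪u - ⟪u,v⟫ • v, w - ⟪v,w⟫ • v⟫ := by
    have h := abs_real_inner_le_norm (u - ⟪u,v⟫ • v) (w - ⟪v,w⟫ • v)
    have h2 := neg_abs_le ⟪u - ⟪u,v⟫ • v, w - ⟪v,w⟫ • v⟫
    linarith
  have e1 : ‖u - ⟪u,v⟫ • v‖ = √(1 - ⟪u,v⟫^2) := by
    rw [← h1, Real.sqrt_sq (norm_nonneg _)]
  have e2 : ‖w - ⟪v,w⟫ • v‖ = √(1 - ⟪v,w⟫^2) := by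
    rw [← h2, Real.sqrt_sq (norm_nonneg _)]
  rw [key, e1, e2] at cs
  linarith

lemma dist_midpoint_sq' {E : Type*} [NormedAddCommGroup E] [InnerProductSpace ℝ E]
    (a b p : E) :
    dist (midpoint ℝ a b) p ^ 2 = (dist a p ^2 + dist b p ^2)/2 - dist a b ^2 / 4 := by
  have hpl := parallelogram_law_with_norm ℝ (a - p) (b - p)
  have hm : midpoint ℝ a b - p = (2:ℝ)⁻¹ • ((a - p) + (b - p)) := by
    rw [midpoint_eq_smul_add, invOf_eq_inv]
    module
  have h2 : a - p - (b - p) = a - b := by abel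
  rw [dist_eq_norm, dist_eq_norm a p, dist_eq_norm b p, dist_eq_norm a b, hm, norm_smul]
  rw [h2] at hpl
  have hn : ‖((2:ℝ)⁻¹ : ℝ)‖ = 2⁻¹ := by norm_num
  rw [hn]
  nlinarith [hpl, norm_nonneg ((a-p)+(b-p))]

set_option maxHeartbeats 1000000 in
/-- Equality case: if an elliptic isometry of finite order `n ≥ 3` of a real Hilbert
space turns a non-fixed point `x` by exactly `2π/n` at the circumcenter `c` of its
orbit, then the orbit consists of the vertices of a planar regular `n`-gon centered at
`c`, and `g` rotates the `2`-flat `c + P` by angle `2π/n`. -/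
theorem orbit_regular_ngon_of_angle_eq
    {E : Type*} [NormedAddCommGroup E] [InnerProductSpace ℝ E] [CompleteSpace E]
    (n : ℕ) (hn : 3 ≤ n) (g : E ≃ᵢ E) (hg : g ^ n = 1)
    (x : E) (hx : g x ≠ x) (c : E)
    (hc : ∀ y : E,
      (⨆ i : Fin n, dist c ((g ^ (i : ℕ)) x)) ≤ ⨆ i : Fin n, dist y ((g ^ (i : ℕ)) x))
    (hangle : EuclideanGeometry.angle x c (g x) = 2 * π / n) :
    ∃ P : Submodule ℝ E, Module.finrank ℝ P = 2 ∧
      (∀ i : ℕ, (g ^ i) x - c ∈ P ∧ ‖(g ^ i) x - c‖ = ‖x - c‖ ∧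
        ⟪(g ^ (i + 1)) x - c, (g ^ i) x - c⟫ = Real.cos (2 * π / n) * ‖x - c‖ ^ 2) ∧
      ∃ L : E ≃ₗᵢ[ℝ] E, (∀ v : E, L v = g (c + v) - c) ∧
        P.map (L.toLinearEquiv : E →ₗ[ℝ] E) = P ∧
        ∀ v ∈ P, ⟪g (c + v) - c, v⟫ = Real.cos (2 * π / n) * ‖v‖ ^ 2 := by
  have hn0 : 0 < n := by omega
  have hnem : Nonempty (Fin n) := ⟨⟨0, hn0⟩⟩
  have hπ : 0 < π := Real.pi_pos
  have hnr : (3:ℝ) ≤ n := by exact_mod_cast hn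
  set θ : ℝ := 2 * π / n with hθdef
  have hθpos : 0 < θ := by positivity
  have hθlt : θ < π := by
    rw [hθdef, div_lt_iff₀ (by positivity)]
    nlinarith
  clear_value θ
  -- the orbit
  have hqs : ∀ i : ℕ, (g ^ (i+1)) x = g ((g ^ i) x) := by
    intro i; rw [pow_succ']; rfl
  have hqmod : ∀ i : ℕ, (g ^ i) x = (g ^ (i % n)) x := by
    intro i
    conv_lhs => rw [show i = n * (i / n) + i % n from (Nat.div_add_mod i n).symm]
    rw [pow_add, pow_mul, hg, one_pow]
    rfl
  have hqn : (g ^ n) x = x := by rw [hg]; rfl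
  -- sup facts
  have hbdd : ∀ y : E, BddAbove (Set.range fun i : Fin n => dist y ((g ^ (i:ℕ)) x)) :=
    fun y => (Set.finite_range _).bddAbove
  set R : ℝ := ⨆ i : Fin n, dist c ((g ^ (i:ℕ)) x) with hR
  have hRle : ∀ i : Fin n, dist c ((g ^ (i:ℕ)) x) ≤ R := fun i => le_ciSup (hbdd c) i
  have hmax : ∀ y : E, ∃ i : Fin n, R ≤ dist y ((g ^ (i:ℕ)) x) := by
    intro y
    obtain ⟨i, hi⟩ := Finite.exists_max (fun i : Fin n => dist y ((g ^ (i:ℕ)) x))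
    exact ⟨i, le_trans (hc y) (ciSup_le hi)⟩
  clear_value R
  -- g fixes the circumcenter
  have hgc : g c = c := by
    by_contra hne
    have hub : ∀ i : Fin n, dist (g c) ((g ^ (i:ℕ)) x) ≤ R := by
      intro i
      obtain ⟨j, hj⟩ : ∃ j : Fin n, g ((g ^ (j:ℕ)) x) = (g ^ (i:ℕ)) x := by
        cases h : (i:ℕ) with
        | zero =>
          refine ⟨⟨n-1, by omega⟩, ?_⟩
          rw [← hqs, show n-1+1 = n by omega, hqn]
          rw [pow_zero]; rfl
        | succ k =>
          refine ⟨⟨k, by have := i.isLt; omega⟩, ?_⟩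
          rw [← hqs]
      calc dist (g c) ((g ^ (i:ℕ)) x) = dist (g c) (g ((g ^ (j:ℕ)) x)) := by rw [hj]
        _ = dist c ((g ^ (j:ℕ)) x) := g.dist_eq _ _
        _ ≤ R := hRle j
    obtain ⟨i, hi⟩ := hmax (midpoint ℝ c (g c))
    have hpar := dist_midpoint_sq' c (g c) ((g ^ (i:ℕ)) x)
    have hd : 0 < dist c (g c) := dist_pos.2 fun h => hne h.symm
    have hR0 : 0 ≤ R := le_trans dist_nonneg (hRle ⟨0, hn0⟩)
    have hsq : R^2 ≤ dist (midpoint ℝ c (g c)) ((g ^ (i:ℕ)) x) ^ 2 :=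
      pow_le_pow_left₀ hR0 hi 2
    have h1 := hRle i
    have h2 := hub i
    have ha2 : dist c ((g ^ (i:ℕ)) x)^2 ≤ R^2 := by nlinarith [dist_nonneg (x := c) (y := (g ^ (i:ℕ)) x)]
    have hb2 : dist (g c) ((g ^ (i:ℕ)) x)^2 ≤ R^2 := by nlinarith [dist_nonneg (x := g c) (y := (g ^ (i:ℕ)) x)]
    nlinarith [hd]
  -- x ≠ c
  have hxc : x ≠ c := by
    intro h
    apply hx
    rw [h, hgc, ← h]
  -- the linear isometry L
  have hf0 : ((IsometryEquiv.addRight c).trans (g.trans (IsometryEquiv.addRight (-c)))) 0 = 0 := by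
    simp [IsometryEquiv.trans_apply, hgc]
  set L : E ≃ₗᵢ[ℝ] E :=
    IsometryEquiv.toRealLinearIsometryEquivOfMapZero _ hf0 with hLdef
  have hL : ∀ v : E, L v = g (c + v) - c := by
    intro v
    rw [hLdef, IsometryEquiv.coe_toRealLinearIsometryEquivOfMapZero]
    simp [IsometryEquiv.trans_apply, sub_eq_add_neg, add_comm]
  -- the centered orbit
  set u : ℕ → E := fun k => (g ^ k) x - c with hu
  have hu0 : u 0 = x - c := by rw [hu]; simp
  have hLu : ∀ k, L (u k) = u (k+1) := by
    intro k
    rw [hL, hu]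
    simp only
    rw [add_sub_cancel, hqs]
  have hun : u n = u 0 := by rw [hu]; simp [hqn]
  clear_value L
  set r : ℝ := ‖x - c‖ with hr
  have hrpos : 0 < r := by
    rw [hr, norm_pos_iff, sub_ne_zero]
    exact hxc
  clear_value u r
  have hnorm : ∀ k, ‖u k‖ = r := by
    intro k
    induction k with
    | zero => rw [hu0, hr]
    | succ k ih => rw [← hLu, L.norm_map, ih]
  have hinner_succ : ∀ j k, ⟪u (j+1), u (k+1)⟫ = ⟪u j, u k⟫ := by
    intro j k
    rw [← hLu, ← hLu, LinearIsometryEquiv.inner_map_map]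
  have hinner_shift : ∀ i j k, ⟪u (j+i), u (k+i)⟫ = ⟪u j, u k⟫ := by
    intro i
    induction i with
    | zero => intro j k; rfl
    | succ i ih =>
      intro j k
      rw [show j + (i+1) = (j+i) + 1 by omega, show k + (i+1) = (k+i) + 1 by omega,
        hinner_succ, ih]
  -- the angle condition
  have hangle' : ⟪u 1, u 0⟫ = Real.cos θ * r^2 := by
    have h1 : InnerProductGeometry.angle (x - c) (g x - c) = θ := by
      rw [← hangle]
      rfl
    have h2 := InnerProductGeometry.cos_angle (x - c) (g x - c)
    rw [h1] at h2
    have h3 : ‖g x - c‖ = r := by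
      have := hnorm 1
      rw [hu] at this
      simpa [pow_one] using this
    rw [← hr, h3] at h2
    have h6 : ⟪x - c, g x - c⟫ = Real.cos θ * r^2 := by
      have h7 : Real.cos θ * (r*r) = ⟪x - c, g x - c⟫ / (r*r) * (r*r) := by rw [h2]
      rw [div_mul_cancel₀ _ (by positivity : (r*r) ≠ 0)] at h7
      rw [← h7]; ring
    have h5 : u 1 = g x - c := by rw [hu]; simp [pow_one]
    rw [h5, hu0, real_inner_comm]
    exact h6
  
  -- all points at distance r
  have hdist : ∀ i : Fin n, dist c ((g ^ (i:ℕ)) x) = r := by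
    intro i
    rw [dist_eq_norm, norm_sub_rev, show (g ^ (i:ℕ)) x - c = u (i:ℕ) by rw [hu]]
    exact hnorm i
  have hRr : R = r := by
    rw [hR, show (fun i : Fin n => dist c ((g ^ (i:ℕ)) x)) = fun _ => r from funext hdist]
    exact ciSup_const
  -- the circumcenter is in the convex hull of the orbit
  have hcmem : c ∈ convexHull ℝ (Set.range fun i : Fin n => (g ^ (i:ℕ)) x) := by
    by_contra hcK
    have hKcp : IsCompact (convexHull ℝ (Set.range fun i : Fin n => (g ^ (i:ℕ)) x)) :=
      (Set.finite_range _).isCompact_convexHull ℝ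
    have hKne : (convexHull ℝ (Set.range fun i : Fin n => (g ^ (i:ℕ)) x)).Nonempty :=
      ⟨_, subset_convexHull _ _ ⟨⟨0, hn0⟩, rfl⟩⟩
    obtain ⟨p, hpK, hproj⟩ := exists_norm_eq_iInf_of_complete_convex hKne
      hKcp.isClosed.isComplete (convex_convexHull _ _) c
    rw [norm_eq_iInf_iff_real_inner_le_zero (convex_convexHull _ _) hpK] at hproj
    have hd : (0:ℝ) < ‖c - p‖ := by
      rw [norm_pos_iff, sub_ne_zero]
      intro h; exact hcK (h ▸ hpK)
    obtain ⟨i, hi⟩ := hmax p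
    rw [hRr] at hi
    have h1 : ⟪c - p, (g ^ (i:ℕ)) x - p⟫ ≤ 0 := hproj _ (subset_convexHull _ _ ⟨i, rfl⟩)
    have h4 : ‖c - (g ^ (i:ℕ)) x‖ = r := by rw [← dist_eq_norm]; exact hdist i
    have h2 : dist p ((g ^ (i:ℕ)) x) ^2
        = ‖c - (g ^ (i:ℕ)) x‖^2 - 2*⟪c - (g ^ (i:ℕ)) x, c - p⟫ + ‖c - p‖^2 := by
      rw [dist_eq_norm, show p - (g ^ (i:ℕ)) x = (c - (g ^ (i:ℕ)) x) - (c - p) by abel,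
        norm_sub_sq_real]
    have h3 : ⟪c - (g ^ (i:ℕ)) x, c - p⟫ = ‖c-p‖^2 - ⟪c - p, (g ^ (i:ℕ)) x - p⟫ := by
      rw [real_inner_comm, show c - (g ^ (i:ℕ)) x = (c - p) - ((g ^ (i:ℕ)) x - p) by abel,
        inner_sub_right, real_inner_self_eq_norm_sq]
    have h5 : (0:ℝ) ≤ dist p ((g ^ (i:ℕ)) x) := dist_nonneg
    nlinarith
  rw [convexHull_eq] at hcmem
  obtain ⟨ι, t, w, z, hw0, hw1, hz, hcen⟩ := hcmem
  rw [Finset.centerMass_eq_of_sum_1 _ _ hw1] at hcen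
  have hzsum : ∑ i ∈ t, w i • (z i - c) = 0 := by
    simp only [smul_sub]
    rw [Finset.sum_sub_distrib, hcen, ← Finset.sum_smul, hw1, one_smul, sub_self]
  set S : E := ∑ k ∈ Finset.range n, u k with hS
  clear_value S
  have hLS : L S = S := by
    rw [hS, map_sum]
    rw [Finset.sum_congr rfl fun k _ => hLu k]
    have e1 := Finset.sum_range_succ' u n
    rw [Finset.sum_range_succ u n, hun] at e1
    exact (add_right_cancel e1.symm)
  have hSu : ∀ k, ⟪S, u k⟫ = ⟪S, u 0⟫ := by
    intro k
    induction k with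
    | zero => rfl
    | succ k ih =>
      calc ⟪S, u (k+1)⟫ = ⟪L S, L (u k)⟫ := by rw [hLS, hLu]
        _ = ⟪S, u k⟫ := LinearIsometryEquiv.inner_map_map L S (u k)
        _ = ⟪S, u 0⟫ := ih
  have hT : ⟪S, u 0⟫ = 0 := by
    have h0 : ⟪S, ∑ i ∈ t, w i • (z i - c)⟫ = 0 := by rw [hzsum, inner_zero_right]
    rw [inner_sum] at h0
    have he : ∀ i ∈ t, ⟪S, w i • (z i - c)⟫ = w i * ⟪S, u 0⟫ := by
      intro i hi
      obtain ⟨j, hj⟩ := hz i hi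
      rw [real_inner_smul_right, show z i - c = u (j:ℕ) by rw [hu]; simp [← hj], hSu]
    rw [Finset.sum_congr rfl he, ← Finset.sum_mul, hw1, one_mul] at h0
    exact h0
  have hsum0 : ∑ k ∈ Finset.range n, ⟪u 0, u k⟫ = 0 := by
    have h0 : ⟪S, u 0⟫ = ∑ k ∈ Finset.range n, ⟪u 0, u k⟫ := by
      rw [hS, sum_inner]
      exact Finset.sum_congr rfl fun k _ => real_inner_comm _ _
    rw [← h0, hT]
  -- normalized vectors
  set uu : ℕ → E := fun k => r⁻¹ • u k with huu
  clear_value uu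
  have huun : ∀ k, ‖uu k‖ = 1 := by
    intro k
    rw [huu]
    simp only [norm_smul, norm_inv, Real.norm_eq_abs, abs_of_pos hrpos]
    rw [hnorm k]
    field_simp
  have huinner : ∀ j k, ⟪u j, u k⟫ = r^2 * ⟪uu j, uu k⟫ := by
    intro j k
    rw [huu]
    simp only [real_inner_smul_left, real_inner_smul_right]
    field_simp
  have hbsucc : ∀ k, ⟪uu k, uu (k+1)⟫ = Real.cos θ := by
    intro k
    have h1 : ⟪u k, u (k+1)⟫ = Real.cos θ * r^2 := by
      have h2 := hinner_shift k 0 1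
      rw [zero_add, add_comm 1 k] at h2
      rw [h2, real_inner_comm]
      exact hangle'
    rw [huinner] at h1
    have h3 : r^2 ≠ 0 := by positivity
    have h4 : r^2 * ⟪uu k, uu (k+1)⟫ = r^2 * Real.cos θ := by linarith [h1]
    exact mul_left_cancel₀ h3 h4
  have habs1 : ∀ k, |⟪uu 0, uu k⟫| ≤ 1 := by
    intro k
    have h := abs_real_inner_le_norm (uu 0) (uu k)
    rw [huun, huun, one_mul] at h
    exact h
  have hblow : ∀ k, 2*k ≤ n → Real.cos (k*θ) ≤ ⟪uu 0, uu k⟫ := by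
    intro k
    induction k with
    | zero =>
      intro _
      rw [real_inner_self_eq_norm_sq, huun]
      simp
    | succ k ih =>
      intro h2k
      have ha := ih (by omega)
      have hcs := inner_ge_cs (uu 0) (uu k) (uu (k+1)) (huun 0) (huun k) (huun (k+1))
      rw [hbsucc k] at hcs
      have hsin : √(1 - Real.cos θ^2) = Real.sin θ := by
        rw [show (1:ℝ) - Real.cos θ^2 = Real.sin θ^2 by rw [Real.sin_sq]]
        exact Real.sqrt_sq (Real.sin_nonneg_of_nonneg_of_le_pi hθpos.le hθlt.le)
      rw [hsin] at hcs
      have hab := abs_le.1 (habs1 k)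
      have hca : Real.cos (Real.arccos ⟪uu 0, uu k⟫ + θ)
          = ⟪uu 0, uu k⟫ * Real.cos θ - √(1 - ⟪uu 0, uu k⟫^2) * Real.sin θ := by
        rw [Real.cos_add, Real.cos_arccos hab.1 hab.2, Real.sin_arccos]
      have hn0' : (0:ℝ) < n := by positivity
      have hk1 : ((k:ℝ)+1)*θ ≤ π := by
        rw [hθdef, ← mul_div_assoc, div_le_iff₀ hn0']
        have h2 : ((2:ℝ)*(k+1)) ≤ n := by exact_mod_cast h2k
        nlinarith
      have hkθ0 : (0:ℝ) ≤ (k:ℝ)*θ := mul_nonneg (Nat.cast_nonneg k) hθpos.le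
      have hkθπ : (k:ℝ)*θ ≤ π := by nlinarith
      have harc : Real.arccos ⟪uu 0, uu k⟫ ≤ (k:ℝ)*θ := by
        have h6 : Real.arccos (Real.cos ((k:ℝ)*θ)) = (k:ℝ)*θ := Real.arccos_cos hkθ0 hkθπ
        have h7 : Real.arccos ⟪uu 0, uu k⟫ ≤ Real.arccos (Real.cos ((k:ℝ)*θ)) := by
          rw [Real.arccos_eq_pi_div_two_sub_arcsin, Real.arccos_eq_pi_div_two_sub_arcsin]
          have := Real.monotone_arcsin ha
          linarith
        linarith
      have hfinal : Real.cos (((k:ℝ)+1)*θ) ≤ ⟪uu 0, uu (k+1)⟫ := by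
        calc Real.cos (((k:ℝ)+1)*θ) ≤ Real.cos (Real.arccos ⟪uu 0, uu k⟫ + θ) := by
              apply Real.cos_le_cos_of_nonneg_of_le_pi
              · have := Real.arccos_nonneg ⟪uu 0, uu k⟫
                linarith
              · exact hk1
              · linarith
          _ = ⟪uu 0, uu k⟫ * Real.cos θ - √(1 - ⟪uu 0, uu k⟫^2) * Real.sin θ := hca
          _ ≤ ⟪uu 0, uu (k+1)⟫ := hcs
      have hcast : ((k+1:ℕ):ℝ) = (k:ℝ)+1 := by push_cast; ring
      rw [hcast]
      exact hfinal
  have hsymmu : ∀ k ≤ n, ⟪u 0, u k⟫ = ⟪u 0, u (n - k)⟫ := by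
    intro k hk
    have h1 := hinner_shift (n-k) 0 k
    rw [zero_add, show k+(n-k) = n by omega, hun] at h1
    rw [← h1, real_inner_comm]
  have hlowu : ∀ k < n, Real.cos ((k:ℝ)*θ) * r^2 ≤ ⟪u 0, u k⟫ := by
    intro k hk
    rcases le_or_gt (2*k) n with h | h
    · have hb := hblow k h
      rw [huinner 0 k]
      nlinarith
    · have hklen : k ≤ n := hk.le
      have e := hsymmu k hklen
      have hb := hblow (n-k) (by omega)
      have hcoseq : Real.cos (((n-k:ℕ):ℝ)*θ) = Real.cos ((k:ℝ)*θ) := by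
        have hcast : ((n-k:ℕ):ℝ) = (n:ℝ) - k := by
          push_cast [Nat.cast_sub hklen]; ring
        have hnθ : (n:ℝ)*θ = 2*π := by
          rw [hθdef]; field_simp
        rw [hcast, sub_mul, hnθ]
        exact Real.cos_two_pi_sub _
      rw [e, huinner 0 (n-k)]
      rw [← hcoseq]
      nlinarith
  have hsc : ∑ k ∈ Finset.range n, Real.cos ((k:ℝ)*θ) = 0 := by
    rw [hθdef]
    exact sum_cos_two_pi_div n (by omega)
  have hksum : ∑ k ∈ Finset.range n, (⟪u 0, u k⟫ - Real.cos ((k:ℝ)*θ) * r^2) = 0 := by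
    rw [Finset.sum_sub_distrib, hsum0, ← Finset.sum_mul, hsc]
    ring
  have hck : ∀ k, k < n → ⟪u 0, u k⟫ = Real.cos ((k:ℝ)*θ) * r^2 := by
    intro k hk
    have hall := (Finset.sum_eq_zero_iff_of_nonneg ?_).1 hksum k (Finset.mem_range.2 hk)
    · linarith [hall]
    · intro j hj
      rw [Finset.mem_range] at hj
      have := hlowu j hj
      linarith
  -- inner product table
  have i00 : ⟪u 0, u 0⟫ = r^2 := by rw [real_inner_self_eq_norm_sq, hnorm]
  have i11 : ⟪u 1, u 1⟫ = r^2 := by rw [real_inner_self_eq_norm_sq, hnorm]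
  have i22 : ⟪u 2, u 2⟫ = r^2 := by rw [real_inner_self_eq_norm_sq, hnorm]
  have i10 : ⟪u 1, u 0⟫ = Real.cos θ * r^2 := hangle'
  have i01 : ⟪u 0, u 1⟫ = Real.cos θ * r^2 := by rw [real_inner_comm]; exact hangle'
  have i21 : ⟪u 2, u 1⟫ = Real.cos θ * r^2 := by
    rw [show (2:ℕ) = 1+1 from rfl, hinner_succ]
    exact hangle'
  have i12 : ⟪u 1, u 2⟫ = Real.cos θ * r^2 := by rw [real_inner_comm]; exact i21
  have i02 : ⟪u 0, u 2⟫ = Real.cos (2*θ) * r^2 := by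
    have h := hck 2 (by omega)
    rw [h]
    norm_num
  have i20 : ⟪u 2, u 0⟫ = Real.cos (2*θ) * r^2 := by rw [real_inner_comm]; exact i02
  -- the recurrence
  have hrec : u 2 = (2*Real.cos θ) • u 1 - u 0 := by
    have hDD : ⟪u 2 - ((2*Real.cos θ) • u 1 - u 0), u 2 - ((2*Real.cos θ) • u 1 - u 0)⟫ = (0:ℝ) := by
      simp only [inner_sub_left, inner_sub_right, real_inner_smul_left, real_inner_smul_right]
      rw [i22, i21, i20, i12, i11, i10, i02, i01, i00, Real.cos_two_mul]
      ring
    exact sub_eq_zero.1 (inner_self_eq_zero.1 hDD)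
  -- the plane
  set P : Submodule ℝ E := Submodule.span ℝ {u 0, u 1} with hP
  have hcos1 : Real.cos θ ^2 < 1 := by
    have hs : 0 < Real.sin θ := Real.sin_pos_of_pos_of_lt_pi hθpos hθlt
    nlinarith [Real.sin_sq_add_cos_sq θ, mul_pos hs hs]
  have hli : LinearIndependent ℝ ![u 0, u 1] := by
    rw [LinearIndependent.pair_iff]
    intro s t hst
    have e0 : ⟪s • u 0 + t • u 1, u 0⟫ = 0 := by rw [hst, inner_zero_left]
    have e1 : ⟪s • u 0 + t • u 1, u 1⟫ = 0 := by rw [hst, inner_zero_left]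
    simp only [inner_add_left, real_inner_smul_left] at e0 e1
    rw [i00, i10] at e0
    rw [i01, i11] at e1
    have ht : t = 0 := by
      have h9 : t * (r^2*(Real.cos θ^2 - 1)) = 0 := by linear_combination Real.cos θ * e0 - e1
      have h11 : 0 < r^2 * (1 - Real.cos θ^2) :=
        mul_pos (pow_pos hrpos 2) (by linarith)
      have h10 : r^2*(Real.cos θ^2 - 1) ≠ 0 := ne_of_lt (by nlinarith [h11])
      exact (mul_eq_zero.1 h9).resolve_right h10
    have hs0 : s = 0 := by
      rw [ht] at e0
      have h9 : s * r^2 = 0 := by linarith [e0]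
      have h10 : r^2 ≠ 0 := by positivity
      exact (mul_eq_zero.1 h9).resolve_right h10
    exact ⟨hs0, ht⟩
  have hfr : Module.finrank ℝ P = 2 := by
    have hrange : Set.range ![u 0, u 1] = {u 0, u 1} := by
      simp [Matrix.range_cons, Matrix.range_empty, Set.pair_comm]
    rw [hP, ← hrange, finrank_span_eq_card hli]
    simp
  have hfinP : FiniteDimensional ℝ P := by
    rw [hP]
    exact FiniteDimensional.span_of_finite ℝ (Set.toFinite _)
  have hu1P : u 1 ∈ P := Submodule.subset_span (by simp)
  have hu0P : u 0 ∈ P := Submodule.subset_span (by simp)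
  have hu2P : u 2 ∈ P := by
    rw [hrec]
    exact Submodule.sub_mem _ (Submodule.smul_mem _ _ hu1P) hu0P
  have hmaple : P.map (L.toLinearEquiv : E →ₗ[ℝ] E) ≤ P := by
    rw [hP, Submodule.map_span, Submodule.span_le]
    rintro y ⟨a, ha, rfl⟩
    rcases ha with rfl | rfl
    · show L (u 0) ∈ P
      rw [hLu]
      exact hu1P
    · show L (u 1) ∈ P
      rw [hLu]
      exact hu2P
  have hmapfr : Module.finrank ℝ (P.map (L.toLinearEquiv : E →ₗ[ℝ] E)) = 2 := by
    rw [LinearEquiv.finrank_map_eq L.toLinearEquiv P, hfr]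
  have hmap : P.map (L.toLinearEquiv : E →ₗ[ℝ] E) = P :=
    Submodule.eq_of_le_of_finrank_le hmaple (by rw [hmapfr, hfr])
  have huP : ∀ k, u k ∈ P := by
    intro k
    induction k with
    | zero => exact hu0P
    | succ k ih =>
      rw [← hLu]
      rw [← hmap]
      exact ⟨u k, ih, rfl⟩
  refine ⟨P, hfr, ?_, L, hL, hmap, ?_⟩
  · intro i
    have e1 : (g ^ i) x - c = u i := by rw [hu]
    have e2 : (g ^ (i+1)) x - c = u (i+1) := by rw [hu]
    rw [e1, e2]
    refine ⟨huP i, hnorm i, ?_⟩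
    have h1 := hinner_shift i 1 0
    rw [zero_add, add_comm 1 i] at h1
    calc ⟪u (i+1), u i⟫ = ⟪u 1, u 0⟫ := h1
      _ = Real.cos θ * r^2 := hangle'
  · intro y hy
    rw [hP, Submodule.mem_span_pair] at hy
    obtain ⟨s, t, rfl⟩ := hy
    rw [← hL]
    have hLy : L (s • u 0 + t • u 1) = s • u 1 + t • ((2*Real.cos θ) • u 1 - u 0) := by
      rw [map_add, map_smul, map_smul, hLu 0, hLu 1, hrec]
    rw [hLy, ← real_inner_self_eq_norm_sq]
    simp only [inner_add_left, inner_add_right, inner_sub_left, inner_sub_right,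
      real_inner_smul_left, real_inner_smul_right, i00, i01, i10, i11]
    ring
end

section
/- Let E be a real Hilbert space, n ≥ 4, and g : E ≃ᵢ E a surjective isometry with g^n = id. Then for every x ∈ E, dist(g (g x), x) ≤ 2·cos(π/n)·dist(g x, x). -/
open Real

section AuxiliaryForDistSqIterate

open Real Finset


namespace DistSqAux

/-- Sum of cosines/sines over a full period vanishes. -/
lemma trig_sum (n : ℕ) (hn : 0 < n) (t : ℤ) (ht : ¬ (n:ℤ) ∣ t) :
    (∑ j ∈ range n, Real.cos (2*π/n * t * j)) = 0 ∧
    (∑ j ∈ range n, Real.sin (2*π/n * t * j)) = 0 := by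
  have hnR : (n:ℝ) ≠ 0 := Nat.cast_ne_zero.mpr hn.ne'
  have hnC : (n:ℂ) ≠ 0 := Nat.cast_ne_zero.mpr hn.ne'
  have h2π : (2*π) ≠ 0 := by positivity
  set θ : ℝ := 2*π/n * t with hθ
  have hw1 : Complex.exp (θ * Complex.I) ≠ 1 := by
    intro h
    rw [Complex.exp_eq_one_iff] at h
    obtain ⟨m, hm⟩ := h
    have hmc : (θ : ℂ) = (m:ℂ) * (2*π) := by
      apply mul_right_cancel₀ Complex.I_ne_zero
      rw [hm]; ring
    have hmr : θ = (m:ℝ) * (2*π) := by exact_mod_cast hmc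
    have h5 : (2*π) * (t:ℝ) = (2*π) * ((m:ℝ)*(n:ℝ)) := by
      rw [hθ] at hmr
      field_simp at hmr
      rw [hmr]; ring
    have h6 : (t:ℝ) = ((m*n : ℤ):ℝ) := by
      push_cast
      exact mul_left_cancel₀ h2π h5
    refine ht ⟨m, ?_⟩
    have h7 : t = m * n := by exact_mod_cast h6
    rw [h7]; ring
  have hwn : Complex.exp (θ * Complex.I) ^ n = 1 := by
    rw [← Complex.exp_nat_mul]
    have : (n:ℂ) * (↑θ * Complex.I) = (t:ℂ) * (2*↑π*Complex.I) := by
      rw [hθ]; push_cast; field_simp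
    rw [this]
    exact_mod_cast Complex.exp_int_mul_two_pi_mul_I t
  have hsum0 : ∑ j ∈ range n, Complex.exp (θ * Complex.I) ^ j = 0 := by
    rw [geom_sum_eq hw1, hwn]
    simp
  have hterm : ∀ j : ℕ, Complex.exp (θ * Complex.I) ^ j
      = Complex.exp ((θ * j : ℝ) * Complex.I) := by
    intro j
    rw [← Complex.exp_nat_mul]
    congr 1
    push_cast
    ring
  constructor
  · have := congrArg Complex.re hsum0
    rw [Complex.re_sum] at this
    simp only [hterm, Complex.exp_ofReal_mul_I_re] at this
    simpa using this
  · have := congrArg Complex.im hsum0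
    rw [Complex.im_sum] at this
    simp only [hterm, Complex.exp_ofReal_mul_I_im] at this
    simpa using this


lemma cos_congr (n : ℕ) (hn : 0 < n) (k : ℕ) {a b : ℤ} (h : (n:ℤ) ∣ a - b) :
    Real.cos (2*π/n*k*a) = Real.cos (2*π/n*k*b) := by
  have hnR : (n:ℝ) ≠ 0 := Nat.cast_ne_zero.mpr hn.ne'
  obtain ⟨q, hq⟩ := h
  have ha : (a:ℝ) = (b:ℝ) + (n:ℝ)*(q:ℝ) := by
    have h2 : a = b + (n:ℤ)*q := by linarith
    exact_mod_cast h2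
  have harg : 2*π/↑n*↑k*(a:ℝ) = 2*π/↑n*↑k*(b:ℝ) + (((k:ℤ)*q : ℤ):ℝ) * (2*π) := by
    rw [ha]; push_cast; field_simp
  rw [harg, Real.cos_add_int_mul_two_pi]

lemma sum_val (n : ℕ) [NeZero n] (F : ℕ → ℝ) :
    ∑ j : ZMod n, F j.val = ∑ j ∈ range n, F j := by
  apply Finset.sum_bij (fun (j : ZMod n) _ => j.val)
  · intro a _; exact mem_range.mpr (ZMod.val_lt a)
  · intro a _ b _ h; exact ZMod.val_injective n h
  · intro b hb; exact ⟨(b : ZMod n), mem_univ _, ZMod.val_cast_of_lt (mem_range.mp hb)⟩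
  · intro a _; rfl

noncomputable def Tsum (n : ℕ) (t : ℤ) : ℝ := ∑ k ∈ range n, Real.cos (2*π/n*t*k)

lemma Tsum_dvd (n : ℕ) (hn : 0 < n) (t : ℤ) (h : (n:ℤ) ∣ t) : Tsum n t = n := by
  have hnR : (n:ℝ) ≠ 0 := Nat.cast_ne_zero.mpr hn.ne'
  obtain ⟨q, hq⟩ := h
  have hterm : ∀ k ∈ range n, Real.cos (2*π/↑n*↑t*↑k) = 1 := by
    intro k _
    have harg : 2*π/↑n*(t:ℝ)*↑k = ((q*k : ℤ):ℝ) * (2*π) := by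
      rw [hq]; push_cast; field_simp
    rw [harg, Real.cos_int_mul_two_pi]
  rw [Tsum, Finset.sum_congr rfl hterm, Finset.sum_const, card_range, nsmul_eq_mul, mul_one]

lemma Tsum_not_dvd (n : ℕ) (hn : 0 < n) (t : ℤ) (h : ¬ (n:ℤ) ∣ t) : Tsum n t = 0 :=
  (trig_sum n hn t h).1

variable {E : Type*} [NormedAddCommGroup E] [InnerProductSpace ℝ E]

noncomputable def dd (n : ℕ) [NeZero n] (g : E ≃ᵢ E) (x : E) (m : ZMod n) : ℝ :=
  dist ((g ^ m.val) x) x ^ 2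

lemma pow_mod_eq (n : ℕ) (g : E ≃ᵢ E) (hg : g ^ n = 1) (a b : ℕ) (h : a % n = b % n) :
    g ^ a = g ^ b := by
  have key : ∀ c : ℕ, g ^ c = g ^ (c % n) := by
    intro c
    conv_lhs => rw [← Nat.div_add_mod c n]
    rw [pow_add, pow_mul, hg, one_pow, one_mul]
  rw [key a, key b, h]

lemma dist_z (n : ℕ) [NeZero n] (g : E ≃ᵢ E) (hg : g ^ n = 1) (x : E) (j l : ZMod n) :
    dist ((g ^ j.val) x) ((g ^ l.val) x) = dist ((g ^ (j - l).val) x) x := by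
  have key : (g ^ l.val) ((g ^ (j - l).val) x) = (g ^ j.val) x := by
    have h1 : (g ^ l.val) ((g ^ (j - l).val) x) = (g ^ (l.val + (j - l).val)) x := by
      rw [pow_add]; rfl
    rw [h1]
    congr 1
    apply pow_mod_eq n g hg
    have h0 : l + (j - l) = j := by ring
    have h2 : (l + (j - l)).val = (l.val + (j - l).val) % n := ZMod.val_add _ _
    rw [h0] at h2
    rw [← h2, Nat.mod_eq_of_lt (ZMod.val_lt j)]
  calc dist ((g ^ j.val) x) ((g ^ l.val) x)
      = dist ((g ^ l.val) ((g ^ (j - l).val) x)) ((g ^ l.val) x) := by rw [key]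
    _ = dist ((g ^ (j - l).val) x) x := (g ^ l.val).dist_eq _ _

lemma dd_zero (n : ℕ) [NeZero n] (g : E ≃ᵢ E) (x : E) : dd n g x 0 = 0 := by
  simp [dd, ZMod.val_zero]

lemma dd_neg (n : ℕ) [NeZero n] (g : E ≃ᵢ E) (hg : g ^ n = 1) (x : E) (m : ZMod n) :
    dd n g x (-m) = dd n g x m := by
  have h2 := dist_z n g hg x 0 m
  simp only [ZMod.val_zero, pow_zero, zero_sub] at h2
  have h3 : ((1 : E ≃ᵢ E)) x = x := rfl
  rw [h3] at h2
  unfold dd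
  rw [← h2, dist_comm]

lemma piece (n : ℕ) [NeZero n] (hn : 0 < n) (g : E ≃ᵢ E) (x : E) (δ : ℤ) :
    ∑ m : ZMod n, dd n g x m * Tsum n ((m.val : ℤ) + δ)
      = n * dd n g x ((-δ : ℤ) : ZMod n) := by
  have hsum : (∑ m : ZMod n, dd n g x m * Tsum n ((m.val : ℤ) + δ))
      = dd n g x ((-δ : ℤ) : ZMod n) * Tsum n (((((-δ : ℤ) : ZMod n)).val : ℤ) + δ) := by
    apply Finset.sum_eq_single_of_mem _ (mem_univ _)
    intro m _ hm
    have hnd : ¬ (n:ℤ) ∣ ((m.val : ℤ) + δ) := by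
      intro hd
      apply hm
      have h0 : (((m.val : ℤ) + δ : ℤ) : ZMod n) = 0 :=
        (ZMod.intCast_zmod_eq_zero_iff_dvd _ n).mpr hd
      push_cast at h0
      rw [ZMod.natCast_val, ZMod.cast_id] at h0
      have h1 : m = -((δ : ℤ) : ZMod n) := eq_neg_of_add_eq_zero_left h0
      rw [h1]; push_cast; ring
    rw [Tsum_not_dvd n hn _ hnd, mul_zero]
  have hdvd : (n:ℤ) ∣ (((((-δ : ℤ) : ZMod n)).val : ℤ) + δ) := by
    rw [← ZMod.intCast_zmod_eq_zero_iff_dvd]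
    push_cast
    rw [ZMod.natCast_val, ZMod.cast_id]
    push_cast
    ring
  rw [hsum, Tsum_dvd n hn _ hdvd]
  ring


noncomputable def rr (n : ℕ) [NeZero n] (g : E ≃ᵢ E) (x : E) (k : ℕ) : ℝ :=
  ∑ m : ZMod n, Real.cos (2*π/n*k*m.val) * dd n g x m

lemma rr_nonpos (n : ℕ) [NeZero n] (g : E ≃ᵢ E) (hg : g ^ n = 1) (x : E)
    (k : ℕ) (hk0 : 0 < k) (hkn : k < n) : rr n g x k ≤ 0 := by
  have hn : 0 < n := Nat.pos_of_ne_zero (NeZero.ne n)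
  have hnd : ¬ (n:ℤ) ∣ (k:ℤ) := by
    rw [Int.natCast_dvd_natCast]
    intro hd
    exact absurd (Nat.le_of_dvd hk0 hd) (by omega)
  have hC : ∑ j : ZMod n, Real.cos (2*π/↑n*↑k*↑j.val) = 0 := by
    rw [sum_val n (fun v => Real.cos (2*π/↑n*↑k*↑v))]
    have h := (trig_sum n hn (k:ℤ) hnd).1
    push_cast at h
    exact h
  have hS : ∑ j : ZMod n, Real.sin (2*π/↑n*↑k*↑j.val) = 0 := by
    rw [sum_val n (fun v => Real.sin (2*π/↑n*↑k*↑v))]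
    have h := (trig_sum n hn (k:ℤ) hnd).2
    push_cast at h
    exact h
  set z : ZMod n → E := fun m => (g ^ m.val) x with hz
  set c : ZMod n → ℝ := fun m => Real.cos (2*π/↑n*↑k*↑m.val) with hc
  set s : ZMod n → ℝ := fun m => Real.sin (2*π/↑n*↑k*↑m.val) with hs
  -- pointwise identity for shifted indices
  have hpoint : ∀ (l m : ZMod n),
      (c (m+l) * c l + s (m+l) * s l) * dist (z (m+l)) (z l)^2 = c m * dd n g x m := by
    intro l m
    have hdist : dist (z (m+l)) (z l) = dist ((g ^ m.val) x) x := by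
      show dist ((g ^ (m+l).val) x) ((g ^ l.val) x) = _
      rw [dist_z n g hg x (m+l) l, add_sub_cancel_right]
    have hcos : c (m+l) * c l + s (m+l) * s l = c m := by
      show Real.cos (2*π/↑n*↑k*↑(m+l).val) * Real.cos (2*π/↑n*↑k*↑l.val)
          + Real.sin (2*π/↑n*↑k*↑(m+l).val) * Real.sin (2*π/↑n*↑k*↑l.val)
          = Real.cos (2*π/↑n*↑k*↑m.val)
      rw [← Real.cos_sub]
      have h1 : 2*π/↑n*↑k*((m+l).val:ℝ) - 2*π/↑n*↑k*(l.val:ℝ)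
          = 2*π/↑n*↑k*((((m+l).val : ℤ) - (l.val : ℤ) : ℤ) : ℝ) := by push_cast; ring
      rw [h1]
      apply cos_congr n hn k
      -- n ∣ (m+l).val - l.val - m.val
      have hval : (m+l).val = (m.val + l.val) % n := ZMod.val_add m l
      have hmod : ((m.val + l.val : ℕ) : ℤ) % (n:ℤ) = (((m.val + l.val) % n : ℕ) : ℤ) := by
        push_cast; ring
      have hd1 : (n:ℤ) ∣ ((m.val + l.val : ℕ) : ℤ) - (((m.val + l.val) % n : ℕ) : ℤ) :=
        Int.dvd_self_sub_of_emod_eq hmod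
      have heq : ((m+l).val : ℤ) - (l.val : ℤ) - (m.val : ℤ)
          = -(((m.val + l.val : ℕ) : ℤ) - (((m.val + l.val) % n : ℕ) : ℤ)) := by
        rw [hval]; push_cast; ring
      rw [heq]
      exact dvd_neg.mpr hd1
    rw [hcos, hdist, dd]
  have hrow : ∀ l : ZMod n,
      ∑ j : ZMod n, (c j * c l + s j * s l) * dist (z j) (z l)^2 = rr n g x k := by
    intro l
    rw [← Equiv.sum_comp (Equiv.addRight l)
      (fun j => (c j * c l + s j * s l) * dist (z j) (z l)^2)]
    refine Finset.sum_congr rfl (fun m _ => ?_)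
    simp only [Equiv.coe_addRight]
    exact hpoint l m
  set A : E := ∑ j : ZMod n, c j • z j with hA
  set B : E := ∑ j : ZMod n, s j • z j with hB
  have hIP : ∑ j : ZMod n, ∑ l : ZMod n, (c j * c l + s j * s l) * (inner ℝ (z j) (z l) : ℝ)
      = (inner ℝ A A : ℝ) + (inner ℝ B B : ℝ) := by
    rw [hA, hB, sum_inner, sum_inner, ← Finset.sum_add_distrib]
    refine Finset.sum_congr rfl (fun j _ => ?_)
    rw [real_inner_smul_left, real_inner_smul_left, inner_sum, inner_sum,
      Finset.mul_sum, Finset.mul_sum, ← Finset.sum_add_distrib]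
    refine Finset.sum_congr rfl (fun l _ => ?_)
    rw [real_inner_smul_right, real_inner_smul_right]
    ring
  have hX1 : ∑ j : ZMod n, ∑ l : ZMod n, (c j * c l + s j * s l) * ‖z j‖^2 = 0 := by
    apply Finset.sum_eq_zero
    intro j _
    have e1 : ∑ l : ZMod n, (c j * c l + s j * s l) * ‖z j‖^2
        = c j * ((∑ l : ZMod n, c l) * ‖z j‖^2) + s j * ((∑ l : ZMod n, s l) * ‖z j‖^2) := by
      rw [Finset.sum_mul, Finset.sum_mul, Finset.mul_sum, Finset.mul_sum,
        ← Finset.sum_add_distrib]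
      exact Finset.sum_congr rfl (fun l _ => by ring)
    rw [e1, hC, hS]; ring
  have hX2 : ∑ j : ZMod n, ∑ l : ZMod n, (c j * c l + s j * s l) * ‖z l‖^2 = 0 := by
    rw [Finset.sum_comm]
    apply Finset.sum_eq_zero
    intro l _
    have e1 : ∑ j : ZMod n, (c j * c l + s j * s l) * ‖z l‖^2
        = ((∑ j : ZMod n, c j) * (c l * ‖z l‖^2)) + ((∑ j : ZMod n, s j) * (s l * ‖z l‖^2)) := by
      rw [Finset.sum_mul, Finset.sum_mul, ← Finset.sum_add_distrib]
      exact Finset.sum_congr rfl (fun j _ => by ring)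
    rw [e1, hC, hS]; ring
  have hmain : (n:ℝ) * rr n g x k
      = (∑ j : ZMod n, ∑ l : ZMod n, (c j * c l + s j * s l) * ‖z j‖^2)
        - 2 * (∑ j : ZMod n, ∑ l : ZMod n, (c j * c l + s j * s l) * (inner ℝ (z j) (z l) : ℝ))
        + (∑ j : ZMod n, ∑ l : ZMod n, (c j * c l + s j * s l) * ‖z l‖^2) := by
    have hsum : ∑ l : ZMod n, ∑ j : ZMod n, (c j * c l + s j * s l) * dist (z j) (z l)^2
        = (n:ℝ) * rr n g x k := by
      rw [Finset.sum_congr rfl (fun l _ => hrow l), Finset.sum_const, nsmul_eq_mul,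
        Finset.card_univ, ZMod.card]
    rw [← hsum, Finset.sum_comm]
    calc ∑ j : ZMod n, ∑ l : ZMod n, (c j * c l + s j * s l) * dist (z j) (z l)^2
        = ∑ j : ZMod n, ∑ l : ZMod n, ((c j * c l + s j * s l) * ‖z j‖^2
            - 2 * ((c j * c l + s j * s l) * (inner ℝ (z j) (z l) : ℝ))
            + (c j * c l + s j * s l) * ‖z l‖^2) := by
          refine Finset.sum_congr rfl fun j _ => Finset.sum_congr rfl fun l _ => ?_
          rw [dist_eq_norm, norm_sub_sq_real]
          ring
      _ = _ := by
          simp only [Finset.sum_add_distrib, Finset.sum_sub_distrib, ← Finset.mul_sum]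
  have h1 : (0:ℝ) ≤ (inner ℝ A A : ℝ) := real_inner_self_nonneg
  have h2 : (0:ℝ) ≤ (inner ℝ B B : ℝ) := real_inner_self_nonneg
  have hfin : (n:ℝ) * rr n g x k = -2 * ((inner ℝ A A : ℝ) + (inner ℝ B B : ℝ)) := by
    rw [hmain, hX1, hX2, hIP]; ring
  have hnpos : (0:ℝ) < n := by exact_mod_cast hn
  nlinarith [hfin, h1, h2, hnpos]


noncomputable def fcoef (n k : ℕ) : ℝ :=
  (1 + 2*Real.cos (2*π/n)) - (2 + 2*Real.cos (2*π/n))*Real.cos (2*π/n*k)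
    + Real.cos (2*(2*π/n*k))

lemma trig_identity (γ a b : ℝ) :
    ((1 + 2*γ) - (2 + 2*γ)*Real.cos a + Real.cos (2*a)) * Real.cos b
      = (1 + 2*γ)*Real.cos b - (1 + γ)*(Real.cos (b+a) + Real.cos (b-a))
        + (1/2)*(Real.cos (b+2*a) + Real.cos (b-2*a)) := by
  simp only [Real.cos_add, Real.cos_sub]
  ring

lemma fcoef_zero (n : ℕ) : fcoef n 0 = 0 := by
  rw [fcoef]
  norm_num

lemma fcoef_nonneg (n k : ℕ) (hn4 : 4 ≤ n) (hk1 : 1 ≤ k) (hkn : k < n) :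
    0 ≤ fcoef n k := by
  have hπ := Real.pi_pos
  have hn4R : (4:ℝ) ≤ n := by exact_mod_cast hn4
  have hnR : (0:ℝ) < n := by linarith
  have hθpos : 0 < 2*π/n := by positivity
  have hθ2 : 2*π/n ≤ π/2 := by
    rw [div_le_div_iff₀ hnR (by norm_num : (0:ℝ) < 2)]
    nlinarith
  have hkR : (1:ℝ) ≤ k := by exact_mod_cast hk1
  have hk1n : (k:ℝ) + 1 ≤ n := by exact_mod_cast hkn
  have hlow : 2*π/n ≤ 2*π/n*k := by nlinarith
  have hup : 2*π/n*k ≤ 2*π - 2*π/n := by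
    have h5 : 2*π/↑n*((k:ℝ)+1) ≤ 2*π/↑n*↑n := mul_le_mul_of_nonneg_left hk1n hθpos.le
    have h6 : 2*π/↑n*(n:ℝ) = 2*π := by field_simp
    nlinarith
  have hcγ : Real.cos (2*π/n*k) ≤ Real.cos (2*π/n) := by
    by_cases h : 2*π/n*k ≤ π
    · exact Real.cos_le_cos_of_nonneg_of_le_pi hθpos.le h hlow
    · push_neg at h
      rw [← Real.cos_two_pi_sub (2*π/↑n*↑k)]
      exact Real.cos_le_cos_of_nonneg_of_le_pi hθpos.le (by linarith) (by linarith)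
  have hc1 : Real.cos (2*π/n*k) ≤ 1 := Real.cos_le_one _
  rw [fcoef, Real.cos_two_mul]
  nlinarith [mul_nonneg (by linarith : (0:ℝ) ≤ 1 - Real.cos (2*π/n*k))
    (by linarith : (0:ℝ) ≤ Real.cos (2*π/n) - Real.cos (2*π/n*k))]

lemma combo (n : ℕ) [NeZero n] (hn : 0 < n) (g : E ≃ᵢ E) (hg : g ^ n = 1) (x : E) :
    ∑ k ∈ range n, fcoef n k * rr n g x k
      = (n:ℝ) * (dd n g x 2 - (2 + 2*Real.cos (2*π/n)) * dd n g x 1) := by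
  have hswap : ∑ k ∈ range n, fcoef n k * rr n g x k
      = ∑ m : ZMod n, dd n g x m * ∑ k ∈ range n, fcoef n k * Real.cos (2*π/n*k*(m.val:ℝ)) := by
    unfold rr
    simp_rw [Finset.mul_sum]
    rw [Finset.sum_comm]
    refine Finset.sum_congr rfl fun m _ => ?_
    exact Finset.sum_congr rfl fun k _ => by ring
  have hW : ∀ m : ZMod n, ∑ k ∈ range n, fcoef n k * Real.cos (2*π/n*k*(m.val:ℝ))
      = (1 + 2*Real.cos (2*π/n)) * Tsum n ((m.val:ℤ) + 0)
        - (1 + Real.cos (2*π/n)) * (Tsum n ((m.val:ℤ) + 1) + Tsum n ((m.val:ℤ) + (-1)))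
        + (1/2) * (Tsum n ((m.val:ℤ) + 2) + Tsum n ((m.val:ℤ) + (-2))) := by
    intro m
    have hstep : ∀ k ∈ range n, fcoef n k * Real.cos (2*π/n*k*(m.val:ℝ))
        = (1 + 2*Real.cos (2*π/n)) * Real.cos (2*π/n*(((m.val:ℤ) + 0 : ℤ):ℝ)*k)
          - (1 + Real.cos (2*π/n)) * (Real.cos (2*π/n*(((m.val:ℤ) + 1 : ℤ):ℝ)*k)
              + Real.cos (2*π/n*(((m.val:ℤ) + (-1) : ℤ):ℝ)*k))
          + (1/2) * (Real.cos (2*π/n*(((m.val:ℤ) + 2 : ℤ):ℝ)*k)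
              + Real.cos (2*π/n*(((m.val:ℤ) + (-2) : ℤ):ℝ)*k)) := by
      intro k _
      rw [fcoef, trig_identity]
      rw [show 2*π/↑n*↑k*(m.val:ℝ) + 2*π/↑n*↑k
            = 2*π/↑n*(((m.val:ℤ) + 1 : ℤ):ℝ)*↑k by push_cast; ring,
          show 2*π/↑n*↑k*(m.val:ℝ) - 2*π/↑n*↑k
            = 2*π/↑n*(((m.val:ℤ) + (-1) : ℤ):ℝ)*↑k by push_cast; ring,
          show 2*π/↑n*↑k*(m.val:ℝ) + 2*(2*π/↑n*↑k)
            = 2*π/↑n*(((m.val:ℤ) + 2 : ℤ):ℝ)*↑k by push_cast; ring,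
          show 2*π/↑n*↑k*(m.val:ℝ) - 2*(2*π/↑n*↑k)
            = 2*π/↑n*(((m.val:ℤ) + (-2) : ℤ):ℝ)*↑k by push_cast; ring,
          show 2*π/↑n*↑k*(m.val:ℝ)
            = 2*π/↑n*(((m.val:ℤ) + 0 : ℤ):ℝ)*↑k by push_cast; ring]
    rw [Finset.sum_congr rfl hstep]
    simp only [Tsum, Finset.mul_sum, mul_add, ← Finset.sum_add_distrib,
      ← Finset.sum_sub_distrib]
  rw [hswap, Finset.sum_congr rfl (fun m _ => by rw [hW m])]
  have hexp : ∑ m : ZMod n, dd n g x m *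
      ((1 + 2*Real.cos (2*π/n)) * Tsum n ((m.val:ℤ) + 0)
        - (1 + Real.cos (2*π/n)) * (Tsum n ((m.val:ℤ) + 1) + Tsum n ((m.val:ℤ) + (-1)))
        + (1/2) * (Tsum n ((m.val:ℤ) + 2) + Tsum n ((m.val:ℤ) + (-2))))
      = (1 + 2*Real.cos (2*π/n)) * (∑ m : ZMod n, dd n g x m * Tsum n ((m.val:ℤ) + 0))
        - (1 + Real.cos (2*π/n)) * ((∑ m : ZMod n, dd n g x m * Tsum n ((m.val:ℤ) + 1))
            + (∑ m : ZMod n, dd n g x m * Tsum n ((m.val:ℤ) + (-1))))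
        + (1/2) * ((∑ m : ZMod n, dd n g x m * Tsum n ((m.val:ℤ) + 2))
            + (∑ m : ZMod n, dd n g x m * Tsum n ((m.val:ℤ) + (-2)))) := by
    simp only [Finset.mul_sum, mul_add, ← Finset.sum_add_distrib, ← Finset.sum_sub_distrib]
    exact Finset.sum_congr rfl fun m _ => by ring
  rw [hexp, piece n hn g x 0, piece n hn g x 1, piece n hn g x (-1),
    piece n hn g x 2, piece n hn g x (-2)]
  have c0 : ((-(0:ℤ) : ℤ) : ZMod n) = 0 := by push_cast; ring
  have c1 : ((-(1:ℤ) : ℤ) : ZMod n) = -1 := by push_cast; ring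
  have c1' : ((-(-1:ℤ) : ℤ) : ZMod n) = 1 := by push_cast; ring
  have c2 : ((-(2:ℤ) : ℤ) : ZMod n) = -2 := by push_cast; ring
  have c2' : ((-(-2:ℤ) : ℤ) : ZMod n) = 2 := by push_cast; ring
  rw [c0, c1, c1', c2, c2', dd_zero, dd_neg n g hg x 1, dd_neg n g hg x 2]
  ring

end DistSqAux

open DistSqAux in
theorem dist_sq_iterate_le'
    {E : Type*} [NormedAddCommGroup E] [InnerProductSpace ℝ E] [CompleteSpace E]
    (n : ℕ) (hn : 4 ≤ n) (g : E ≃ᵢ E) (hg : g ^ n = 1) (x : E) :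
    dist (g (g x)) x ≤ 2 * Real.cos (π / n) * dist (g x) x := by
  haveI : NeZero n := ⟨by omega⟩
  have hn0 : 0 < n := by omega
  have hπ := Real.pi_pos
  have hnR : (0:ℝ) < n := by exact_mod_cast hn0
  have hn4R : (4:ℝ) ≤ n := by exact_mod_cast hn
  have hsum : ∑ k ∈ Finset.range n, fcoef n k * rr n g x k ≤ 0 := by
    apply Finset.sum_nonpos
    intro k hk
    rcases Nat.eq_zero_or_pos k with hk0 | hk0
    · rw [hk0, fcoef_zero, zero_mul]
    · exact mul_nonpos_of_nonneg_of_nonpos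
        (fcoef_nonneg n k hn hk0 (Finset.mem_range.mp hk))
        (rr_nonpos n g hg x k hk0 (Finset.mem_range.mp hk))
  rw [combo n hn0 g hg x] at hsum
  have hd : dd n g x 2 ≤ (2 + 2*Real.cos (2*π/n)) * dd n g x 1 := by nlinarith [hsum]
  have hv2 : ((2:ZMod n)).val = 2 := by
    have h9 : ((2:ℕ) : ZMod n) = (2 : ZMod n) := by push_cast; rfl
    rw [← h9, ZMod.val_cast_of_lt (by omega)]
  have hv1 : ((1:ZMod n)).val = 1 := by
    have h9 : ((1:ℕ) : ZMod n) = (1 : ZMod n) := by push_cast; rfl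
    rw [← h9, ZMod.val_cast_of_lt (by omega)]
  have e2 : dd n g x 2 = dist (g (g x)) x ^ 2 := by
    rw [dd, hv2, show (g^2) x = g (g x) from by rw [pow_two]; rfl]
  have e1 : dd n g x 1 = dist (g x) x ^ 2 := by
    rw [dd, hv1, pow_one]
  rw [e2, e1] at hd
  have hcos2 : 2 + 2*Real.cos (2*π/(n:ℝ)) = (2*Real.cos (π/n))^2 := by
    rw [show 2*π/(n:ℝ) = 2*(π/n) by ring, Real.cos_two_mul]; ring
  have hcosnn : 0 ≤ 2*Real.cos (π/(n:ℝ)) := by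
    have h1 : π/(n:ℝ) ≤ π/2 := by
      rw [div_le_div_iff₀ hnR (by norm_num : (0:ℝ) < 2)]
      nlinarith
    have h2 : (0:ℝ) ≤ π/n := by positivity
    have := Real.cos_nonneg_of_mem_Icc (x := π/(n:ℝ)) ⟨by linarith, h1⟩
    linarith
  have hsq : dist (g (g x)) x ^ 2 ≤ (2*Real.cos (π/n) * dist (g x) x)^2 := by
    rw [mul_pow, ← hcos2]
    exact hd
  have hfin := (pow_le_pow_iff_left₀ dist_nonneg
    (mul_nonneg hcosnn dist_nonneg) two_ne_zero).mp hsq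
  exact hfin


end AuxiliaryForDistSqIterate

/-- For an isometry `g` of a real Hilbert space with `gⁿ = 1` and `n ≥ 4`, the distance
between a point and its second iterate is at most `2 cos(π/n)` times the distance
between the point and its first iterate. -/
theorem dist_sq_iterate_le
    {E : Type*} [NormedAddCommGroup E] [InnerProductSpace ℝ E] [CompleteSpace E]
    (n : ℕ) (hn : 4 ≤ n) (g : E ≃ᵢ E) (hg : g ^ n = 1) (x : E) :
    dist (g (g x)) x ≤ 2 * Real.cos (π / n) * dist (g x) x :=
  dist_sq_iterate_le' n hn g hg x
end

section
/- Let k ≥ 2 and let V = {e_i : i ∈ Fin k} ∪ {−e_i : i ∈ Fin k} ⊂ EuclideanSpace ℝ (Fin k) be the vertex set of the regular k-dimensional orthoplex (cross-polytope), where e_i is the standard basis. Let G be the symmetry group of the orthoplex, i.e. the group of linear isometries of EuclideanSpace ℝ (Fin k) mapping V onto itself. Let E be a real Hilbert space, φ : G →* (E ≃ᵢ E) a group homomorphism into the isometry group of E, and f : V → E a G-equivariant family of points, i.e. f(g v) = φ(g)(f v) for all g ∈ G and v ∈ V. Let c ∈ E be a circumcenter of the finite set f(V). Then for every edge of the orthoplex,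 i.e. every pair of vertices u, w ∈ V with u ≠ w and u ≠ −w, one has ⟪f u − c, f w − c⟫ ≤ 0; equivalently ∠(f u, c, f w) ≥ π/2, the angle subtended by an edge of the orthoplex at its center. -/
open Real
open scoped RealInnerProductSpace

/-- The symmetry group of a subset `V` of `ℝᵏ`: the group of all linear isometries of
`EuclideanSpace ℝ (Fin k)` mapping `V` onto itself. -/
noncomputable def symmetryGroup {k : ℕ} (V : Set (EuclideanSpace ℝ (Fin k))) :
    Subgroup (EuclideanSpace ℝ (Fin k) ≃ₗᵢ[ℝ] EuclideanSpace ℝ (Fin k)) where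
  carrier := {g | g '' V = V}
  one_mem' := by simp
  mul_mem' := by
    intro a b ha hb
    simp only [Set.mem_setOf_eq] at ha hb ⊢
    have hab : ⇑(a * b) = ⇑a ∘ ⇑b := rfl
    rw [hab, Set.image_comp, hb, ha]
  inv_mem' := by
    intro a ha
    simp only [Set.mem_setOf_eq] at ha ⊢
    conv_lhs => rw [← ha]
    ext v
    simp only [Set.mem_image]
    constructor
    · rintro ⟨w, ⟨u, hu, rfl⟩, rfl⟩
      simpa using hu
    · intro hv
      exact ⟨a v, ⟨v, hv, rfl⟩, by simp⟩

/-- The vertex set of the regular `k`-dimensional orthoplex (cross-polytope). -/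
noncomputable def orthoplexVertices (k : ℕ) : Set (EuclideanSpace ℝ (Fin k)) :=
  {v | ∃ i : Fin k, v = EuclideanSpace.single i (1 : ℝ) ∨
    v = -EuclideanSpace.single i (1 : ℝ)}

section AuxLemmas

variable {E : Type*} [NormedAddCommGroup E] [InnerProductSpace ℝ E]

/-- An isometry fixing `c` preserves inner products of differences from `c`. -/
lemma isom_fix_inner (ψ : E ≃ᵢ E) {c : E} (hc : ψ c = c) (x y : E) :
    ⟪ψ x - c, ψ y - c⟫ = ⟪x - c, y - c⟫ := by
  have h1 : ‖ψ x - c‖ = ‖x - c‖ := by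
    conv_lhs => rw [← hc]
    simpa [dist_eq_norm] using ψ.isometry.dist_eq x c
  have h2 : ‖ψ y - c‖ = ‖y - c‖ := by
    conv_lhs => rw [← hc]
    simpa [dist_eq_norm] using ψ.isometry.dist_eq y c
  have h3 : ‖ψ x - c - (ψ y - c)‖ = ‖x - c - (y - c)‖ := by
    simp only [sub_sub_sub_cancel_right]
    simpa [dist_eq_norm] using ψ.isometry.dist_eq x y
  have e1 := norm_sub_sq_real (ψ x - c) (ψ y - c)
  have e2 := norm_sub_sq_real (x - c) (y - c)
  rw [h1, h2, h3] at e1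
  linarith

lemma orthoplexVertices_finite (k : ℕ) : (orthoplexVertices k).Finite := by
  have h : orthoplexVertices k ⊆
      (Set.range fun i : Fin k => EuclideanSpace.single i (1 : ℝ)) ∪
      (Set.range fun i : Fin k => -EuclideanSpace.single i (1 : ℝ)) := by
    rintro v ⟨i, h | h⟩
    · exact Or.inl ⟨i, h.symm⟩
    · exact Or.inr ⟨i, h.symm⟩
  exact ((Set.finite_range _).union (Set.finite_range _)).subset h

lemma smul_single_mem {k : ℕ} (i : Fin k) {ε : ℝ} (hε : ε = 1 ∨ ε = -1) :
    ε • EuclideanSpace.single i (1 : ℝ) ∈ orthoplexVertices k := by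
  rcases hε with rfl | rfl
  · exact ⟨i, Or.inl (by simp)⟩
  · exact ⟨i, Or.inr (by simp)⟩

lemma vertex_repr {k : ℕ} {v : EuclideanSpace ℝ (Fin k)} (hv : v ∈ orthoplexVertices k) :
    ∃ i : Fin k, ∃ ε : ℝ, (ε = 1 ∨ ε = -1) ∧ v = ε • EuclideanSpace.single i (1 : ℝ) := by
  obtain ⟨i, h | h⟩ := hv
  · exact ⟨i, 1, Or.inl rfl, by simpa using h⟩
  · exact ⟨i, -1, Or.inr rfl, by simpa using h⟩

/-- Sign-change isometry of Euclidean space. -/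
noncomputable def signFlip {k : ℕ} (s : Fin k → ℝ) (hs : ∀ j, s j = 1 ∨ s j = -1) :
    EuclideanSpace ℝ (Fin k) ≃ₗᵢ[ℝ] EuclideanSpace ℝ (Fin k) :=
  LinearEquiv.isometryOfInner
    { toFun := fun v => WithLp.toLp 2 (fun j => s j * v j)
      invFun := fun v => WithLp.toLp 2 (fun j => s j * v j)
      map_add' := by
        intro a b; ext j
        show s j * (a j + b j) = s j * a j + s j * b j
        ring
      map_smul' := by
        intro m a; ext j
        show s j * (m * a j) = m * (s j * a j)
        ring
      left_inv := by
        intro v; ext j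
        show s j * (s j * v j) = v j
        rcases hs j with h | h <;> rw [h] <;> ring
      right_inv := by
        intro v; ext j
        show s j * (s j * v j) = v j
        rcases hs j with h | h <;> rw [h] <;> ring }
    (by
      intro x y
      simp only [PiLp.inner_apply, RCLike.inner_apply, conj_trivial, LinearEquiv.coe_mk]
      refine Finset.sum_congr rfl fun j _ => ?_
      show s j * y j * (s j * x j) = y j * x j
      rcases hs j with h | h <;> rw [h] <;> ring)

lemma signFlip_apply {k : ℕ} (s : Fin k → ℝ) (hs : ∀ j, s j = 1 ∨ s j = -1)
    (x : EuclideanSpace ℝ (Fin k)) (j : Fin k) : signFlip s hs x j = s j * x j := rfl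

/-- Signed permutation isometry. -/
noncomputable def signedPerm {k : ℕ} (σ : Equiv.Perm (Fin k)) (s : Fin k → ℝ)
    (hs : ∀ j, s j = 1 ∨ s j = -1) :
    EuclideanSpace ℝ (Fin k) ≃ₗᵢ[ℝ] EuclideanSpace ℝ (Fin k) :=
  (LinearIsometryEquiv.piLpCongrLeft 2 ℝ ℝ σ).trans (signFlip s hs)

lemma signedPerm_single {k : ℕ} (σ : Equiv.Perm (Fin k)) (s : Fin k → ℝ)
    (hs : ∀ j, s j = 1 ∨ s j = -1) (i : Fin k) :
    signedPerm σ s hs (EuclideanSpace.single i (1 : ℝ)) =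
      s (σ i) • EuclideanSpace.single (σ i) (1 : ℝ) := by
  have h1 : (LinearIsometryEquiv.piLpCongrLeft 2 ℝ ℝ σ) (EuclideanSpace.single i (1 : ℝ)) =
      EuclideanSpace.single (σ i) (1 : ℝ) := by
    ext j
    show EuclideanSpace.single i (1 : ℝ) (σ.symm j) = EuclideanSpace.single (σ i) (1 : ℝ) j
    simp [EuclideanSpace.single_apply, Equiv.symm_apply_eq]
  rw [signedPerm, LinearIsometryEquiv.trans_apply, h1]
  ext j
  rw [signFlip_apply]
  simp only [PiLp.smul_apply, EuclideanSpace.single_apply, smul_eq_mul]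
  by_cases h : j = σ i <;> simp [h]

lemma mem_symmetryGroup_of_mapsTo {k : ℕ}
    (g : EuclideanSpace ℝ (Fin k) ≃ₗᵢ[ℝ] EuclideanSpace ℝ (Fin k))
    (h : ∀ v ∈ orthoplexVertices k, g v ∈ orthoplexVertices k) :
    g ∈ symmetryGroup (orthoplexVertices k) := by
  show g '' orthoplexVertices k = orthoplexVertices k
  refine Set.eq_of_subset_of_ncard_le ?_ ?_ (orthoplexVertices_finite k)
  · rintro _ ⟨v, hv, rfl⟩; exact h v hv
  · rw [Set.ncard_image_of_injective _ g.injective]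

lemma signedPerm_mem {k : ℕ} (σ : Equiv.Perm (Fin k)) (s : Fin k → ℝ)
    (hs : ∀ j, s j = 1 ∨ s j = -1) :
    signedPerm σ s hs ∈ symmetryGroup (orthoplexVertices k) := by
  apply mem_symmetryGroup_of_mapsTo
  intro v hv
  obtain ⟨i, ε, hε, rfl⟩ := vertex_repr hv
  rw [map_smul, signedPerm_single, smul_smul]
  apply smul_single_mem
  rcases hε with rfl | rfl <;> rcases hs (σ i) with h | h <;> rw [h] <;> norm_num

end AuxLemmas

set_option maxHeartbeats 2000000 in
/-- If the symmetry group of the regular `k`-orthoplex acts by isometries on a real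
Hilbert space `E`, equivariantly on a family of points `f` indexed by the vertices, then
any two points of the family corresponding to an edge subtend, at the circumcenter of
the family, an angle at least `π/2` — the angle of an edge at the center. -/
theorem orthoplex_angle_ge
    (k : ℕ) (hk : 2 ≤ k)
    {E : Type*} [NormedAddCommGroup E] [InnerProductSpace ℝ E] [CompleteSpace E]
    (φ : symmetryGroup (orthoplexVertices k) →* (E ≃ᵢ E))
    (f : orthoplexVertices k → E)
    (hequiv : ∀ (g : symmetryGroup (orthoplexVertices k)) (v w : orthoplexVertices k),
      (g : EuclideanSpace ℝ (Fin k) ≃ₗᵢ[ℝ] EuclideanSpace ℝ (Fin k)) (v : EuclideanSpace ℝ (Fin k)) = (w : EuclideanSpace ℝ (Fin k)) →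
        f w = φ g (f v))
    (c : E)
    (hc : ∀ y : E,
      (⨆ v : orthoplexVertices k, dist c (f v)) ≤ ⨆ v : orthoplexVertices k, dist y (f v)) :
    ∀ u w : orthoplexVertices k,
      (u : EuclideanSpace ℝ (Fin k)) ≠ (w : EuclideanSpace ℝ (Fin k)) →
      (u : EuclideanSpace ℝ (Fin k)) ≠ -(w : EuclideanSpace ℝ (Fin k)) →
      ⟪f u - c, f w - c⟫ ≤ 0 ∧ π / 2 ≤ EuclideanGeometry.angle (f u) c (f w) := by
  intro u w huw hneg
  classical
  haveI : Fintype ↥(orthoplexVertices k) := (orthoplexVertices_finite k).fintype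
  haveI : Nonempty ↥(orthoplexVertices k) := ⟨u⟩
  have bdd : ∀ y : E, BddAbove (Set.range fun v : orthoplexVertices k => dist y (f v)) :=
    fun y => (Set.finite_range _).bddAbove
  set r := ⨆ v : orthoplexVertices k, dist c (f v) with hrdef
  have hr0 : 0 ≤ r := le_trans dist_nonneg (le_ciSup (bdd c) u)
  have hmemg : ∀ (g : symmetryGroup (orthoplexVertices k)) (v : orthoplexVertices k),
      ((g : EuclideanSpace ℝ (Fin k) ≃ₗᵢ[ℝ] EuclideanSpace ℝ (Fin k)) (v : EuclideanSpace ℝ (Fin k)))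
        ∈ orthoplexVertices k := by
    intro g v
    have hg : (g : EuclideanSpace ℝ (Fin k) ≃ₗᵢ[ℝ] EuclideanSpace ℝ (Fin k)) '' orthoplexVertices k
        = orthoplexVertices k := g.2
    have h2 : (g : EuclideanSpace ℝ (Fin k) ≃ₗᵢ[ℝ] EuclideanSpace ℝ (Fin k)) (v : EuclideanSpace ℝ (Fin k))
        ∈ (g : EuclideanSpace ℝ (Fin k) ≃ₗᵢ[ℝ] EuclideanSpace ℝ (Fin k)) '' orthoplexVertices k :=
      ⟨v, v.2, rfl⟩
    rwa [hg] at h2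
  -- φ g fixes the circumcenter
  have hfix : ∀ g : symmetryGroup (orthoplexVertices k), φ g c = c := by
    intro g
    set ψ := φ g with hψ
    have hsup_le : (⨆ v : orthoplexVertices k, dist (ψ c) (f v)) ≤ r := by
      apply ciSup_le
      intro v
      have hg : (g : EuclideanSpace ℝ (Fin k) ≃ₗᵢ[ℝ] EuclideanSpace ℝ (Fin k)) '' orthoplexVertices k
          = orthoplexVertices k := g.2
      have hv' : (v : EuclideanSpace ℝ (Fin k)) ∈
          (g : EuclideanSpace ℝ (Fin k) ≃ₗᵢ[ℝ] EuclideanSpace ℝ (Fin k)) '' orthoplexVertices k := by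
        rw [hg]; exact v.2
      obtain ⟨x, hx, hgx⟩ := hv'
      have heq : f v = ψ (f ⟨x, hx⟩) := hequiv g ⟨x, hx⟩ v hgx
      rw [heq, ψ.dist_eq]
      exact le_ciSup (bdd c) ⟨x, hx⟩
    by_contra hne
    have hd : 0 < dist c (ψ c) := dist_pos.mpr (fun h => hne h.symm)
    set m : E := (2⁻¹ : ℝ) • (c + ψ c) with hm
    obtain ⟨v0, hv0⟩ := Finite.exists_max fun v : orthoplexVertices k => dist m (f v)
    have h1 : r ≤ dist m (f v0) := le_trans (hc m) (ciSup_le hv0)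
    have hd1 : dist c (f v0) ≤ r := le_ciSup (bdd c) v0
    have hd2 : dist (ψ c) (f v0) ≤ r := le_trans (le_ciSup (bdd (ψ c)) v0) hsup_le
    have hmsub : f v0 - m = (2⁻¹ : ℝ) • ((f v0 - c) + (f v0 - ψ c)) := by
      rw [hm]; module
    have hpar := parallelogram_law_with_norm ℝ (f v0 - c) (f v0 - ψ c)
    have hmn : dist m (f v0) = 2⁻¹ * ‖(f v0 - c) + (f v0 - ψ c)‖ := by
      rw [dist_comm, dist_eq_norm, hmsub, norm_smul]
      norm_num
    have hsub : (f v0 - c) - (f v0 - ψ c) = ψ c - c := by abel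
    rw [hsub] at hpar
    have hdc : ‖ψ c - c‖ = dist c (ψ c) := by rw [dist_eq_norm']
    have e1 : ‖f v0 - c‖ = dist c (f v0) := by rw [dist_comm, dist_eq_norm]
    have e2 : ‖f v0 - ψ c‖ = dist (ψ c) (f v0) := by rw [dist_comm, dist_eq_norm]
    rw [hdc, e1, e2] at hpar
    nlinarith [h1, hd1, hd2, hd, hmn, hpar, hr0, dist_nonneg (x := c) (y := f v0),
      dist_nonneg (x := ψ c) (y := f v0)]
  -- inner products from the center are invariant
  have hmove : ∀ (g : symmetryGroup (orthoplexVertices k)) (v v' x x' : orthoplexVertices k),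
      (g : EuclideanSpace ℝ (Fin k) ≃ₗᵢ[ℝ] EuclideanSpace ℝ (Fin k)) (v : EuclideanSpace ℝ (Fin k)) = (v' : EuclideanSpace ℝ (Fin k)) →
      (g : EuclideanSpace ℝ (Fin k) ≃ₗᵢ[ℝ] EuclideanSpace ℝ (Fin k)) (x : EuclideanSpace ℝ (Fin k)) = (x' : EuclideanSpace ℝ (Fin k)) →
      ⟪f v' - c, f x' - c⟫ = ⟪f v - c, f x - c⟫ := by
    intro g v v' x x' hv hx
    rw [hequiv g v v' hv, hequiv g x x' hx]
    exact isom_fix_inner (φ g) (hfix g) _ _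
  set T : orthoplexVertices k → ℝ := fun v => ∑ x : orthoplexVertices k, ⟪f v - c, f x - c⟫
    with hT
  have hTconst : ∀ v v' : orthoplexVertices k,
      (∃ g : symmetryGroup (orthoplexVertices k),
        (g : EuclideanSpace ℝ (Fin k) ≃ₗᵢ[ℝ] EuclideanSpace ℝ (Fin k)) (v : EuclideanSpace ℝ (Fin k)) = (v' : EuclideanSpace ℝ (Fin k))) →
      T v = T v' := by
    rintro v v' ⟨g, hg⟩
    set F : orthoplexVertices k → orthoplexVertices k := fun x => ⟨_, hmemg g x⟩ with hF
    have hFinj : Function.Injective F := by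
      intro a b hab
      have h2 := congrArg Subtype.val hab
      exact Subtype.ext ((g : EuclideanSpace ℝ (Fin k) ≃ₗᵢ[ℝ] EuclideanSpace ℝ (Fin k)).injective h2)
    have hFbij := Finite.injective_iff_bijective.mp hFinj
    have hstep : ∀ x : orthoplexVertices k, ⟪f v - c, f x - c⟫ = ⟪f v' - c, f (F x) - c⟫ :=
      fun x => (hmove g v v' x (F x) hg rfl).symm
    calc T v = ∑ x : orthoplexVertices k, ⟪f v' - c, f (F x) - c⟫ :=
          Finset.sum_congr rfl (fun x _ => hstep x)
      _ = ∑ x : orthoplexVertices k, ⟪f v' - c, f x - c⟫ :=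
          hFbij.sum_comp (fun x => ⟪f v' - c, f x - c⟫)
      _ = T v' := rfl
  -- transitivity on vertices
  have htrans : ∀ v v' : orthoplexVertices k,
      ∃ g : symmetryGroup (orthoplexVertices k),
        (g : EuclideanSpace ℝ (Fin k) ≃ₗᵢ[ℝ] EuclideanSpace ℝ (Fin k)) (v : EuclideanSpace ℝ (Fin k)) = (v' : EuclideanSpace ℝ (Fin k)) := by
    intro v v'
    obtain ⟨i, ε, hε, hv⟩ := vertex_repr v.2
    obtain ⟨i', ε', hε', hv'⟩ := vertex_repr v'.2
    set σ : Equiv.Perm (Fin k) := Equiv.swap i i' with hσdef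
    set s : Fin k → ℝ := fun j => if j = i' then ε * ε' else 1 with hsdef
    have hs : ∀ j, s j = 1 ∨ s j = -1 := by
      intro j
      rw [hsdef]
      dsimp only
      split
      · rcases hε with rfl | rfl <;> rcases hε' with rfl | rfl <;> norm_num
      · left; rfl
    refine ⟨⟨signedPerm σ s hs, signedPerm_mem σ s hs⟩, ?_⟩
    show signedPerm σ s hs _ = _
    rw [hv, hv', map_smul, signedPerm_single]
    have hσ : σ i = i' := Equiv.swap_apply_left i i'
    have hsi' : s i' = ε * ε' := by rw [hsdef]; simp
    rw [hσ, hsi', smul_smul]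
    rcases hε with rfl | rfl <;> norm_num
  -- the common value of T is nonpositive
  have ht0 : T u ≤ 0 := by
    by_contra hpos
    push_neg at hpos
    have hS : ∃ S : E, S = ∑ v : orthoplexVertices k, (f v - c) := ⟨_, rfl⟩
    obtain ⟨S, hS⟩ := hS
    have hTS : ∀ v : orthoplexVertices k, ⟪f v - c, S⟫ = T u := by
      intro v
      rw [hS, inner_sum]
      exact hTconst v u (htrans v u)
    have hSS : ⟪S, S⟫ = (Fintype.card (orthoplexVertices k) : ℝ) * T u := by
      have h2 : ⟪S, S⟫ = ∑ v : orthoplexVertices k, ⟪f v - c, S⟫ := by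
        rw [hS]
        exact sum_inner _ _ _
      rw [h2]
      simp only [hTS]
      rw [Finset.sum_const, nsmul_eq_mul, Finset.card_univ]
    have hcard0 : (0 : ℝ) < Fintype.card (orthoplexVertices k) := by
      exact_mod_cast Fintype.card_pos
    have hSnorm : 0 < ‖S‖ ^ 2 := by
      rw [← real_inner_self_eq_norm_sq, hSS]
      exact mul_pos hcard0 hpos
    have hSne : ‖S‖ ^ 2 ≠ 0 := ne_of_gt hSnorm
    set δ : ℝ := T u ^ 2 / ‖S‖ ^ 2 with hδ
    have hδpos : 0 < δ := div_pos (pow_pos hpos 2) hSnorm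
    set y : E := c + (T u / ‖S‖ ^ 2) • S with hy
    have hkey : ∀ v : orthoplexVertices k, dist y (f v) ^ 2 = dist c (f v) ^ 2 - δ := by
      intro v
      have h1 : dist y (f v) = ‖(f v - c) - (T u / ‖S‖ ^ 2) • S‖ := by
        rw [dist_eq_norm', hy]
        congr 1
        abel
      have hcv : dist c (f v) = ‖f v - c‖ := by rw [dist_comm, dist_eq_norm]
      have e2 : ‖(f v - c) - (T u / ‖S‖ ^ 2) • S‖ ^ 2
          = ‖f v - c‖ ^ 2 - 2 * ((T u / ‖S‖ ^ 2) * T u) + (T u / ‖S‖ ^ 2) ^ 2 * ‖S‖ ^ 2 := by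
        rw [norm_sub_sq_real, real_inner_smul_right, hTS v, norm_smul, Real.norm_eq_abs]
        rw [mul_pow, sq_abs]
      rw [h1, e2, hcv, hδ]
      field_simp
      ring
    have hrv : ∀ v : orthoplexVertices k, dist c (f v) ≤ r := fun v => le_ciSup (bdd c) v
    have hnn : 0 ≤ r ^ 2 - δ := by
      have h3 := hkey u
      nlinarith [sq_nonneg (dist y (f u)), hrv u, dist_nonneg (x := c) (y := f u)]
    have hylt : ∀ v : orthoplexVertices k, dist y (f v) ≤ Real.sqrt (r ^ 2 - δ) := by
      intro v
      rw [← Real.sqrt_sq dist_nonneg]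
      apply Real.sqrt_le_sqrt
      rw [hkey v]
      nlinarith [hrv v, dist_nonneg (x := c) (y := f v)]
    have hry : r ≤ Real.sqrt (r ^ 2 - δ) := le_trans (hc y) (ciSup_le hylt)
    have hsq := Real.sq_sqrt hnn
    nlinarith [hry, hsq, hr0, hδpos, Real.sqrt_nonneg (r ^ 2 - δ)]
  -- representations of u and w
  obtain ⟨i, ε, hε, hu⟩ := vertex_repr u.2
  obtain ⟨j, εw, hεw, hw⟩ := vertex_repr w.2
  have hij : i ≠ j := by
    rintro rfl
    rcases hε with rfl | rfl <;> rcases hεw with rfl | rfl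
    · exact huw (hu.trans hw.symm)
    · exact hneg (by rw [hu, hw]; simp)
    · exact hneg (by rw [hu, hw]; simp)
    · exact huw (hu.trans hw.symm)
  have hnu_mem : -(u : EuclideanSpace ℝ (Fin k)) ∈ orthoplexVertices k := by
    rw [hu, ← neg_smul]
    apply smul_single_mem
    rcases hε with rfl | rfl <;> norm_num
  set nu : orthoplexVertices k := ⟨-(u : EuclideanSpace ℝ (Fin k)), hnu_mem⟩ with hnudef
  have hnorm : ‖f nu - c‖ = ‖f u - c‖ := by
    obtain ⟨g, hg⟩ := htrans u nu
    rw [hequiv g u nu hg]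
    calc ‖φ g (f u) - c‖ = ‖φ g (f u) - φ g c‖ := by rw [hfix g]
      _ = dist (φ g (f u)) (φ g c) := (dist_eq_norm _ _).symm
      _ = dist (f u) c := (φ g).dist_eq _ _
      _ = ‖f u - c‖ := dist_eq_norm _ _
  have hu_ne_nu : u ≠ nu := by
    intro h
    have h0 : (u : EuclideanSpace ℝ (Fin k)) = -(u : EuclideanSpace ℝ (Fin k)) :=
      congrArg Subtype.val h
    have h1 : (u : EuclideanSpace ℝ (Fin k)) i = ε := by
      rw [hu]
      simp [PiLp.smul_apply, EuclideanSpace.single_apply]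
    have h2 : (-(u : EuclideanSpace ℝ (Fin k))) i = -ε := by
      rw [PiLp.neg_apply, h1]
    rw [h0] at h1
    rw [h2] at h1
    rcases hε with rfl | rfl <;> norm_num at h1
  have hw_ne_u : w ≠ u := fun h => huw (by rw [h])
  have hw_ne_nu : w ≠ nu := by
    intro h
    apply hneg
    have h0 : (w : EuclideanSpace ℝ (Fin k)) = -(u : EuclideanSpace ℝ (Fin k)) :=
      congrArg Subtype.val h
    rw [h0]
    simp
  set tv : ℝ := ⟪f u - c, f w - c⟫ with htv
  set t2 : Finset (orthoplexVertices k) := (Finset.univ.erase u).erase nu with ht2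
  have hconst : ∀ x ∈ t2, ⟪f u - c, f x - c⟫ = tv := by
    intro x hx
    obtain ⟨i'', ε'', hε'', hxr⟩ := vertex_repr x.2
    have hxnu : x ≠ nu := (Finset.mem_erase.mp hx).1
    have hxu : x ≠ u := (Finset.mem_erase.mp (Finset.mem_erase.mp hx).2).1
    have hi'' : i'' ≠ i := by
      rintro rfl
      rcases hε with rfl | rfl <;> rcases hε'' with rfl | rfl
      · exact hxu (Subtype.ext (hxr.trans hu.symm))
      · refine hxnu (Subtype.ext ?_)
        rw [hxr]
        show _ = -(u : EuclideanSpace ℝ (Fin k))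
        rw [hu]; simp
      · refine hxnu (Subtype.ext ?_)
        rw [hxr]
        show _ = -(u : EuclideanSpace ℝ (Fin k))
        rw [hu]; simp
      · exact hxu (Subtype.ext (hxr.trans hu.symm))
    set σ2 : Equiv.Perm (Fin k) := Equiv.swap j i'' with hσ2def
    set s2 : Fin k → ℝ := fun j2 => if j2 = i'' then εw * ε'' else 1 with hs2def
    have hs2 : ∀ j2, s2 j2 = 1 ∨ s2 j2 = -1 := by
      intro j2
      rw [hs2def]
      dsimp only
      split
      · rcases hεw with rfl | rfl <;> rcases hε'' with rfl | rfl <;> norm_num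
      · left; rfl
    have hgu : signedPerm σ2 s2 hs2 (u : EuclideanSpace ℝ (Fin k)) = (u : EuclideanSpace ℝ (Fin k)) := by
      rw [hu, map_smul, signedPerm_single]
      have hσi : σ2 i = i := Equiv.swap_apply_of_ne_of_ne hij (Ne.symm hi'')
      have hsi : s2 i = 1 := by rw [hs2def]; exact if_neg (Ne.symm hi'')
      rw [hσi, hsi, one_smul]
    have hgw : signedPerm σ2 s2 hs2 (w : EuclideanSpace ℝ (Fin k)) = (x : EuclideanSpace ℝ (Fin k)) := by
      rw [hw, map_smul, signedPerm_single]
      have hσj : σ2 j = i'' := Equiv.swap_apply_left j i''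
      have hsj : s2 i'' = εw * ε'' := by rw [hs2def]; simp
      rw [hσj, hsj, smul_smul, hxr]
      rcases hεw with rfl | rfl <;> norm_num
    exact hmove ⟨signedPerm σ2 s2 hs2, signedPerm_mem σ2 s2 hs2⟩ u u w x hgu hgw
  have hsum : T u = ‖f u - c‖ ^ 2 + ⟪f u - c, f nu - c⟫ + (t2.card : ℝ) * tv := by
    have e1 : (∑ x ∈ Finset.univ.erase u, ⟪f u - c, f x - c⟫) + ⟪f u - c, f u - c⟫ = T u :=
      Finset.sum_erase_add _ _ (Finset.mem_univ u)
    have e2 : (∑ x ∈ t2, ⟪f u - c, f x - c⟫) + ⟪f u - c, f nu - c⟫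
        = ∑ x ∈ Finset.univ.erase u, ⟪f u - c, f x - c⟫ :=
      Finset.sum_erase_add _ _ (Finset.mem_erase.mpr ⟨Ne.symm hu_ne_nu, Finset.mem_univ nu⟩)
    have e3 : ∑ x ∈ t2, ⟪f u - c, f x - c⟫ = (t2.card : ℝ) * tv := by
      rw [Finset.sum_congr rfl hconst, Finset.sum_const, nsmul_eq_mul]
    rw [← e1, ← e2, e3, real_inner_self_eq_norm_sq]
    ring
  have hwt2 : w ∈ t2 :=
    Finset.mem_erase.mpr ⟨hw_ne_nu, Finset.mem_erase.mpr ⟨hw_ne_u, Finset.mem_univ w⟩⟩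
  have hcardt2 : (1 : ℝ) ≤ t2.card := by
    exact_mod_cast Finset.card_pos.mpr ⟨w, hwt2⟩
  have habs := abs_real_inner_le_norm (f u - c) (f nu - c)
  rw [hnorm] at habs
  have hinner_lb : -(‖f u - c‖ ^ 2) ≤ ⟪f u - c, f nu - c⟫ := by
    have h5 := neg_abs_le ⟪f u - c, f nu - c⟫
    have h6 : ‖f u - c‖ ^ 2 = ‖f u - c‖ * ‖f u - c‖ := pow_two _
    linarith [habs, h5]
  have htvle : tv ≤ 0 := by
    by_contra hpos
    push_neg at hpos
    have h7 : tv ≤ (t2.card : ℝ) * tv := le_mul_of_one_le_left (le_of_lt hpos) hcardt2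
    linarith [ht0, hsum, hinner_lb, h7]
  refine ⟨htvle, ?_⟩
  have hangle : EuclideanGeometry.angle (f u) c (f w)
      = Real.arccos (⟪f u - c, f w - c⟫ / (‖f u - c‖ * ‖f w - c‖)) := by
    rw [EuclideanGeometry.angle, InnerProductGeometry.angle, vsub_eq_sub, vsub_eq_sub]
  rw [hangle, Real.arccos_eq_pi_div_two_sub_arcsin]
  have hq : ⟪f u - c, f w - c⟫ / (‖f u - c‖ * ‖f w - c‖) ≤ 0 :=
    div_nonpos_of_nonpos_of_nonneg htvle (mul_nonneg (norm_nonneg _) (norm_nonneg _))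
  have h6 := Real.arcsin_nonpos.mpr hq
  linarith
end

section
/- Let k ≥ 2 and let V = {v ∈ EuclideanSpace ℝ (Fin k) : ∀ i, v i = 1 ∨ v i = −1} be the vertex set of the regular k-dimensional hypercube. Let G be the symmetry group of the hypercube, i.e. the group of linear isometries of EuclideanSpace ℝ (Fin k) mapping V onto itself. Let E be a real Hilbert space, φ : G →* (E ≃ᵢ E) a group homomorphism into the isometry group of E, and f : V → E a G-equivariant family of points, i.e. f(g v) = φ(g)(f v) for all g ∈ G and v ∈ V. Let c ∈ E be a circumcenter of the finite set f(V). Then for every edge of the hypercube, i.e. every pair of vertices u, w ∈ V differing in exactly one coordinate, one has ∠(f u, c, f w) ≥ arccos(1 − 2/k), the angle subtended by an edge of the hypercube at its center. -/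
open Real
open scoped RealInnerProductSpace

/-- The vertex set of the regular `k`-dimensional hypercube. -/
noncomputable def hypercubeVertices (k : ℕ) : Set (EuclideanSpace ℝ (Fin k)) :=
  {v | ∀ i : Fin k, v i = 1 ∨ v i = -1}

namespace HypercubeProofAux

noncomputable section

def sgn (b : Bool) : ℝ := if b then -1 else 1

lemma sgn_mul_self (b : Bool) : sgn b * sgn b = 1 := by cases b <;> norm_num [sgn]

variable {k : ℕ}

lemma mem_hypercube_iff (v : EuclideanSpace ℝ (Fin k)) :
    v ∈ hypercubeVertices k ↔ ∀ i, v i = 1 ∨ v i = -1 := Iff.rfl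

def vertF (σ : Fin k → Bool) : EuclideanSpace ℝ (Fin k) := WithLp.toLp 2 (fun i => sgn (σ i))

@[simp] lemma vertF_apply (σ : Fin k → Bool) (i : Fin k) : vertF σ i = sgn (σ i) := rfl

lemma vertF_mem (σ : Fin k → Bool) : vertF σ ∈ hypercubeVertices k := by
  rw [mem_hypercube_iff]
  intro i
  cases h : σ i
  · left; simp [vertF, sgn, h]
  · right; simp [vertF, sgn, h]

def vb (σ : Fin k → Bool) : hypercubeVertices k := ⟨vertF σ, vertF_mem σ⟩

lemma exists_vb (v : hypercubeVertices k) : ∃ σ, vb σ = v := by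
  classical
  refine ⟨fun i => if (v : EuclideanSpace ℝ (Fin k)) i = -1 then true else false, ?_⟩
  apply Subtype.ext
  ext l
  show sgn (if (v : EuclideanSpace ℝ (Fin k)) l = -1 then true else false)
      = (v : EuclideanSpace ℝ (Fin k)) l
  rcases v.2 l with h | h <;> rw [h] <;> norm_num [sgn]

instance : Nonempty (hypercubeVertices k) := ⟨vb (fun _ => false)⟩

instance : Finite (hypercubeVertices k) := by
  have hinj : Function.Injective
      (fun v : hypercubeVertices k => (fun i => (v : EuclideanSpace ℝ (Fin k)) i = 1 : Fin k → Prop)) := by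
    intro v w h
    apply Subtype.ext
    ext i
    have hiff : ((v : EuclideanSpace ℝ (Fin k)) i = 1) = ((w : EuclideanSpace ℝ (Fin k)) i = 1) :=
      congrFun h i
    rcases v.2 i with h1 | h1 <;> rcases w.2 i with h2 | h2
    · rw [h1, h2]
    · exfalso
      rw [h1, h2, eq_iff_iff] at hiff
      have : (-1 : ℝ) = 1 := hiff.mp rfl
      norm_num at this
    · exfalso
      rw [h1, h2, eq_iff_iff] at hiff
      have : (-1 : ℝ) = 1 := hiff.mpr rfl
      norm_num at this
    · rw [h1, h2]
  exact Finite.of_injective _ hinj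

lemma mem_symmetryGroup_of_maps
    {g : EuclideanSpace ℝ (Fin k) ≃ₗᵢ[ℝ] EuclideanSpace ℝ (Fin k)}
    (h1 : ∀ v ∈ hypercubeVertices k, g v ∈ hypercubeVertices k)
    (h2 : ∀ v ∈ hypercubeVertices k, g.symm v ∈ hypercubeVertices k) :
    g ∈ symmetryGroup (hypercubeVertices k) := by
  show ⇑g '' hypercubeVertices k = hypercubeVertices k
  apply Set.Subset.antisymm
  · rintro _ ⟨v, hv, rfl⟩
    exact h1 v hv
  · intro v hv
    exact ⟨g.symm v, h2 v hv, g.apply_symm_apply v⟩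

lemma apply_mem (g : symmetryGroup (hypercubeVertices k)) (v : hypercubeVertices k) :
    (g : EuclideanSpace ℝ (Fin k) ≃ₗᵢ[ℝ] EuclideanSpace ℝ (Fin k)) (v : EuclideanSpace ℝ (Fin k))
      ∈ hypercubeVertices k := by
  have hg : ⇑(g : EuclideanSpace ℝ (Fin k) ≃ₗᵢ[ℝ] EuclideanSpace ℝ (Fin k)) '' hypercubeVertices k
      = hypercubeVertices k := g.2
  have hv : (g : EuclideanSpace ℝ (Fin k) ≃ₗᵢ[ℝ] EuclideanSpace ℝ (Fin k)) (v : EuclideanSpace ℝ (Fin k))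
      ∈ ⇑(g : EuclideanSpace ℝ (Fin k) ≃ₗᵢ[ℝ] EuclideanSpace ℝ (Fin k)) '' hypercubeVertices k :=
    ⟨v, v.2, rfl⟩
  rwa [hg] at hv

def act (g : symmetryGroup (hypercubeVertices k)) (v : hypercubeVertices k) :
    hypercubeVertices k :=
  ⟨(g : EuclideanSpace ℝ (Fin k) ≃ₗᵢ[ℝ] EuclideanSpace ℝ (Fin k)) (v : EuclideanSpace ℝ (Fin k)),
    apply_mem g v⟩

@[simp] lemma act_coe (g : symmetryGroup (hypercubeVertices k)) (v : hypercubeVertices k) :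
    ((act g v : hypercubeVertices k) : EuclideanSpace ℝ (Fin k))
      = (g : EuclideanSpace ℝ (Fin k) ≃ₗᵢ[ℝ] EuclideanSpace ℝ (Fin k)) (v : EuclideanSpace ℝ (Fin k)) := rfl

lemma act_inv_cancel (g : symmetryGroup (hypercubeVertices k)) (v : hypercubeVertices k) :
    act g (act g⁻¹ v) = v := by
  apply Subtype.ext
  show (g : EuclideanSpace ℝ (Fin k) ≃ₗᵢ[ℝ] EuclideanSpace ℝ (Fin k))
      (((g⁻¹ : symmetryGroup (hypercubeVertices k)) : EuclideanSpace ℝ (Fin k) ≃ₗᵢ[ℝ] EuclideanSpace ℝ (Fin k))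
        (v : EuclideanSpace ℝ (Fin k))) = (v : EuclideanSpace ℝ (Fin k))
  rw [InvMemClass.coe_inv, LinearIsometryEquiv.coe_inv]
  exact (g : EuclideanSpace ℝ (Fin k) ≃ₗᵢ[ℝ] EuclideanSpace ℝ (Fin k)).apply_symm_apply _

def flipIso (s : Fin k → Bool) :
    EuclideanSpace ℝ (Fin k) ≃ₗᵢ[ℝ] EuclideanSpace ℝ (Fin k) where
  toLinearEquiv :=
  { toFun := fun v => WithLp.toLp 2 (fun i => sgn (s i) * v i)
    invFun := fun v => WithLp.toLp 2 (fun i => sgn (s i) * v i)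
    map_add' := by
      intro v w; ext i
      simp [PiLp.add_apply, mul_add]
    map_smul' := by
      intro a v; ext i
      simp [PiLp.smul_apply, smul_eq_mul]; ring
    left_inv := by
      intro v; ext i
      show sgn (s i) * (sgn (s i) * v i) = v i
      rw [← mul_assoc, sgn_mul_self, one_mul]
    right_inv := by
      intro v; ext i
      show sgn (s i) * (sgn (s i) * v i) = v i
      rw [← mul_assoc, sgn_mul_self, one_mul] }
  norm_map' := by
    intro v
    rw [EuclideanSpace.norm_eq, EuclideanSpace.norm_eq]
    congr 1
    apply Finset.sum_congr rfl
    intro i _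
    show ‖sgn (s i) * v i‖ ^ 2 = ‖v i‖ ^ 2
    cases s i <;> simp [sgn]

@[simp] lemma flipIso_apply (s : Fin k → Bool) (v : EuclideanSpace ℝ (Fin k)) (i : Fin k) :
    flipIso s v i = sgn (s i) * v i := rfl

@[simp] lemma flipIso_symm_apply (s : Fin k → Bool) (v : EuclideanSpace ℝ (Fin k)) (i : Fin k) :
    (flipIso s).symm v i = sgn (s i) * v i := rfl

def gflip (s : Fin k → Bool) : symmetryGroup (hypercubeVertices k) :=
  ⟨flipIso s, by
    have hmap : ∀ v ∈ hypercubeVertices k, flipIso s v ∈ hypercubeVertices k := by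
      intro v hv
      rw [mem_hypercube_iff]
      intro i
      rcases hv i with h | h <;> cases hs : s i <;>
        simp [h, hs, sgn] <;> norm_num
    apply mem_symmetryGroup_of_maps hmap
    intro v hv
    rw [mem_hypercube_iff]
    intro i
    rcases hv i with h | h <;> cases hs : s i <;>
      simp [h, hs, sgn] <;> norm_num⟩

def xorB (s σ : Fin k → Bool) : Fin k → Bool := fun i => xor (s i) (σ i)

lemma xorB_invol (s : Fin k → Bool) : Function.Involutive (xorB s) := by
  intro σ; funext l
  simp only [xorB]
  cases s l <;> cases σ l <;> rfl

lemma gflip_act (s σ : Fin k → Bool) : act (gflip s) (vb σ) = vb (xorB s σ) := by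
  apply Subtype.ext
  ext i
  show sgn (s i) * sgn (σ i) = sgn (xor (s i) (σ i))
  cases s i <;> cases σ i <;> norm_num [sgn]

def gperm (e : Equiv.Perm (Fin k)) : symmetryGroup (hypercubeVertices k) :=
  ⟨LinearIsometryEquiv.piLpCongrLeft 2 ℝ ℝ e, by
    have happ : ∀ (e' : Equiv.Perm (Fin k)) (v : EuclideanSpace ℝ (Fin k)) (i : Fin k),
        (LinearIsometryEquiv.piLpCongrLeft 2 ℝ ℝ e') v i = v (e'.symm i) := fun _ _ _ => rfl
    have hmap : ∀ (e' : Equiv.Perm (Fin k)), ∀ v ∈ hypercubeVertices k,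
        (LinearIsometryEquiv.piLpCongrLeft 2 ℝ ℝ e') v ∈ hypercubeVertices k := by
      intro e' v hv
      rw [mem_hypercube_iff]
      intro i
      rw [happ]
      exact hv _
    apply mem_symmetryGroup_of_maps (hmap e)
    intro v hv
    rw [LinearIsometryEquiv.piLpCongrLeft_symm]
    exact hmap e.symm v hv⟩

lemma gperm_act (e : Equiv.Perm (Fin k)) (σ : Fin k → Bool) :
    act (gperm e) (vb σ) = vb (σ ∘ e.symm) := by
  apply Subtype.ext
  ext i
  show vertF σ (e.symm i) = sgn (σ (e.symm i))
  rfl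


/-- characters of the group `(Fin k → Bool)`. -/
def chi (T σ : Fin k → Bool) : ℝ := ∏ i, if T i && σ i then -1 else 1

lemma chi_bot (σ : Fin k → Bool) : chi (fun _ => false) σ = 1 := by
  simp [chi]

lemma chi_ortho (σ τ : Fin k → Bool) :
    ∑ T : Fin k → Bool, chi T σ * chi T τ = if σ = τ then (2:ℝ)^k else 0 := by
  classical
  have h1 : ∀ T : Fin k → Bool, chi T σ * chi T τ
      = ∏ i, ((if T i && σ i then (-1:ℝ) else 1) * (if T i && τ i then -1 else 1)) := by
    intro T; rw [Finset.prod_mul_distrib]; rfl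
  rw [Finset.sum_congr rfl fun T _ => h1 T]
  have h2 : ∑ T : Fin k → Bool,
        ∏ i, ((if T i && σ i then (-1:ℝ) else 1) * (if T i && τ i then -1 else 1))
      = ∏ i : Fin k, ∑ b : Bool, ((if b && σ i then (-1:ℝ) else 1) * (if b && τ i then -1 else 1)) := by
    rw [Finset.prod_univ_sum]
    rw [Fintype.piFinset_univ]
  rw [h2]
  have h3 : ∀ i : Fin k, (∑ b : Bool, ((if b && σ i then (-1:ℝ) else 1) * (if b && τ i then -1 else 1)))
      = if σ i = τ i then 2 else 0 := by
    intro i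
    rw [Fintype.sum_bool]
    cases hσ : σ i <;> cases hτ : τ i <;> norm_num
  rw [Finset.prod_congr rfl fun i _ => h3 i]
  by_cases h : σ = τ
  · subst h
    simp [Finset.prod_const]
  · rw [if_neg h]
    obtain ⟨i, hi⟩ := Function.ne_iff.mp h
    exact Finset.prod_eq_zero (Finset.mem_univ i) (if_neg hi)

variable {F : Type*} [NormedAddCommGroup F] [InnerProductSpace ℝ F]

lemma parseval (x : (Fin k → Bool) → F) :
    ∑ T : Fin k → Bool, ‖∑ σ : Fin k → Bool, chi T σ • x σ‖ ^ 2
      = 2^k * ∑ σ : Fin k → Bool, ‖x σ‖^2 := by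
  have expand : ∀ T : Fin k → Bool, ‖∑ σ : Fin k → Bool, chi T σ • x σ‖^2
      = ∑ σ : Fin k → Bool, ∑ τ : Fin k → Bool, (chi T σ * chi T τ) * ⟪x σ, x τ⟫ := by
    intro T
    rw [← real_inner_self_eq_norm_sq, sum_inner]
    refine Finset.sum_congr rfl fun σ _ => ?_
    rw [inner_sum]
    refine Finset.sum_congr rfl fun τ _ => ?_
    rw [real_inner_smul_left, real_inner_smul_right]
    ring
  rw [Finset.sum_congr rfl fun T _ => expand T]
  rw [Finset.sum_comm]
  have h4 : ∀ σ : Fin k → Bool,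
      (∑ T : Fin k → Bool, ∑ τ : Fin k → Bool, (chi T σ * chi T τ) * ⟪x σ, x τ⟫)
        = 2^k * ‖x σ‖^2 := by
    intro σ
    rw [Finset.sum_comm]
    have h5 : ∀ τ : Fin k → Bool,
        (∑ T : Fin k → Bool, (chi T σ * chi T τ) * ⟪x σ, x τ⟫)
          = (if σ = τ then (2:ℝ)^k else 0) * ⟪x σ, x τ⟫ := by
      intro τ
      rw [← Finset.sum_mul, chi_ortho]
    rw [Finset.sum_congr rfl fun τ _ => h5 τ]
    have h6 : ∀ τ : Fin k → Bool, (if σ = τ then (2:ℝ)^k else 0) * ⟪x σ, x τ⟫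
        = if σ = τ then (2:ℝ)^k * ⟪x σ, x τ⟫ else 0 := by
      intro τ; split <;> simp
    rw [Finset.sum_congr rfl fun τ _ => h6 τ, Finset.sum_ite_eq]
    simp [real_inner_self_eq_norm_sq]
  rw [Finset.sum_congr rfl fun σ _ => h4 σ, ← Finset.mul_sum]

lemma update_invol (j : Fin k) :
    Function.Involutive (fun σ : Fin k → Bool => Function.update σ j (!σ j)) := by
  intro σ; funext l
  by_cases h : l = j
  · subst h; simp
  · simp [Function.update_of_ne h]

lemma chi_update (T σ : Fin k → Bool) (j : Fin k) :
    chi T (Function.update σ j (!σ j)) = (if T j then -1 else 1) * chi T σ := by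
  unfold chi
  rw [← Finset.prod_erase_mul Finset.univ _ (Finset.mem_univ j),
      ← Finset.prod_erase_mul Finset.univ _ (Finset.mem_univ j)]
  have h1 : ∀ i ∈ Finset.univ.erase j,
      (if T i && (Function.update σ j (!σ j)) i then (-1:ℝ) else 1) = if T i && σ i then -1 else 1 := by
    intro i hi
    rw [Function.update_of_ne (Finset.ne_of_mem_erase hi)]
  rw [Finset.prod_congr rfl h1, Function.update_self]
  cases hT : T j <;> cases hσ : σ j <;> simp <;> ring

lemma coeff_flip (x : (Fin k → Bool) → F) (j : Fin k) (T : Fin k → Bool) :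
    ∑ σ : Fin k → Bool, chi T σ • (x σ - x (Function.update σ j (!σ j)))
      = (1 - (if T j then (-1:ℝ) else 1)) • ∑ σ : Fin k → Bool, chi T σ • x σ := by
  have hinv := update_invol (k := k) j
  have h2 : ∑ σ : Fin k → Bool, chi T σ • x (Function.update σ j (!σ j))
      = (if T j then (-1:ℝ) else 1) • ∑ σ : Fin k → Bool, chi T σ • x σ := by
    rw [Finset.smul_sum]
    refine Fintype.sum_bijective (fun σ : Fin k → Bool => Function.update σ j (!σ j))
      hinv.bijective _ _ ?_
    intro σ
    show chi T σ • x (Function.update σ j (!σ j))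
      = (if T j then (-1:ℝ) else 1) • (chi T (Function.update σ j (!σ j)) • x (Function.update σ j (!σ j)))
    rw [smul_smul, chi_update]
    congr 1
    cases T j <;> norm_num
  simp only [smul_sub, Finset.sum_sub_distrib, h2, sub_smul, one_smul]

lemma poincare (x : (Fin k → Bool) → F) (hsum : ∑ σ : Fin k → Bool, x σ = 0) :
    4 * ∑ σ : Fin k → Bool, ‖x σ‖^2
      ≤ ∑ j : Fin k, ∑ σ : Fin k → Bool, ‖x σ - x (Function.update σ j (!σ j))‖^2 := by
  classical
  set X : (Fin k → Bool) → F := fun T => ∑ σ : Fin k → Bool, chi T σ • x σ with hX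
  have hXbot : X (fun _ => false) = 0 := by
    simp only [hX, chi_bot, one_smul, hsum]
  have key : ∀ j : Fin k, (2:ℝ)^k * ∑ σ : Fin k → Bool, ‖x σ - x (Function.update σ j (!σ j))‖^2
      = ∑ T : Fin k → Bool, (if T j then (4:ℝ) else 0) * ‖X T‖^2 := by
    intro j
    rw [← parseval (fun σ => x σ - x (Function.update σ j (!σ j)))]
    refine Finset.sum_congr rfl fun T _ => ?_
    rw [coeff_flip, norm_smul]
    rw [mul_pow]
    have : ‖(1 - if T j then (-1:ℝ) else 1)‖^2 = (if T j then (4:ℝ) else 0) := by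
      cases h : T j <;> simp <;> norm_num
    rw [this]
  have step : (2:ℝ)^k * (4 * ∑ σ : Fin k → Bool, ‖x σ‖^2)
      ≤ ∑ j : Fin k, (2:ℝ)^k * ∑ σ : Fin k → Bool, ‖x σ - x (Function.update σ j (!σ j))‖^2 := by
    calc (2:ℝ)^k * (4 * ∑ σ : Fin k → Bool, ‖x σ‖^2)
        = 4 * ∑ T : Fin k → Bool, ‖X T‖^2 := by rw [parseval]; ring
      _ = ∑ T : Fin k → Bool, 4 * ‖X T‖^2 := by rw [Finset.mul_sum]
      _ ≤ ∑ T : Fin k → Bool, (∑ j : Fin k, if T j then (4:ℝ) else 0) * ‖X T‖^2 := by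
          refine Finset.sum_le_sum fun T _ => ?_
          by_cases hT : T = fun _ => false
          · subst hT; rw [hXbot]; simp
          · have hex : ∃ j, T j = true := by
              by_contra hcon
              push_neg at hcon
              exact hT (funext fun j => by simpa using hcon j)
            obtain ⟨j, hj⟩ := hex
            have h4 : (4:ℝ) ≤ ∑ j' : Fin k, if T j' then (4:ℝ) else 0 := by
              have := Finset.single_le_sum (f := fun j' : Fin k => if T j' then (4:ℝ) else 0)
                (fun j' _ => by positivity) (Finset.mem_univ j)
              simpa [hj] using this
            exact mul_le_mul_of_nonneg_right h4 (by positivity)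
      _ = ∑ j : Fin k, ∑ T : Fin k → Bool, (if T j then (4:ℝ) else 0) * ‖X T‖^2 := by
          rw [Finset.sum_comm]
          refine Finset.sum_congr rfl fun T _ => ?_
          rw [Finset.sum_mul]
      _ = ∑ j : Fin k, (2:ℝ)^k * ∑ σ : Fin k → Bool, ‖x σ - x (Function.update σ j (!σ j))‖^2 := by
          refine Finset.sum_congr rfl fun j _ => (key j).symm
  rw [← Finset.mul_sum] at step
  have hpos : (0:ℝ) < 2^k := by positivity
  exact le_of_mul_le_mul_left step hpos


end

end HypercubeProofAux

open HypercubeProofAux in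
/-- If the symmetry group of the regular `k`-hypercube acts by isometries on a real
Hilbert space `E`, equivariantly on a family of points `f` indexed by the vertices, then
any two points of the family corresponding to an edge (vertices differing in exactly one
coordinate) subtend, at the circumcenter of the family, an angle at least
`arccos(1 - 2/k)` — the angle of an edge at the center. -/
theorem hypercube_angle_ge
    (k : ℕ) (hk : 2 ≤ k)
    {E : Type*} [NormedAddCommGroup E] [InnerProductSpace ℝ E] [CompleteSpace E]
    (φ : symmetryGroup (hypercubeVertices k) →* (E ≃ᵢ E))
    (f : hypercubeVertices k → E)
    (hequiv : ∀ (g : symmetryGroup (hypercubeVertices k)) (v w : hypercubeVertices k),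
      (g : EuclideanSpace ℝ (Fin k) ≃ₗᵢ[ℝ] EuclideanSpace ℝ (Fin k)) (v : EuclideanSpace ℝ (Fin k)) = (w : EuclideanSpace ℝ (Fin k)) →
        f w = φ g (f v))
    (c : E)
    (hc : ∀ y : E,
      (⨆ v : hypercubeVertices k, dist c (f v)) ≤ ⨆ v : hypercubeVertices k, dist y (f v)) :
    ∀ u w : hypercubeVertices k,
      (∃ i : Fin k, (u : EuclideanSpace ℝ (Fin k)) i ≠ (w : EuclideanSpace ℝ (Fin k)) i ∧
        ∀ j : Fin k, j ≠ i → (u : EuclideanSpace ℝ (Fin k)) j = (w : EuclideanSpace ℝ (Fin k)) j) →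
      Real.arccos (1 - 2 / k) ≤ EuclideanGeometry.angle (f u) c (f w) := by
  classical
  intro u w hedge
  obtain ⟨i, hne, heq⟩ := hedge
  set r := ⨆ v : hypercubeVertices k, dist c (f v) with hrdef
  have hBdd : ∀ y : E, BddAbove (Set.range fun v : hypercubeVertices k => dist y (f v)) :=
    fun y => Set.Finite.bddAbove (Set.finite_range _)
  have hub : ∀ v : hypercubeVertices k, dist c (f v) ≤ r := fun v => le_ciSup (hBdd c) v
  have hr0 : 0 ≤ r := le_trans dist_nonneg (hub (Classical.arbitrary _))
  have hmax : ∀ (y : E) (A : ℝ), (∀ v : hypercubeVertices k, dist y (f v) ^ 2 ≤ A) →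
      r ^ 2 ≤ A := by
    intro y A hA
    obtain ⟨v0, hv0⟩ := Finite.exists_max (fun v : hypercubeVertices k => dist y (f v))
    have h1 : r ≤ dist y (f v0) := le_trans (hc y) (ciSup_le hv0)
    have h2 : r ^ 2 ≤ dist y (f v0) ^ 2 := by
      nlinarith [dist_nonneg (x := y) (y := f v0)]
    exact le_trans h2 (hA v0)
  have hface : ∀ (g : symmetryGroup (hypercubeVertices k)) (v : hypercubeVertices k),
      f (act g v) = φ g (f v) := fun g v => hequiv g v (act g v) rfl
  -- every symmetry fixes the circumcenter
  have hφc : ∀ g : symmetryGroup (hypercubeVertices k), φ g c = c := by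
    intro g
    have h1 : ∀ v : hypercubeVertices k, dist (φ g c) (f v) ≤ r := by
      intro v
      have h2 := hface g (act g⁻¹ v)
      rw [act_inv_cancel] at h2
      rw [h2, IsometryEquiv.dist_eq]
      exact hub _
    set c' := φ g c with hc'
    have hm : ∀ v : hypercubeVertices k,
        dist (midpoint ℝ c c') (f v) ^ 2 ≤ r ^ 2 - dist c c' ^ 2 / 4 := by
      intro v
      have e1 : midpoint ℝ c c' - f v = (2⁻¹ : ℝ) • ((c - f v) + (c' - f v)) := by
        rw [midpoint_eq_smul_add, invOf_eq_inv]
        module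
      have e2 := parallelogram_law_with_norm ℝ (c - f v) (c' - f v)
      have e3 : (c - f v) - (c' - f v) = c - c' := by abel
      rw [e3] at e2
      have e4 : dist (midpoint ℝ c c') (f v) = 2⁻¹ * ‖(c - f v) + (c' - f v)‖ := by
        rw [dist_eq_norm, e1, norm_smul]
        norm_num
      have hbc : ‖c - f v‖ ≤ r := by rw [← dist_eq_norm]; exact hub v
      have hbc' : ‖c' - f v‖ ≤ r := by rw [← dist_eq_norm]; exact h1 v
      have ha2 : ‖c - f v‖ ^ 2 ≤ r ^ 2 := by nlinarith [norm_nonneg (c - f v)]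
      have hb2 : ‖c' - f v‖ ^ 2 ≤ r ^ 2 := by nlinarith [norm_nonneg (c' - f v)]
      have e7 : dist c c' = ‖c - c'‖ := dist_eq_norm _ _
      rw [e4, e7]
      nlinarith [e2, ha2, hb2]
    have h8 : r ^ 2 ≤ r ^ 2 - dist c c' ^ 2 / 4 := hmax _ _ hm
    have h9 : dist c c' = 0 := by nlinarith [dist_nonneg (x := c) (y := c')]
    exact (dist_eq_zero.mp h9).symm
  have hdistc : ∀ (g : symmetryGroup (hypercubeVertices k)) (v : hypercubeVertices k),
      dist c (f (act g v)) = dist c (f v) := by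
    intro g v
    conv_lhs => rw [← hφc g]
    rw [hface, IsometryEquiv.dist_eq]
  have hdist2 : ∀ (g : symmetryGroup (hypercubeVertices k)) (v v' : hypercubeVertices k),
      dist (f (act g v)) (f (act g v')) = dist (f v) (f v') := by
    intro g v v'
    rw [hface, hface, IsometryEquiv.dist_eq]
  -- all the radii are equal
  have hrc : ∀ v : hypercubeVertices k, dist c (f v) = r := by
    have h1 : ∀ v v' : hypercubeVertices k, dist c (f v) = dist c (f v') := by
      intro v v'
      obtain ⟨σ, rfl⟩ := exists_vb v
      obtain ⟨τ, rfl⟩ := exists_vb v'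
      have h2 : act (gflip (xorB σ τ)) (vb σ) = vb τ := by
        rw [gflip_act]
        congr 1
        funext l
        show xor (xor (σ l) (τ l)) (σ l) = τ l
        cases σ l <;> cases τ l <;> rfl
      rw [← h2, hdistc]
    intro v
    exact (le_antisymm (ciSup_le fun v' => le_of_eq (h1 v' v)) (le_ciSup (hBdd c) v)).symm
  -- the configuration of vectors
  set x : (Fin k → Bool) → E := fun σ => f (vb σ) - c with hxdef
  have hxnorm : ∀ σ, ‖x σ‖ = r := by
    intro σ
    show ‖f (vb σ) - c‖ = r
    rw [← dist_eq_norm, dist_comm]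
    exact hrc _
  have hxdist : ∀ σ τ, ‖x σ - x τ‖ = dist (f (vb σ)) (f (vb τ)) := by
    intro σ τ
    show ‖(f (vb σ) - c) - (f (vb τ) - c)‖ = _
    rw [sub_sub_sub_cancel_right, ← dist_eq_norm]
  have hip : ∀ σ τ, ⟪x σ, x τ⟫ = r ^ 2 - dist (f (vb σ)) (f (vb τ)) ^ 2 / 2 := by
    intro σ τ
    have h4 := norm_sub_sq_real (x σ) (x τ)
    rw [hxdist, hxnorm, hxnorm] at h4
    linarith
  have hipinv : ∀ s σ τ, ⟪x (xorB s σ), x (xorB s τ)⟫ = ⟪x σ, x τ⟫ := by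
    intro s σ τ
    rw [hip, hip]
    have h5 : dist (f (vb (xorB s σ))) (f (vb (xorB s τ))) = dist (f (vb σ)) (f (vb τ)) := by
      rw [← gflip_act, ← gflip_act, hdist2]
    rw [h5]
  -- the barycenter coincides with the circumcenter
  set Sv : E := ∑ σ : Fin k → Bool, x σ with hSdef
  have hq : ∀ τ τ' : Fin k → Bool, ⟪Sv, x τ⟫ = ⟪Sv, x τ'⟫ := by
    intro τ τ'
    rw [hSdef, sum_inner, sum_inner]
    have h6 : ∀ σ, ⟪x σ, x τ⟫ = ⟪x (xorB (xorB τ τ') σ), x τ'⟫ := by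
      intro σ
      have h7 : xorB (xorB τ τ') τ = τ' := by
        funext l
        show xor (xor (τ l) (τ' l)) (τ l) = τ' l
        cases τ l <;> cases τ' l <;> rfl
      conv_lhs => rw [← hipinv (xorB τ τ') σ τ, h7]
    rw [Finset.sum_congr rfl fun σ _ => h6 σ]
    exact Fintype.sum_bijective _ (xorB_invol (xorB τ τ')).bijective _ _ (fun σ => rfl)
  have h2kpos : (0:ℝ) < 2 ^ k := by positivity
  have hq2 : ∀ τ, (2:ℝ) ^ k * ⟪Sv, x τ⟫ = ‖Sv‖ ^ 2 := by
    intro τ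
    have h7 : ∑ τ' : Fin k → Bool, ⟪Sv, x τ'⟫ = ‖Sv‖ ^ 2 := by
      rw [← real_inner_self_eq_norm_sq, hSdef]
      rw [← inner_sum]
    rw [← h7, Finset.sum_congr rfl fun τ' _ => hq τ' τ]
    rw [Finset.sum_const, nsmul_eq_mul, Finset.card_univ]
    congr 1
    rw [Fintype.card_fun, Fintype.card_bool, Fintype.card_fin]
    push_cast
    ring
  have hSzero : Sv = 0 := by
    set m : E := ((2:ℝ) ^ k)⁻¹ • Sv with hmdef
    have hym : ∀ v : hypercubeVertices k, dist (c + m) (f v) ^ 2 = r ^ 2 - ‖m‖ ^ 2 := by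
      intro v
      obtain ⟨τ, rfl⟩ := exists_vb v
      have h8 : dist (c + m) (f (vb τ)) = ‖m - x τ‖ := by
        rw [dist_eq_norm]
        congr 1
        show c + m - f (vb τ) = m - (f (vb τ) - c)
        abel
      have h9 := norm_sub_sq_real m (x τ)
      have h10 : ⟪m, x τ⟫ = ‖m‖ ^ 2 := by
        rw [hmdef, real_inner_smul_left]
        have h11 : ⟪Sv, x τ⟫ = ‖Sv‖ ^ 2 / 2 ^ k := by
          rw [eq_div_iff (ne_of_gt h2kpos), mul_comm]
          exact hq2 τ
        rw [h11, norm_smul, Real.norm_eq_abs, abs_of_pos (inv_pos.mpr h2kpos), div_eq_mul_inv]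
        ring
      rw [h8, h9, h10, hxnorm]
      ring
    have h12 : r ^ 2 ≤ r ^ 2 - ‖m‖ ^ 2 := hmax _ _ (fun v => le_of_eq (hym v))
    have h13 : m = 0 := by
      have h14 : ‖m‖ = 0 := by nlinarith [norm_nonneg m]
      exact norm_eq_zero.mp h14
    have h15 : Sv = (2:ℝ) ^ k • m := by
      rw [hmdef, smul_smul, mul_inv_cancel₀ (ne_of_gt h2kpos), one_smul]
    rw [h15, h13, smul_zero]
  -- the edge
  obtain ⟨σu, hσu⟩ := exists_vb u
  have hui : ∀ l, (u : EuclideanSpace ℝ (Fin k)) l = sgn (σu l) := by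
    intro l
    rw [← hσu]
    rfl
  have hw : vb (Function.update σu i (!σu i)) = w := by
    apply Subtype.ext
    ext l
    show sgn (Function.update σu i (!σu i) l) = (w : EuclideanSpace ℝ (Fin k)) l
    by_cases hl : l = i
    · subst hl
      rw [Function.update_self]
      rcases u.2 l with h2 | h2 <;> rcases w.2 l with h3 | h3
      · exact absurd (h2.trans h3.symm) hne
      · have h4 : σu l = false := by
          cases h5 : σu l
          · rfl
          · exfalso
            have h6 := hui l
            rw [h2, h5] at h6
            norm_num [sgn] at h6
        rw [h4, h3]
        norm_num [sgn]
      · have h4 : σu l = true := by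
          cases h5 : σu l
          · exfalso
            have h6 := hui l
            rw [h2, h5] at h6
            norm_num [sgn] at h6
          · rfl
        rw [h4, h3]
        norm_num [sgn]
      · exact absurd (h2.trans h3.symm) hne
    · rw [Function.update_of_ne hl, ← heq l hl, hui l]
  set d := dist (f u) (f w) with hddef
  have hedge_all : ∀ (j : Fin k) (σ : Fin k → Bool),
      dist (f (vb σ)) (f (vb (Function.update σ j (!σ j)))) = d := by
    intro j σ
    have hee : ∀ l, Equiv.swap j i (Equiv.swap j i l) = l := fun l => Equiv.swap_apply_self j i l
    have h1 : dist (f (vb σ)) (f (vb (Function.update σ j (!σ j))))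
        = dist (f (vb (σ ∘ Equiv.swap j i)))
            (f (vb (Function.update (σ ∘ Equiv.swap j i) i (!(σ ∘ Equiv.swap j i) i)))) := by
      have h2 : act (gperm (Equiv.swap j i)) (vb (σ ∘ Equiv.swap j i)) = vb σ := by
        rw [gperm_act]
        congr 1
        funext l
        show σ (Equiv.swap j i ((Equiv.swap j i).symm l)) = σ l
        rw [Equiv.apply_symm_apply]
      have h3 : act (gperm (Equiv.swap j i))
            (vb (Function.update (σ ∘ Equiv.swap j i) i (!(σ ∘ Equiv.swap j i) i)))
          = vb (Function.update σ j (!σ j)) := by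
        rw [gperm_act]
        congr 1
        funext l
        show Function.update (σ ∘ Equiv.swap j i) i (!(σ ∘ Equiv.swap j i) i)
            ((Equiv.swap j i).symm l) = Function.update σ j (!σ j) l
        rw [Equiv.symm_swap]
        by_cases hl : l = j
        · subst hl
          rw [Equiv.swap_apply_left, Function.update_self, Function.update_self]
          show (!(σ (Equiv.swap l i i))) = (!(σ l))
          rw [Equiv.swap_apply_right]
        · have hne2 : Equiv.swap j i l ≠ i := by
            intro hcon
            apply hl
            have h9 : Equiv.swap j i (Equiv.swap j i l) = Equiv.swap j i i := congrArg _ hcon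
            rw [hee, Equiv.swap_apply_right] at h9
            exact h9
          rw [Function.update_of_ne hne2, Function.update_of_ne hl]
          show σ (Equiv.swap j i (Equiv.swap j i l)) = σ l
          rw [hee]
      rw [← h2, ← h3, hdist2]
    have h4 : dist (f (vb (σ ∘ Equiv.swap j i))) (f (vb (Function.update (σ ∘ Equiv.swap j i) i (!(σ ∘ Equiv.swap j i) i))))
        = dist (f (vb σu)) (f (vb (Function.update σu i (!σu i)))) := by
      set s := xorB (σ ∘ Equiv.swap j i) σu with hsdef
      have h5 : act (gflip s) (vb (σ ∘ Equiv.swap j i)) = vb σu := by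
        rw [gflip_act]
        congr 1
        funext l
        show xor (xor ((σ ∘ Equiv.swap j i) l) (σu l)) ((σ ∘ Equiv.swap j i) l) = σu l
        cases (σ ∘ Equiv.swap j i) l <;> cases σu l <;> rfl
      have h6 : act (gflip s) (vb (Function.update (σ ∘ Equiv.swap j i) i (!(σ ∘ Equiv.swap j i) i)))
          = vb (Function.update σu i (!σu i)) := by
        rw [gflip_act]
        congr 1
        funext l
        by_cases hl : l = i
        · rw [hl]
          show xor (xor ((σ ∘ Equiv.swap j i) i) (σu i)) (Function.update (σ ∘ Equiv.swap j i) i (!(σ ∘ Equiv.swap j i) i) i)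
              = Function.update σu i (!σu i) i
          rw [Function.update_self, Function.update_self]
          cases (σ ∘ Equiv.swap j i) i <;> cases σu i <;> rfl
        · show xor (xor ((σ ∘ Equiv.swap j i) l) (σu l)) (Function.update (σ ∘ Equiv.swap j i) i (!(σ ∘ Equiv.swap j i) i) l)
              = Function.update σu i (!σu i) l
          rw [Function.update_of_ne hl, Function.update_of_ne hl]
          cases (σ ∘ Equiv.swap j i) l <;> cases σu l <;> rfl
      rw [← h5, ← h6, hdist2]
    rw [h1, h4, hσu, hw]
  -- apply the Poincaré inequality on the cube
  have hpoin := poincare x hSzero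
  have hcard : (Finset.univ : Finset (Fin k → Bool)).card = 2 ^ k := by
    rw [Finset.card_univ, Fintype.card_fun, Fintype.card_bool, Fintype.card_fin]
  have hLHS : 4 * ∑ σ : Fin k → Bool, ‖x σ‖ ^ 2 = (2:ℝ) ^ k * (4 * r ^ 2) := by
    rw [Finset.sum_congr rfl fun σ _ => by rw [hxnorm]]
    rw [Finset.sum_const, nsmul_eq_mul, hcard]
    push_cast
    ring
  have hRHS : ∑ j : Fin k, ∑ σ : Fin k → Bool, ‖x σ - x (Function.update σ j (!σ j))‖ ^ 2
      = (2:ℝ) ^ k * ((k : ℝ) * d ^ 2) := by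
    have h7 : ∀ j : Fin k, ∑ σ : Fin k → Bool, ‖x σ - x (Function.update σ j (!σ j))‖ ^ 2
        = (2:ℝ) ^ k * d ^ 2 := by
      intro j
      rw [Finset.sum_congr rfl fun σ _ => by rw [hxdist, hedge_all j σ]]
      rw [Finset.sum_const, nsmul_eq_mul, hcard]
      push_cast
      ring
    rw [Finset.sum_congr rfl fun j _ => h7 j]
    rw [Finset.sum_const, nsmul_eq_mul, Finset.card_univ, Fintype.card_fin]
    ring
  rw [hLHS, hRHS] at hpoin
  have hd2 : 4 * r ^ 2 ≤ (k : ℝ) * d ^ 2 := le_of_mul_le_mul_left hpoin h2kpos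
  -- conclude about the angle
  have hk2 : (2:ℝ) ≤ (k:ℝ) := by exact_mod_cast hk
  have hkpos : (0:ℝ) < (k:ℝ) := by linarith
  have hnu : ‖f u - c‖ = r := by rw [← dist_eq_norm, dist_comm]; exact hrc u
  have hnw : ‖f w - c‖ = r := by rw [← dist_eq_norm, dist_comm]; exact hrc w
  have hmono : ∀ a b : ℝ, a ≤ b → Real.arccos b ≤ Real.arccos a := by
    intro a b hab
    rw [Real.arccos_eq_pi_div_two_sub_arcsin, Real.arccos_eq_pi_div_two_sub_arcsin]
    exact sub_le_sub_left (Real.monotone_arcsin hab) _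
  have hang : EuclideanGeometry.angle (f u) c (f w)
      = Real.arccos (⟪f u - c, f w - c⟫ / (r * r)) := by
    unfold EuclideanGeometry.angle InnerProductGeometry.angle
    rw [vsub_eq_sub, vsub_eq_sub, hnu, hnw]
  rw [hang]
  apply hmono
  have hfrac : (0:ℝ) ≤ 1 - 2 / (k:ℝ) := by
    rw [sub_nonneg, div_le_one hkpos]
    exact hk2
  rcases eq_or_lt_of_le hr0 with h0 | hpos
  · have h1 : f u - c = 0 := by
      rw [← norm_eq_zero, hnu, ← h0]
    rw [h1, inner_zero_left, zero_div]
    exact hfrac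
  · have hip2 : ⟪f u - c, f w - c⟫ = r ^ 2 - d ^ 2 / 2 := by
      have h4 := norm_sub_sq_real (f u - c) (f w - c)
      have h5 : (f u - c) - (f w - c) = f u - f w := by abel
      rw [h5, ← dist_eq_norm, ← hddef, hnu, hnw] at h4
      linarith
    rw [hip2, div_le_iff₀ (by positivity)]
    have h6 : 2 * r ^ 2 / (k:ℝ) ≤ d ^ 2 / 2 := by
      rw [div_le_div_iff₀ hkpos two_pos]
      linarith [hd2]
    have h7 : (1 - 2 / (k:ℝ)) * (r * r) = r ^ 2 - 2 * r ^ 2 / (k:ℝ) := by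
      field_simp
    rw [h7]
    linarith [h6]
end
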